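/- arXiv:1703.01772 — 9 statements merged into one kernel-verified Lean document; each statement's English description precedes it below -/
import Mathlib

section
/- For every real ε > 1/(4√(ab)) there exists B₀ ≥ 1 such that for all B ≥ B₀, N(ε,0,B) ≤ 6·Σ_{m ∈ ℤ, 1 ≤ |m| ≤ 2ε√(ab)+1} τ(A′·|m|)·(⌊(log ε + log(4√(ab)))/(2·log ε*_D)⌋ + 1), where τ is the number-of-divisors function. -/
set_option maxHeartbeats 1000000

lemma aux_sq (a b p q : ℕ) (hq : 0 < q) (h : a * p ^ 2 = b * q ^ 2) :
    IsSquare (a * b) := by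
  have h2 : (a * p) ^ 2 = (a * b) * q ^ 2 := by ring_nf; nlinarith [h]
  have hdvd : q ∣ a * p := by
    have : q ^ 2 ∣ (a * p) ^ 2 := ⟨a * b, by linarith [h2]⟩
    exact (Nat.pow_dvd_pow_iff (by norm_num)).mp this
  obtain ⟨r, hr⟩ := hdvd
  have : r ^ 2 * q ^ 2 = (a * b) * q ^ 2 := by rw [hr] at h2; nlinarith [h2]
  have h3 : r ^ 2 = a * b := Nat.eq_of_mul_eq_mul_right (pow_pos hq 2) this
  exact ⟨r, by rw [← h3]; ring⟩

-- gap lemma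
lemma aux_gap (a b : ℕ) (ha : 0 < a) (hab : a < b) (hnsq : ¬ IsSquare (a * b))
    (θ ε B : ℝ) (hθ1 : 1 < θ) (hθsq : (a:ℝ) * θ^2 = b)
    (hε : 0 < ε) (hB : 0 < B) (hsmall : 2 * (ε/B) < 1)
    (u₁ v₁ u₂ v₂ : ℕ) (hv : v₁ < v₂)
    (d₁ : |(u₁:ℝ) - θ * v₁| ≤ ε/B) (d₂ : |(u₂:ℝ) - θ * v₂| ≤ ε/B) :
    B / (6 * ε * ((a:ℝ) * θ)) ≤ (v₂:ℝ) - v₁ := by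
  have ha0 : (0:ℝ) < a := by exact_mod_cast ha
  have hq1 : (1:ℝ) ≤ (v₂:ℝ) - v₁ := by
    have : (v₁:ℝ) + 1 ≤ v₂ := by exact_mod_cast hv
    linarith
  have hd1 := abs_le.mp d₁
  have hd2 := abs_le.mp d₂
  -- u₂ > u₁
  have hu : u₁ < u₂ := by
    have : (u₁:ℝ) < u₂ := by nlinarith [hd1.1, hd1.2, hd2.1, hd2.2]
    exact_mod_cast this
  set q : ℕ := v₂ - v₁ with hqdef
  set p : ℕ := u₂ - u₁ with hpdef
  have hqc : (q:ℝ) = (v₂:ℝ) - v₁ := by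
    rw [hqdef]; push_cast [Nat.cast_sub hv.le]; ring
  have hpc : (p:ℝ) = (u₂:ℝ) - u₁ := by
    rw [hpdef]; push_cast [Nat.cast_sub hu.le]; ring
  have hq0 : 0 < q := by omega
  have hpq : |(p:ℝ) - θ * q| ≤ 2 * (ε/B) := by
    rw [hpc, hqc, abs_le]
    constructor <;> nlinarith [hd1.1, hd1.2, hd2.1, hd2.2]
  have hne : a * p ^ 2 ≠ b * q ^ 2 := fun h => hnsq (aux_sq a b p q hq0 h)
  have habs : (1:ℝ) ≤ |(a:ℝ) * p^2 - b * q^2| := by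
    have : ((a * p ^ 2 : ℕ) : ℤ) ≠ ((b * q ^ 2 : ℕ) : ℤ) := by exact_mod_cast hne
    have h1 : (1:ℤ) ≤ |(a * p ^ 2 : ℤ) - (b * q ^ 2 : ℤ)| := by
      have hz : ((a:ℤ) * p ^ 2 - (b:ℤ) * q ^ 2) ≠ 0 := by
        intro hc; apply this; push_cast; linarith
      exact Int.one_le_abs hz
    calc (1:ℝ) = ((1:ℤ):ℝ) := by norm_num
    _ ≤ |((a:ℤ) * p ^ 2 - (b:ℤ) * q ^ 2 : ℤ)| := by exact_mod_cast h1
    _ = |(a:ℝ) * p^2 - b * q^2| := by push_cast; norm_num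
  have hid : (a:ℝ) * p^2 - b * q^2 = ((a:ℝ) * ((p:ℝ) + θ * q)) * ((p:ℝ) - θ * q) := by
    linear_combination (q:ℝ)^2 * hθsq
  have hqpos : (0:ℝ) < q := by exact_mod_cast hq0
  have hppos : (0:ℝ) < p := by exact_mod_cast (by omega : 0 < p)
  -- p ≤ 2θq, so p + θq ≤ 3θq
  have hple : (p:ℝ) + θ * q ≤ 3 * θ * q := by
    have := (abs_le.mp hpq).2
    nlinarith
  have key : 1 ≤ (a:ℝ) * (3 * θ * q) * (2 * (ε/B)) := by
    have h2 : |(a:ℝ) * p^2 - b * q^2| = ((a:ℝ) * ((p:ℝ) + θ * q)) * |(p:ℝ) - θ * q| := by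
      rw [hid, abs_mul, abs_of_pos (by positivity : (0:ℝ) < (a:ℝ) * ((p:ℝ) + θ * q))]
    have h3 : 1 ≤ ((a:ℝ) * ((p:ℝ) + θ * q)) * |(p:ℝ) - θ * q| := by rw [← h2]; exact habs
    have h4 : ((a:ℝ) * ((p:ℝ) + θ * q)) * |(p:ℝ) - θ * q| ≤
        ((a:ℝ) * (3 * θ * q)) * (2 * (ε/B)) := by
      apply mul_le_mul (by nlinarith) hpq (abs_nonneg _) (by positivity)
    nlinarith
  have hre : (a:ℝ) * (3 * θ * q) * (2 * (ε/B)) = ((a:ℝ) * (3 * θ * q) * (2 * ε)) / B := by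
    ring
  rw [hre] at key
  have key2 : B ≤ (a:ℝ) * (3 * θ * q) * (2 * ε) := (one_le_div hB).mp key
  have hring : (a:ℝ) * (3 * θ * q) * (2 * ε) = (q:ℝ) * (6 * ε * ((a:ℝ) * θ)) := by ring
  rw [div_le_iff₀ (by positivity), ← hqc]
  linarith [key2]

/-- `quadCount θ ε η B` is the number of pairs `(u,v)` of coprime positive integers with
`max u v ≤ B` and `η·B⁻² < |u/v − θ| ≤ ε·B⁻²`. -/
noncomputable def quadCount (θ ε η B : ℝ) : ℕ :=
  Set.ncard {p : ℕ × ℕ | 0 < p.1 ∧ 0 < p.2 ∧ Nat.Coprime p.1 p.2 ∧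
    ((max p.1 p.2 : ℕ) : ℝ) ≤ B ∧
    η / B ^ 2 < |(p.1 : ℝ) / p.2 - θ| ∧ |(p.1 : ℝ) / p.2 - θ| ≤ ε / B ^ 2}

/-- Effective bound for the critical zoom at the quadratic irrational `θ = √(b/a)`:
for every `ε > 1/(4√(ab))` and all large enough `B`,
`N(ε,0,B) ≤ 6·Σ_{1 ≤ |m| ≤ 2ε√(ab)+1} τ(A′·|m|)·(⌊(log ε + log(4√(ab)))/(2 log ε*_D)⌋ + 1)`. -/
theorem stmt_1 (a b : ℕ) (ha : 0 < a) (hab : a < b) (hcop : Nat.Coprime a b)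
    (hnsq : ¬ IsSquare (a * b)) (θ : ℝ) (hθ : θ = Real.sqrt ((b : ℝ) / a))
    (A' a' B' b' : ℕ) (hA' : Squarefree A') (hB' : Squarefree B')
    (hafac : a = A' * a' ^ 2) (hbfac : b = B' * b' ^ 2)
    (εD : ℝ)
    (hεD : IsLeast {z : ℝ | ∃ x y : ℕ, 0 < x ∧ 0 < y ∧
      (x : ℤ) ^ 2 - (A' * B' : ℤ) * (y : ℤ) ^ 2 = 1 ∧
      z = (x : ℝ) + (y : ℝ) * Real.sqrt ((A' : ℝ) * B')} εD)
    (ε : ℝ) (hε : ε > 1 / (4 * Real.sqrt ((a : ℝ) * b))) :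
    ∃ B₀ : ℝ, B₀ ≥ 1 ∧ ∀ B : ℝ, B ≥ B₀ →
      (quadCount θ ε 0 B : ℝ) ≤
        6 * ∑ m ∈ (Finset.Icc (-⌊2 * ε * Real.sqrt ((a : ℝ) * b) + 1⌋)
            ⌊2 * ε * Real.sqrt ((a : ℝ) * b) + 1⌋).erase 0,
          ((A' * m.natAbs).divisors.card : ℝ) *
            ((⌊(Real.log ε + Real.log (4 * Real.sqrt ((a : ℝ) * b))) /
                (2 * Real.log εD)⌋ : ℝ) + 1) := by
  set S := Real.sqrt ((a : ℝ) * b) with hSdef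
  have ha0 : (0:ℝ) < a := by exact_mod_cast ha
  have hb0 : (0:ℝ) < b := by exact_mod_cast (lt_trans ha hab)
  have hS : 0 < S := Real.sqrt_pos.mpr (by positivity)
  have hε0 : 0 < ε := lt_trans (by positivity) hε
  have hεS : 1 / 4 < ε * S := by
    have h := hε
    rw [gt_iff_lt, div_lt_iff₀ (show (0:ℝ) < 4 * S by positivity)] at h
    nlinarith
  -- θ facts
  have hba : (1:ℝ) < (b:ℝ)/a := (one_lt_div ha0).mpr (by exact_mod_cast hab)
  have hθ1 : 1 < θ := by
    rw [hθ, Real.lt_sqrt (by norm_num)]; nlinarith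
  have hθsqhalf : θ^2 = (b:ℝ)/a := by rw [hθ]; exact Real.sq_sqrt (by positivity)
  have hθsq : (a:ℝ) * θ^2 = b := by rw [hθsqhalf]; field_simp
  have haθ : (a:ℝ) * θ = S := by
    rw [hθ, hSdef, ← Real.sqrt_sq ha0.le, ← Real.sqrt_mul (by positivity)]
    congr 1; field_simp; rw [Real.sq_sqrt (by positivity)]
  -- εD ≥ 2
  have hεD2 : 2 ≤ εD := by
    obtain ⟨⟨x, y, hx, hy, _, hz⟩, _⟩ := hεD
    have hA'pos : 0 < A' := by
      rcases Nat.eq_zero_or_pos A' with h | h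
      · subst h; simp at hafac; omega
      · exact h
    have hB'pos : 0 < B' := by
      rcases Nat.eq_zero_or_pos B' with h | h
      · subst h; simp at hbfac; omega
      · exact h
    have h1 : (1:ℝ) ≤ Real.sqrt ((A' : ℝ) * B') := by
      rw [show (1:ℝ) = Real.sqrt 1 by simp]
      apply Real.sqrt_le_sqrt
      have : (1:ℝ) ≤ (A':ℝ) := by exact_mod_cast hA'pos
      have : (1:ℝ) ≤ (B':ℝ) := by exact_mod_cast hB'pos
      nlinarith
    have hx1 : (1:ℝ) ≤ (x:ℝ) := by exact_mod_cast hx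
    have hy1 : (1:ℝ) ≤ (y:ℝ) := by exact_mod_cast hy
    rw [hz]; nlinarith
  have hlogεD : 0 < Real.log εD := Real.log_pos (by linarith)
  have hA'pos : 0 < A' := by
    rcases Nat.eq_zero_or_pos A' with h | h
    · subst h; simp at hafac; omega
    · exact h
  -- choose B₀
  refine ⟨4 * ε + 1, by linarith, ?_⟩
  intro B hB
  have hB0 : (0:ℝ) < B := by linarith
  have hB1 : (1:ℝ) ≤ B := by linarith
  have hsmall : 2 * (ε / B) < 1 := by
    have : ε / B < 1/4 := by rw [div_lt_iff₀ hB0]; nlinarith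
    linarith
  rw [quadCount]
  set T := {p : ℕ × ℕ | 0 < p.1 ∧ 0 < p.2 ∧ Nat.Coprime p.1 p.2 ∧
    ((max p.1 p.2 : ℕ) : ℝ) ≤ B ∧
    (0:ℝ) / B ^ 2 < |(p.1 : ℝ) / p.2 - θ| ∧ |(p.1 : ℝ) / p.2 - θ| ≤ ε / B ^ 2} with hTdef
  -- basic facts about members
  have hmem : ∀ p : ℕ × ℕ, p ∈ T → 0 < p.2 ∧ (p.2:ℝ) ≤ B ∧ |(p.1:ℝ) - θ * p.2| ≤ ε / B := by
    rintro ⟨u, v⟩ ⟨hu, hv, -, hmax, -, happ⟩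
    simp only at hu hv hmax happ ⊢
    have hv0 : (0:ℝ) < v := by exact_mod_cast hv
    have hvB : (v:ℝ) ≤ B := by
      refine le_trans ?_ hmax
      exact_mod_cast Nat.cast_le.mpr (le_max_right u v)
    refine ⟨hv, hvB, ?_⟩
    have heq : (u:ℝ) - θ * v = ((u:ℝ)/v - θ) * v := by field_simp
    rw [heq, abs_mul, abs_of_pos hv0]
    calc |(u:ℝ)/v - θ| * v ≤ (ε / B^2) * B := by
          apply mul_le_mul happ hvB hv0.le (by positivity)
      _ = ε / B := by field_simp
  set g := B / (6 * ε * S) with hgdef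
  have hg : 0 < g := by positivity
  have hBg : B / g = 6 * ε * S := by
    rw [hgdef, div_div_eq_mul_div, mul_comm, mul_div_assoc, div_self hB0.ne', mul_one]
  -- the gap fact
  have hgap : ∀ p ∈ T, ∀ p' ∈ T, p.2 < p'.2 → g ≤ (p'.2 : ℝ) - p.2 := by
    intro p hp p' hp' hlt
    obtain ⟨_, _, hd⟩ := hmem p hp
    obtain ⟨_, _, hd'⟩ := hmem p' hp'
    have := aux_gap a b ha hab hnsq θ ε B hθ1 hθsq hε0 hB0 hsmall
      p.1 p.2 p'.1 p'.2 hlt hd hd'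
    rwa [haθ, ← hgdef] at this
  -- injectivity
  set f : ℕ × ℕ → ℕ := fun p => ⌊(p.2:ℝ) / g⌋₊ with hfdef
  have hinj : Set.InjOn f T := by
    intro p hp p' hp' hfeq
    have hfloor : ∀ r ∈ T, ∀ r' ∈ T, r.2 < r'.2 → f r = f r' → False := by
      intro r hr r' hr' hlt hfe
      have h1 : ((f r : ℕ) : ℝ) ≤ (r.2:ℝ)/g := Nat.floor_le (by positivity)
      have h2 : ((r'.2):ℝ)/g < (f r' : ℕ) + 1 := Nat.lt_floor_add_one _
      rw [← hfe] at h2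
      have h3 : ((r'.2):ℝ)/g - (r.2:ℝ)/g < 1 := by linarith
      rw [← sub_div] at h3
      have h4 : ((r'.2):ℝ) - r.2 < g := (div_lt_one hg).mp h3
      have h5 := hgap r hr r' hr' hlt
      linarith
    rcases Nat.lt_trichotomy p.2 p'.2 with h | h | h
    · exact absurd hfeq (fun hfe => hfloor p hp p' hp' h hfe)
    · -- same v: same u
      obtain ⟨_, _, hd⟩ := hmem p hp
      obtain ⟨_, _, hd'⟩ := hmem p' hp'
      have habs1 := abs_le.mp hd
      have habs2 := abs_le.mp hd'
      have hveq : (p.2 : ℝ) = p'.2 := by exact_mod_cast h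
      have hlt1 : (p.1:ℝ) < p'.1 + 1 := by nlinarith [habs1.1, habs1.2, habs2.1, habs2.2]
      have hlt2 : (p'.1:ℝ) < p.1 + 1 := by nlinarith [habs1.1, habs1.2, habs2.1, habs2.2]
      have : p.1 = p'.1 := by
        have l1 : p.1 < p'.1 + 1 := by exact_mod_cast hlt1
        have l2 : p'.1 < p.1 + 1 := by exact_mod_cast hlt2
        omega
      exact Prod.ext this h
    · exact absurd hfeq (fun hfe => hfloor p' hp' p hp h hfe.symm)
  -- image bound
  have himg : ∀ p ∈ T, f p ≤ ⌊6 * ε * S⌋₊ := by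
    intro p hp
    obtain ⟨-, hvB, -⟩ := hmem p hp
    have hdiv : (p.2:ℝ)/g ≤ B/g := by gcongr
    rw [hBg] at hdiv
    calc f p = ⌊(p.2:ℝ)/g⌋₊ := rfl
      _ ≤ ⌊6 * ε * S⌋₊ := Nat.floor_le_floor hdiv
  -- finiteness and cardinality
  have hTfin : T.Finite := by
    apply Set.Finite.of_finite_image ?_ hinj
    apply Set.Finite.subset (Set.finite_Iic ⌊6 * ε * S⌋₊)
    rintro x ⟨p, hp, rfl⟩
    exact himg p hp
  have hcount : T.ncard ≤ ⌊6 * ε * S⌋₊ + 1 := by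
    calc T.ncard = (f '' T).ncard := (Set.ncard_image_of_injOn hinj).symm
      _ ≤ (Set.Iic ⌊6 * ε * S⌋₊).ncard := by
          apply Set.ncard_le_ncard ?_ (Set.finite_Iic _)
          rintro x ⟨p, hp, rfl⟩
          exact himg p hp
      _ = ⌊6 * ε * S⌋₊ + 1 := by
          rw [← Finset.coe_Iic, Set.ncard_coe_finset, Nat.card_Iic]
  have hLHS : (T.ncard : ℝ) ≤ 6 * ε * S + 1 := by
    have h1 : ((⌊6 * ε * S⌋₊ : ℕ) : ℝ) ≤ 6 * ε * S := Nat.floor_le (by positivity)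
    have h2 : (T.ncard : ℝ) ≤ ((⌊6 * ε * S⌋₊ + 1 : ℕ) : ℝ) := by exact_mod_cast hcount
    push_cast at h2
    linarith
  -- RHS lower bound
  set M := ⌊2 * ε * S + 1⌋ with hMdef
  have hM : 2 * ε * S < (M:ℝ) := by
    have := Int.sub_one_lt_floor (2 * ε * S + 1)
    rw [← hMdef] at this
    linarith
  have hM0 : 0 ≤ M := Int.floor_nonneg.mpr (by positivity)
  set E := (Finset.Icc (-M) M).erase 0 with hEdef
  have h0mem : (0:ℤ) ∈ Finset.Icc (-M) M := by simp [Finset.mem_Icc]; omega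
  have hEcard : (E.card : ℤ) = 2 * M := by
    rw [hEdef, Finset.card_erase_of_mem h0mem, Int.card_Icc]
    omega
  set L := (Real.log ε + Real.log (4 * S)) / (2 * Real.log εD) with hLdef
  have hLnn : 0 ≤ L := by
    rw [hLdef]
    apply div_nonneg ?_ (by linarith)
    rw [← Real.log_mul hε0.ne' (by positivity)]
    apply Real.log_nonneg
    nlinarith
  have hterm : ∀ m ∈ E, (1:ℝ) ≤ ((A' * m.natAbs).divisors.card : ℝ) * ((⌊L⌋ : ℝ) + 1) := by
    intro m hm
    have hm0 : m ≠ 0 := Finset.ne_of_mem_erase hm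
    have hne : A' * m.natAbs ≠ 0 := by
      have : m.natAbs ≠ 0 := Int.natAbs_ne_zero.mpr hm0
      positivity
    have h1 : 1 ≤ (A' * m.natAbs).divisors.card :=
      Finset.card_pos.mpr ⟨1, Nat.one_mem_divisors.mpr hne⟩
    have h1' : (1:ℝ) ≤ ((A' * m.natAbs).divisors.card : ℝ) := by exact_mod_cast h1
    have h2 : (0:ℤ) ≤ ⌊L⌋ := Int.floor_nonneg.mpr hLnn
    have h2' : (1:ℝ) ≤ (⌊L⌋ : ℝ) + 1 := by
      have : (0:ℝ) ≤ (⌊L⌋ : ℝ) := by exact_mod_cast h2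
      linarith
    nlinarith
  have hsum : (E.card : ℝ) ≤ ∑ m ∈ E, ((A' * m.natAbs).divisors.card : ℝ) * ((⌊L⌋ : ℝ) + 1) := by
    calc (E.card : ℝ) = ∑ _m ∈ E, (1:ℝ) := by simp
      _ ≤ _ := Finset.sum_le_sum hterm
  have hEcardR : (E.card : ℝ) = 2 * (M : ℝ) := by exact_mod_cast hEcard
  calc (T.ncard : ℝ) ≤ 6 * ε * S + 1 := hLHS
    _ ≤ 6 * (2 * (M:ℝ)) := by nlinarith
    _ = 6 * (E.card : ℝ) := by rw [hEcardR]
    _ ≤ 6 * ∑ m ∈ E, ((A' * m.natAbs).divisors.card : ℝ) * ((⌊L⌋ : ℝ) + 1) := by linarith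
end

section
/- For every C > 0 and δ > 0 there exist reals ε > η > C with ε − η < δ such that: (i) there is a sequence of reals B_n → ∞ with N(ε,η,B_n) = 0 for all n; (ii) there is a sequence of reals B′_n → ∞ with N(ε,η,B′_n) ≥ 1 for all n; and (iii) sup_{B ≥ 1} N(ε,η,B) < ∞. In particular 0 = liminf_{B→∞} N(ε,η,B) < limsup_{B→∞} N(ε,η,B) < ∞, so no limit measure exists for the critical zoom at θ. -/
lemma coprime_pair_eq {u v u' v' : ℕ} (hv : 0 < v) (hv' : 0 < v')
    (hc : Nat.Coprime u v) (hc' : Nat.Coprime u' v')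
    (h : (u : ℝ) / v = (u' : ℝ) / v') : u = u' ∧ v = v' := by
  have hv0 : (v : ℝ) ≠ 0 := by positivity
  have hv0' : (v' : ℝ) ≠ 0 := by positivity
  have hcross : (u : ℝ) * v' = u' * v := by
    field_simp at h; linarith [h]
  have hN : u * v' = u' * v := by exact_mod_cast hcross
  have h1 : v ∣ v' := by
    have : v ∣ u * v' := ⟨u', by linarith [hN]⟩
    exact (Nat.Coprime.dvd_of_dvd_mul_left hc.symm this)
  have h2 : v' ∣ v := by
    have : v' ∣ u' * v := ⟨u, by linarith [hN]⟩
    exact (Nat.Coprime.dvd_of_dvd_mul_left hc'.symm this)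
  have hvv : v = v' := Nat.dvd_antisymm h1 h2
  refine ⟨?_, hvv⟩
  subst hvv
  exact Nat.eq_of_mul_eq_mul_right hv hN

lemma pow_one_add_le {x : ℝ} (hx : 0 ≤ x) :
    ∀ n : ℕ, 2 * n * x ≤ 1 → (1 + x) ^ n ≤ 1 + 2 * n * x := by
  intro n
  induction n with
  | zero => simp
  | succ n ih =>
    intro h
    have hcast : ((n : ℝ) + 1) = ((n + 1 : ℕ) : ℝ) := by push_cast; ring
    have hn : 2 * (n : ℝ) * x ≤ 1 := by
      rw [← hcast] at h; nlinarith [Nat.cast_nonneg (α := ℝ) n]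
    have h1 := ih hn
    have hpow : (0:ℝ) ≤ (1 + x) ^ n := by positivity
    have hstep : (1 + x) ^ (n + 1) = (1 + x) ^ n * (1 + x) := by ring
    rw [hstep, ← hcast] at *
    nlinarith [Nat.cast_nonneg (α := ℝ) n]

/-- Counting lemma: reduced fractions with bounded denominator in a short interval. -/
lemma counting_lemma (θ R V : ℝ) (hR : 0 ≤ R) (hV : 0 < V) :
    ({p : ℕ × ℕ | 0 < p.1 ∧ 0 < p.2 ∧ Nat.Coprime p.1 p.2 ∧ ((p.2 : ℕ) : ℝ) ≤ V ∧
      |(p.1 : ℝ) / p.2 - θ| ≤ R}).Finite ∧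
    ({p : ℕ × ℕ | 0 < p.1 ∧ 0 < p.2 ∧ Nat.Coprime p.1 p.2 ∧ ((p.2 : ℕ) : ℝ) ≤ V ∧
      |(p.1 : ℝ) / p.2 - θ| ≤ R}).ncard ≤ Nat.floor (4 * R * V ^ 2) + 1 := by
  set S : Set (ℕ × ℕ) := {p : ℕ × ℕ | 0 < p.1 ∧ 0 < p.2 ∧ Nat.Coprime p.1 p.2 ∧
      ((p.2 : ℕ) : ℝ) ≤ V ∧ |(p.1 : ℝ) / p.2 - θ| ≤ R} with hS
  set m : ℝ := 2 * V ^ 2 with hm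
  have hm0 : 0 < m := by positivity
  set f : ℕ × ℕ → ℕ := fun p => Nat.floor (((p.1 : ℝ) / p.2 - θ + R) * m) with hf
  have harg : ∀ p ∈ S, 0 ≤ ((p.1 : ℝ) / p.2 - θ + R) ∧ ((p.1 : ℝ) / p.2 - θ + R) ≤ 2 * R := by
    intro p hp
    obtain ⟨-, -, -, -, habs⟩ := hp
    rw [abs_le] at habs
    constructor <;> linarith [habs.1, habs.2]
  have hmaps : ∀ p ∈ S, f p ∈ Set.Iic (Nat.floor (4 * R * V ^ 2)) := by
    intro p hp
    obtain ⟨h0, h2R⟩ := harg p hp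
    have : ((p.1 : ℝ) / p.2 - θ + R) * m ≤ 4 * R * V ^ 2 := by
      rw [hm]; nlinarith
    exact Nat.floor_le_floor this
  have hinj : Set.InjOn f S := by
    intro p hp q hq hfeq
    obtain ⟨hp1, hp2, hpc, hpV, hpR⟩ := hp
    obtain ⟨hq1, hq2, hqc, hqV, hqR⟩ := hq
    have hp2R : (0:ℝ) < (p.2 : ℝ) := by exact_mod_cast hp2
    have hq2R : (0:ℝ) < (q.2 : ℝ) := by exact_mod_cast hq2
    -- floors equal implies values within 1
    have hlt1 : |((p.1 : ℝ) / p.2 - θ + R) * m - ((q.1 : ℝ) / q.2 - θ + R) * m| < 1 := by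
      have hxp : (0:ℝ) ≤ ((p.1 : ℝ) / p.2 - θ + R) * m :=
        mul_nonneg (harg p ⟨hp1, hp2, hpc, hpV, hpR⟩).1 hm0.le
      have hxq : (0:ℝ) ≤ ((q.1 : ℝ) / q.2 - θ + R) * m :=
        mul_nonneg (harg q ⟨hq1, hq2, hqc, hqV, hqR⟩).1 hm0.le
      have h1 := Nat.floor_le hxp
      have h2 := Nat.lt_floor_add_one (((q.1 : ℝ) / q.2 - θ + R) * m)
      have h3 := Nat.floor_le hxq
      have h4 := Nat.lt_floor_add_one (((p.1 : ℝ) / p.2 - θ + R) * m)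
      rw [hf] at hfeq
      simp only at hfeq
      rw [abs_lt]
      rw [hfeq] at h1 h4
      constructor <;> linarith
    have hdiff : |(p.1 : ℝ) / p.2 - (q.1 : ℝ) / q.2| < 1 / m := by
      rw [lt_div_iff₀ hm0]
      calc |(p.1 : ℝ) / p.2 - (q.1 : ℝ) / q.2| * m
          = |((p.1 : ℝ) / p.2 - θ + R) * m - ((q.1 : ℝ) / q.2 - θ + R) * m| := by
            rw [← sub_mul, abs_mul, abs_of_pos hm0]; ring_nf
        _ < 1 := hlt1
    by_cases hxy : (p.1 : ℝ) / p.2 = (q.1 : ℝ) / q.2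
    · obtain ⟨e1, e2⟩ := coprime_pair_eq hp2 hq2 hpc hqc hxy
      exact Prod.ext e1 e2
    · exfalso
      have hne : (p.1 : ℤ) * q.2 ≠ (q.1 : ℤ) * p.2 := by
        intro hcon
        apply hxy
        have : (p.1 : ℝ) * q.2 = (q.1 : ℝ) * p.2 := by exact_mod_cast hcon
        field_simp
        linarith
      have hge1 : (1 : ℝ) ≤ |(p.1 : ℝ) * q.2 - (q.1 : ℝ) * p.2| := by
        have h1 : (1 : ℤ) ≤ |(p.1 : ℤ) * q.2 - (q.1 : ℤ) * p.2| :=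
          Int.one_le_abs (sub_ne_zero.mpr hne)
        exact_mod_cast h1
      have heqd : |(p.1 : ℝ) / p.2 - (q.1 : ℝ) / q.2|
          = |(p.1 : ℝ) * q.2 - (q.1 : ℝ) * p.2| / ((p.2 : ℝ) * q.2) := by
        rw [div_sub_div _ _ (ne_of_gt hp2R) (ne_of_gt hq2R), abs_div,
          abs_of_pos (mul_pos hp2R hq2R)]
        ring_nf
      have hVV : (p.2 : ℝ) * q.2 ≤ V ^ 2 := by nlinarith
      have hlow : 1 / (V ^ 2) ≤ |(p.1 : ℝ) / p.2 - (q.1 : ℝ) / q.2| := by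
        rw [heqd]
        calc (1:ℝ) / V ^ 2 ≤ 1 / ((p.2 : ℝ) * q.2) := by
              apply one_div_le_one_div_of_le (mul_pos hp2R hq2R) hVV
          _ ≤ |(p.1 : ℝ) * q.2 - (q.1 : ℝ) * p.2| / ((p.2 : ℝ) * q.2) :=
              (div_le_div_iff_of_pos_right (mul_pos hp2R hq2R)).mpr hge1
      have : (1:ℝ) / V ^ 2 < 1 / V ^ 2 := by
        calc (1:ℝ) / V ^ 2 ≤ _ := hlow
          _ < 1 / m := hdiff
          _ < 1 / V ^ 2 := by
              apply one_div_lt_one_div_of_lt (by positivity)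
              rw [hm]; nlinarith
      exact lt_irrefl _ this
  have himg : f '' S ⊆ Set.Iic (Nat.floor (4 * R * V ^ 2)) := Set.image_subset_iff.mpr hmaps
  have hfin : S.Finite :=
    Set.Finite.of_finite_image ((Set.finite_Iic _).subset himg) hinj
  refine ⟨hfin, ?_⟩
  calc S.ncard ≤ (Set.Iic (Nat.floor (4 * R * V ^ 2))).ncard :=
        Set.ncard_le_ncard_of_injOn f hmaps hinj (Set.finite_Iic _)
    _ = Nat.floor (4 * R * V ^ 2) + 1 := by
        rw [show Set.Iic (Nat.floor (4 * R * V ^ 2)) = ↑(Finset.Iic (Nat.floor (4 * R * V ^ 2))) by simp,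
          Set.ncard_coe_finset, Nat.card_Iic]

set_option maxHeartbeats 1000000 in
/-- Non-existence of a limit measure for the critical zoom at `θ = √(b/a)`:
for every `C > 0` and `δ > 0` there are `ε > η > C` with `ε − η < δ` such that along one
sequence of bounds `B_n → ∞` the count `N(ε,η,B_n)` vanishes, along another it is `≥ 1`,
and it is uniformly bounded over all `B ≥ 1`. -/
theorem stmt_2 (a b : ℕ) (ha : 0 < a) (hab : a < b) (hcop : Nat.Coprime a b)
    (hnsq : ¬ IsSquare (a * b)) (θ : ℝ) (hθ : θ = Real.sqrt ((b : ℝ) / a)) :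
    ∀ C > (0 : ℝ), ∀ δ > (0 : ℝ), ∃ ε η : ℝ, C < η ∧ η < ε ∧ ε - η < δ ∧
      (∃ B : ℕ → ℝ, Filter.Tendsto B Filter.atTop Filter.atTop ∧
        ∀ n, quadCount θ ε η (B n) = 0) ∧
      (∃ B' : ℕ → ℝ, Filter.Tendsto B' Filter.atTop Filter.atTop ∧
        ∀ n, 1 ≤ quadCount θ ε η (B' n)) ∧
      (∃ M : ℕ, ∀ B : ℝ, 1 ≤ B → quadCount θ ε η B ≤ M) := by
  intro C hC δ hδ
  have haR : (0:ℝ) < a := by exact_mod_cast ha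
  have hbR : (0:ℝ) < b := by exact_mod_cast ha.trans hab
  have hba : (1:ℝ) < (b:ℝ)/a := by
    rw [lt_div_iff₀ haR, one_mul]; exact_mod_cast hab
  have hθ1 : 1 < θ := by
    rw [hθ, Real.lt_sqrt zero_le_one, one_pow]; exact hba
  have hθ0 : 0 < θ := lt_trans one_pos hθ1
  -- irrationality of θ
  have hirr : Irrational θ := by
    have hsqab : Irrational (Real.sqrt ((a*b : ℕ) : ℝ)) :=
      irrational_sqrt_natCast_iff.mpr hnsq
    have hfac : θ = Real.sqrt ((a*b : ℕ) : ℝ) / (a : ℕ) := by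
      rw [hθ]
      rw [eq_div_iff (ne_of_gt haR)]
      rw [show ((a*b : ℕ) : ℝ) = ((b:ℝ)/a) * (a:ℝ)^2 by push_cast; field_simp]
      rw [Real.sqrt_mul (by positivity) ((a:ℝ)^2), Real.sqrt_sq haR.le]
    rw [hfac]
    exact hsqab.div_natCast (Nat.pos_iff_ne_zero.mp ha)
  -- parameters
  obtain ⟨η, hηdef⟩ : ∃ η : ℝ, η = max C ((θ+1)^2) + 1 := ⟨_, rfl⟩
  have hCη : C < η := by
    rw [hηdef]; linarith [le_max_left C ((θ+1)^2)]
  have hθη : (θ+1)^2 < η := by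
    rw [hηdef]; linarith [le_max_right C ((θ+1)^2)]
  have hη1 : 1 < η := by nlinarith
  have hη0 : 0 < η := by linarith
  obtain ⟨A, hAdef⟩ : ∃ A : ℕ, A = Nat.floor (8*(η+1)) + 1 := ⟨_, rfl⟩
  obtain ⟨d, hddef⟩ : ∃ d : ℝ, d = min (δ/2) (min 1 (η/(2*((A:ℝ)+1)))) := ⟨_, rfl⟩
  have hA1 : (0:ℝ) < 2*((A:ℝ)+1) := by positivity
  have hd0 : 0 < d := by
    rw [hddef]
    apply lt_min (by linarith)
    apply lt_min one_pos
    positivity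
  have hdδ : d ≤ δ/2 := by rw [hddef]; exact min_le_left _ _
  have hd1 : d ≤ 1 := by
    rw [hddef]; exact le_trans (min_le_right _ _) (min_le_left _ _)
  have hdA : d ≤ η/(2*((A:ℝ)+1)) := by
    rw [hddef]; exact le_trans (min_le_right _ _) (min_le_right _ _)
  obtain ⟨ε, hεdef⟩ : ∃ ε : ℝ, ε = η + d := ⟨_, rfl⟩
  have hηε : η < ε := by rw [hεdef]; linarith
  have hε0 : 0 < ε := by linarith
  have hε1 : 1 < ε := by linarith
  have hεη1 : ε ≤ η + 1 := by rw [hεdef]; linarith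
  have hεθ : (θ+1)^2 < ε := by linarith
  -- the growth bound (ε/η)^A ≤ 2
  have hρpow : ∀ j : ℕ, j ≤ A → (ε/η)^j ≤ 2 := by
    intro j hj
    have hx0 : (0:ℝ) ≤ d/η := by positivity
    have h2A : 2*(A:ℝ)*(d/η) ≤ 1 := by
      have h1 : d/η ≤ 1/(2*((A:ℝ)+1)) := by
        rw [div_le_div_iff₀ hη0 hA1]
        calc d * (2*((A:ℝ)+1)) ≤ (η/(2*((A:ℝ)+1))) * (2*((A:ℝ)+1)) :=
              mul_le_mul_of_nonneg_right hdA hA1.le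
          _ = 1 * η := by field_simp
      calc 2*(A:ℝ)*(d/η) ≤ 2*(A:ℝ)*(1/(2*((A:ℝ)+1))) := by
            apply mul_le_mul_of_nonneg_left h1 (by positivity)
        _ ≤ 1 := by
            rw [mul_one_div, div_le_one hA1]; linarith
    have hεη : ε/η = 1 + d/η := by rw [hεdef]; field_simp
    have hmono : (ε/η)^j ≤ (ε/η)^A := by
      apply pow_le_pow_right₀ (by rw [hεη]; linarith) hj
    calc (ε/η)^j ≤ (ε/η)^A := hmono
      _ ≤ 1 + 2*(A:ℝ)*(d/η) := by rw [hεη]; exact pow_one_add_le hx0 A h2A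
      _ ≤ 2 := by linarith
  refine ⟨ε, η, hCη, hηε, by rw [hεdef]; linarith, ?_, ?_, ?_⟩
  -- PART 1 : vanishing along a sequence
  · have key : ∀ n : ℕ, ∃ Bv : ℝ, (n:ℝ) ≤ Bv ∧ quadCount θ ε η Bv = 0 := by
      intro n
      obtain ⟨T, hTdef⟩ : ∃ T : ℝ, T = (n:ℝ)^2 + 1 := ⟨_, rfl⟩
      have hT0 : 0 < T := by rw [hTdef]; positivity
      have hT1 : 1 ≤ T := by rw [hTdef]; nlinarith [sq_nonneg (n:ℝ)]
      obtain ⟨ρ, hρdef⟩ : ∃ ρ : ℝ, ρ = ε/η := ⟨_, rfl⟩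
      have hρ1 : 1 < ρ := by rw [hρdef]; exact (one_lt_div hη0).mpr hηε
      have hρ0 : 0 < ρ := by linarith
      have hρj1 : ∀ j : ℕ, 1 ≤ ρ^j := fun j => one_le_pow₀ hρ1.le
      have hρA2 : ∀ j : ℕ, j ≤ A → ρ^j ≤ 2 := by
        intro j hj; rw [hρdef]; exact hρpow j hj
      obtain ⟨Bj, hBjdef⟩ : ∃ Bj : ℕ → ℝ, Bj = fun j => Real.sqrt (T*ρ^j) := ⟨_, rfl⟩
      have hBsq : ∀ j : ℕ, (Bj j)^2 = T*ρ^j := by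
        intro j; rw [hBjdef]; exact Real.sq_sqrt (by positivity)
      by_cases hall : ∀ j, j ≤ A →
        ({p : ℕ × ℕ | 0 < p.1 ∧ 0 < p.2 ∧ Nat.Coprime p.1 p.2 ∧
          ((max p.1 p.2 : ℕ) : ℝ) ≤ Bj j ∧
          η / (Bj j) ^ 2 < |(p.1 : ℝ) / p.2 - θ| ∧
          |(p.1 : ℝ) / p.2 - θ| ≤ ε / (Bj j) ^ 2}).Nonempty
      · exfalso
        obtain ⟨V, hVdef⟩ : ∃ V : ℝ, V = Bj A := ⟨_, rfl⟩
        have hV2 : V^2 = T*ρ^A := by rw [hVdef]; exact hBsq A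
        have hV0 : 0 < V := by
          rw [hVdef, hBjdef]; exact Real.sqrt_pos.mpr (by positivity)
        have hRpos : (0:ℝ) ≤ ε/T := by positivity
        obtain ⟨Sfin, Scard⟩ := counting_lemma θ (ε/T) V hRpos hV0
        have hch : ∀ j : Fin (A+1), ∃ p : ℕ × ℕ,
            0 < p.1 ∧ 0 < p.2 ∧ Nat.Coprime p.1 p.2 ∧
            ((max p.1 p.2 : ℕ) : ℝ) ≤ Bj (j:ℕ) ∧
            η / (Bj (j:ℕ)) ^ 2 < |(p.1 : ℝ) / p.2 - θ| ∧
            |(p.1 : ℝ) / p.2 - θ| ≤ ε / (Bj (j:ℕ)) ^ 2 :=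
          fun j => hall (j:ℕ) (Nat.lt_succ_iff.mp j.isLt)
        choose P hP using hch
        have hmem : ∀ j : Fin (A+1), P j ∈ {p : ℕ × ℕ | 0 < p.1 ∧ 0 < p.2 ∧
            Nat.Coprime p.1 p.2 ∧ ((p.2 : ℕ) : ℝ) ≤ V ∧ |(p.1 : ℝ) / p.2 - θ| ≤ ε/T} := by
          intro j
          obtain ⟨h1, h2, h3, h4, h5, h6⟩ := hP j
          have hjA : (j:ℕ) ≤ A := Nat.lt_succ_iff.mp j.isLt
          have hBjV : Bj (j:ℕ) ≤ V := by
            rw [hVdef, hBjdef]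
            apply Real.sqrt_le_sqrt
            exact mul_le_mul_of_nonneg_left (pow_le_pow_right₀ hρ1.le hjA) hT0.le
          refine ⟨h1, h2, h3, ?_, ?_⟩
          · calc ((P j).2 : ℝ) ≤ ((max (P j).1 (P j).2 : ℕ) : ℝ) := by
                  exact_mod_cast Nat.le_max_right _ _
              _ ≤ Bj (j:ℕ) := h4
              _ ≤ V := hBjV
          · calc |((P j).1 : ℝ) / (P j).2 - θ| ≤ ε / (Bj (j:ℕ))^2 := h6
              _ ≤ ε / T := by
                  rw [hBsq]
                  apply div_le_div_of_nonneg_left hε0.le hT0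
                  exact le_mul_of_one_le_right hT0.le (hρj1 (j:ℕ))
        have hPinj : Function.Injective P := by
          have key2 : ∀ j k : Fin (A+1), (j:ℕ) < (k:ℕ) → P j ≠ P k := by
            intro j k hjk heq
            obtain ⟨-, -, -, -, h5, -⟩ := hP j
            obtain ⟨-, -, -, -, -, h6'⟩ := hP k
            rw [heq] at h5
            rw [hBsq] at h5 h6'
            have hTρj : (0:ℝ) < T * ρ^(j:ℕ) := by positivity
            have hTρk : (0:ℝ) < T * ρ^(k:ℕ) := by positivity
            have hcross : ε / (T * ρ^(k:ℕ)) ≤ η / (T * ρ^(j:ℕ)) := by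
              rw [div_le_div_iff₀ hTρk hTρj]
              have h1 : ρ^((j:ℕ)+1) ≤ ρ^(k:ℕ) := pow_le_pow_right₀ hρ1.le hjk
              have h2 : η * ρ = ε := by rw [hρdef]; field_simp
              calc ε * (T * ρ^(j:ℕ)) = T * ((η * ρ) * ρ^(j:ℕ)) := by rw [h2]; ring
                _ = T * (η * ρ^((j:ℕ)+1)) := by ring
                _ ≤ T * (η * ρ^(k:ℕ)) := by
                    apply mul_le_mul_of_nonneg_left _ hT0.le
                    exact mul_le_mul_of_nonneg_left h1 hη0.le
                _ = η * (T * ρ^(k:ℕ)) := by ring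
            linarith [h5, h6', hcross]
          intro j k h
          rcases lt_trichotomy (j:ℕ) (k:ℕ) with hlt | heqn | hgt
          · exact absurd h (key2 j k hlt)
          · exact Fin.ext heqn
          · exact absurd h.symm (key2 k j hgt)
        have hcard1 : A + 1 ≤ ({p : ℕ × ℕ | 0 < p.1 ∧ 0 < p.2 ∧
            Nat.Coprime p.1 p.2 ∧ ((p.2 : ℕ) : ℝ) ≤ V ∧
            |(p.1 : ℝ) / p.2 - θ| ≤ ε/T}).ncard := by
          have h1 : (Finset.image P Finset.univ).card = A + 1 := by
            rw [Finset.card_image_of_injective _ hPinj, Finset.card_univ, Fintype.card_fin]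
          have h2 : ↑(Finset.image P Finset.univ) ⊆ {p : ℕ × ℕ | 0 < p.1 ∧ 0 < p.2 ∧
              Nat.Coprime p.1 p.2 ∧ ((p.2 : ℕ) : ℝ) ≤ V ∧
              |(p.1 : ℝ) / p.2 - θ| ≤ ε/T} := by
            intro x hx
            simp only [Finset.coe_image, Set.mem_image, Finset.mem_coe,
              Finset.mem_univ] at hx
            obtain ⟨j, -, rfl⟩ := hx
            exact hmem j
          calc A + 1 = (Finset.image P Finset.univ).card := h1.symm
            _ = (↑(Finset.image P Finset.univ) : Set (ℕ × ℕ)).ncard :=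
                (Set.ncard_coe_finset _).symm
            _ ≤ _ := Set.ncard_le_ncard h2 Sfin
        have hbound : 4 * (ε/T) * V^2 ≤ 8*(η+1) := by
          rw [hV2]
          have h1 : (ε/T) * (T*ρ^A) = ε * ρ^A := by field_simp
          have h2 : ρ^A ≤ 2 := hρA2 A le_rfl
          calc 4 * (ε/T) * (T*ρ^A) = 4 * (ε * ρ^A) := by rw [mul_assoc, h1]
            _ ≤ 4 * ((η+1) * 2) := by
                apply mul_le_mul_of_nonneg_left _ (by norm_num)
                calc ε * ρ^A ≤ (η+1) * ρ^A :=
                      mul_le_mul_of_nonneg_right hεη1 (by positivity)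
                  _ ≤ (η+1) * 2 := mul_le_mul_of_nonneg_left h2 (by linarith)
            _ = 8*(η+1) := by ring
        have hcard2 : ({p : ℕ × ℕ | 0 < p.1 ∧ 0 < p.2 ∧
            Nat.Coprime p.1 p.2 ∧ ((p.2 : ℕ) : ℝ) ≤ V ∧
            |(p.1 : ℝ) / p.2 - θ| ≤ ε/T}).ncard ≤ A := by
          calc _ ≤ Nat.floor (4 * (ε/T) * V^2) + 1 := Scard
            _ ≤ Nat.floor (8*(η+1)) + 1 := by
                have := Nat.floor_le_floor hbound; omega
            _ = A := hAdef.symm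
        omega
      · push_neg at hall
        obtain ⟨j, hjA, hempty⟩ := hall
        refine ⟨Bj j, ?_, ?_⟩
        · calc (n:ℝ) = Real.sqrt ((n:ℝ)^2) := (Real.sqrt_sq (Nat.cast_nonneg n)).symm
            _ ≤ Bj j := by
                rw [hBjdef]
                apply Real.sqrt_le_sqrt
                have h9 := le_mul_of_one_le_right hT0.le (hρj1 j)
                rw [hTdef] at h9 ⊢
                linarith
        · have : quadCount θ ε η (Bj j) =
              ({p : ℕ × ℕ | 0 < p.1 ∧ 0 < p.2 ∧ Nat.Coprime p.1 p.2 ∧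
                ((max p.1 p.2 : ℕ) : ℝ) ≤ Bj j ∧
                η / (Bj j) ^ 2 < |(p.1 : ℝ) / p.2 - θ| ∧
                |(p.1 : ℝ) / p.2 - θ| ≤ ε / (Bj j) ^ 2}).ncard := rfl
          rw [this, hempty, Set.ncard_empty]
    choose Bf hBf1 hBf2 using key
    refine ⟨Bf, ?_, hBf2⟩
    exact Filter.tendsto_atTop_mono hBf1 tendsto_natCast_atTop_atTop
  -- PART 2 : at least one along a sequence
  · have key : ∀ n : ℕ, ∃ Bv : ℝ, (n:ℝ) ≤ Bv ∧ 1 ≤ quadCount θ ε η Bv := by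
      intro n
      have hD := Real.infinite_rat_abs_sub_lt_one_div_den_sq_of_irrational hirr
      obtain ⟨M, hMdef⟩ : ∃ M : ℤ, M = Int.ceil ((θ+1) * (n:ℝ)) := ⟨_, rfl⟩
      have hGfin : ((fun pr : ℤ × ℕ => (pr.1 : ℚ)/(pr.2 : ℚ)) ''
          (Set.Icc (-M) M ×ˢ Set.Icc 0 n)).Finite :=
        ((Set.finite_Icc _ _).prod (Set.finite_Icc _ _)).image _
      obtain ⟨q, hqmem⟩ := (hD.diff hGfin).nonempty
      have hq : |θ - (q:ℝ)| < 1/(q.den:ℝ)^2 := hqmem.1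
      have hqG : q ∉ (fun pr : ℤ × ℕ => (pr.1 : ℚ)/(pr.2 : ℚ)) ''
          (Set.Icc (-M) M ×ˢ Set.Icc 0 n) := hqmem.2
      have hden0 : 0 < q.den := q.pos
      have hdenR : (0:ℝ) < (q.den : ℝ) := by exact_mod_cast hden0
      have hden1 : (1:ℝ) ≤ (q.den:ℝ) := by exact_mod_cast hden0
      have hden2 : (1:ℝ) ≤ (q.den:ℝ)^2 := by nlinarith
      have hq1 : |θ - (q:ℝ)| < 1 := by
        calc |θ - (q:ℝ)| < 1/(q.den:ℝ)^2 := hq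
          _ ≤ 1 := by rw [div_le_one (by positivity)]; exact hden2
      have hqabs : |(q:ℝ)| ≤ θ + 1 := by
        have h1 := abs_sub_abs_le_abs_sub (q:ℝ) θ
        rw [abs_sub_comm] at h1
        rw [abs_of_pos hθ0] at h1
        linarith
      have hden : n < q.den := by
        by_contra hcon
        push_neg at hcon
        apply hqG
        refine ⟨(q.num, q.den), ⟨?_, ?_⟩, ?_⟩
        · rw [Set.mem_Icc]
          have h1 : (q:ℝ) = (q.num:ℝ)/(q.den:ℝ) := by rw [Rat.cast_def]
          have h2 : |(q.num:ℝ)| = |(q:ℝ)| * (q.den:ℝ) := by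
            rw [h1, abs_div, abs_of_pos hdenR]; field_simp
          have hnum : |(q.num:ℝ)| ≤ (θ+1) * (n:ℝ) := by
            rw [h2]
            have hdn : (q.den:ℝ) ≤ (n:ℝ) := by exact_mod_cast hcon
            exact mul_le_mul hqabs hdn hdenR.le (by linarith)
          have hnum2 : |q.num| ≤ M := by
            have h3 : ((θ+1) * (n:ℝ)) ≤ (M:ℝ) := by rw [hMdef]; exact Int.le_ceil _
            have h4 : |(q.num:ℝ)| ≤ (M:ℝ) := le_trans hnum h3
            exact_mod_cast h4
          exact ⟨neg_le_of_abs_le hnum2, le_of_abs_le hnum2⟩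
        · exact Set.mem_Icc.mpr ⟨Nat.zero_le _, hcon⟩
        · exact Rat.num_div_den q
      -- construct the pair
      have hqpos : (0:ℝ) < (q:ℝ) := by
        have h1 := abs_lt.mp hq1
        linarith [h1.2]
      have hnumpos : 0 < q.num := by
        rw [Rat.cast_pos] at hqpos
        exact Rat.num_pos.mpr hqpos
      obtain ⟨u, hudef⟩ : ∃ u : ℕ, u = q.num.toNat := ⟨_, rfl⟩
      obtain ⟨v, hvdef⟩ : ∃ v : ℕ, v = q.den := ⟨_, rfl⟩
      have hu0 : 0 < u := by rw [hudef]; omega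
      have hv0 : 0 < v := by rw [hvdef]; exact hden0
      have huR : ((u:ℕ):ℝ) = (q.num:ℝ) := by
        rw [hudef]; exact_mod_cast Int.toNat_of_nonneg hnumpos.le
      have huv : (u:ℝ)/v = (q:ℝ) := by
        rw [huR, hvdef, Rat.cast_def]
      have hvR : (0:ℝ) < (v:ℝ) := by exact_mod_cast hv0
      obtain ⟨z, hzdef⟩ : ∃ z : ℝ, z = |(u:ℝ)/v - θ| := ⟨_, rfl⟩
      have hzq : z = |θ - (q:ℝ)| := by rw [hzdef, huv, abs_sub_comm]
      have hz0 : 0 < z := by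
        rw [hzq]
        exact abs_pos.mpr (sub_ne_zero.mpr (hirr.ne_rat q))
      have hz1 : z < 1/(v:ℝ)^2 := by
        rw [hzq, hvdef]; exact hq
      have hcopr : Nat.Coprime u v := by
        have h1 : u = q.num.natAbs := by rw [hudef]; omega
        rw [h1, hvdef]
        exact q.reduced
      have hqle : (q:ℝ) ≤ θ + 1 := le_trans (le_abs_self _) hqabs
      have humax : ((max u v : ℕ):ℝ) ≤ (θ+1) * v := by
        have huc : (u:ℝ) = (q:ℝ) * v := by
          rw [← huv]; field_simp
        have hu' : (u:ℝ) ≤ (θ+1) * v := by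
          rw [huc]; exact mul_le_mul_of_nonneg_right hqle hvR.le
        have hv' : (v:ℝ) ≤ (θ+1) * v :=
          le_mul_of_one_le_left hvR.le (by linarith)
        rw [Nat.cast_max]
        exact max_le hu' hv'
      have hmaxnn : (0:ℝ) ≤ ((max u v : ℕ):ℝ) := Nat.cast_nonneg _
      have hQ : ((max u v : ℕ):ℝ)^2 * z < ε := by
        have h1 : ((max u v : ℕ):ℝ)^2 ≤ (θ+1)^2 * (v:ℝ)^2 := by
          calc ((max u v : ℕ):ℝ)^2 ≤ ((θ+1) * v)^2 := pow_le_pow_left₀ hmaxnn humax 2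
            _ = (θ+1)^2 * (v:ℝ)^2 := by ring
        have h2 : ((max u v : ℕ):ℝ)^2 * z ≤ (θ+1)^2 * (v:ℝ)^2 * z :=
          mul_le_mul_of_nonneg_right h1 hz0.le
        have h3 : (θ+1)^2 * (v:ℝ)^2 * z < (θ+1)^2 := by
          have h4 : (θ+1)^2 * (v:ℝ)^2 * z < (θ+1)^2 * (v:ℝ)^2 * (1/(v:ℝ)^2) := by
            apply mul_lt_mul_of_pos_left hz1 (by positivity)
          have h5 : (θ+1)^2 * (v:ℝ)^2 * (1/(v:ℝ)^2) = (θ+1)^2 := by field_simp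
          linarith
        linarith
      obtain ⟨Bv, hBvdef⟩ : ∃ Bv : ℝ, Bv = Real.sqrt (ε/z) := ⟨_, rfl⟩
      have hεz : 0 < ε/z := div_pos hε0 hz0
      have hBv2 : Bv^2 = ε/z := by rw [hBvdef]; exact Real.sq_sqrt hεz.le
      have hBv0 : 0 < Bv := by rw [hBvdef]; exact Real.sqrt_pos.mpr hεz
      have hmaxB : ((max u v : ℕ):ℝ) ≤ Bv := by
        rw [hBvdef, Real.le_sqrt hmaxnn hεz.le, le_div_iff₀ hz0]
        exact hQ.le
      have hlow : η / Bv^2 < |(u:ℝ)/v - θ| := by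
        rw [hBv2, ← hzdef, div_div_eq_mul_div, div_lt_iff₀ hε0]
        calc η * z < ε * z := mul_lt_mul_of_pos_right hηε hz0
          _ = z * ε := by ring
      have hup : |(u:ℝ)/v - θ| ≤ ε / Bv^2 := by
        rw [hBv2, ← hzdef]
        have h1 : ε / (ε/z) = z := by
          rw [div_div_eq_mul_div, mul_comm, mul_div_assoc, div_self hε0.ne', mul_one]
        rw [h1]
      have hmem : (u, v) ∈ {p : ℕ × ℕ | 0 < p.1 ∧ 0 < p.2 ∧ Nat.Coprime p.1 p.2 ∧
          ((max p.1 p.2 : ℕ) : ℝ) ≤ Bv ∧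
          η / Bv ^ 2 < |(p.1 : ℝ) / p.2 - θ| ∧ |(p.1 : ℝ) / p.2 - θ| ≤ ε / Bv ^ 2} :=
        ⟨hu0, hv0, hcopr, hmaxB, hlow, hup⟩
      obtain ⟨Sfin, -⟩ := counting_lemma θ (ε/Bv^2) Bv (by positivity) hBv0
      have hsub : {p : ℕ × ℕ | 0 < p.1 ∧ 0 < p.2 ∧ Nat.Coprime p.1 p.2 ∧
          ((max p.1 p.2 : ℕ) : ℝ) ≤ Bv ∧
          η / Bv ^ 2 < |(p.1 : ℝ) / p.2 - θ| ∧ |(p.1 : ℝ) / p.2 - θ| ≤ ε / Bv ^ 2} ⊆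
          {p : ℕ × ℕ | 0 < p.1 ∧ 0 < p.2 ∧ Nat.Coprime p.1 p.2 ∧ ((p.2 : ℕ) : ℝ) ≤ Bv ∧
          |(p.1 : ℝ) / p.2 - θ| ≤ ε/Bv^2} := by
        rintro p ⟨h1, h2, h3, h4, -, h6⟩
        refine ⟨h1, h2, h3, ?_, h6⟩
        calc ((p.2 : ℕ) : ℝ) ≤ ((max p.1 p.2 : ℕ) : ℝ) := by
              exact_mod_cast Nat.le_max_right _ _
          _ ≤ Bv := h4
      have hpos : 0 < quadCount θ ε η Bv := by
        have hfin2 : ({p : ℕ × ℕ | 0 < p.1 ∧ 0 < p.2 ∧ Nat.Coprime p.1 p.2 ∧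
            ((max p.1 p.2 : ℕ) : ℝ) ≤ Bv ∧
            η / Bv ^ 2 < |(p.1 : ℝ) / p.2 - θ| ∧
            |(p.1 : ℝ) / p.2 - θ| ≤ ε / Bv ^ 2}).Finite := Sfin.subset hsub
        have := (Set.ncard_pos hfin2).mpr ⟨(u, v), hmem⟩
        exact this
      refine ⟨Bv, ?_, hpos⟩
      have h1 : ((v:ℝ))^2 ≤ ε/z := by
        rw [le_div_iff₀ hz0]
        rw [lt_div_iff₀ (by positivity : (0:ℝ) < (v:ℝ)^2)] at hz1
        linarith
      calc (n:ℝ) ≤ (v:ℝ) := by rw [hvdef]; exact_mod_cast hden.le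
        _ = Real.sqrt ((v:ℝ)^2) := (Real.sqrt_sq hvR.le).symm
        _ ≤ Bv := by rw [hBvdef]; exact Real.sqrt_le_sqrt h1
    choose Bf hBf1 hBf2 using key
    refine ⟨Bf, ?_, hBf2⟩
    exact Filter.tendsto_atTop_mono hBf1 tendsto_natCast_atTop_atTop
  -- PART 3 : uniform bound
  · refine ⟨Nat.floor (4*ε) + 1, ?_⟩
    intro B hB
    have hB0 : (0:ℝ) < B := by linarith
    have hRpos : (0:ℝ) ≤ ε/B^2 := by positivity
    obtain ⟨Sfin, Scard⟩ := counting_lemma θ (ε/B^2) B hRpos hB0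
    have hsub : {p : ℕ × ℕ | 0 < p.1 ∧ 0 < p.2 ∧ Nat.Coprime p.1 p.2 ∧
        ((max p.1 p.2 : ℕ) : ℝ) ≤ B ∧
        η / B ^ 2 < |(p.1 : ℝ) / p.2 - θ| ∧ |(p.1 : ℝ) / p.2 - θ| ≤ ε / B ^ 2} ⊆
        {p : ℕ × ℕ | 0 < p.1 ∧ 0 < p.2 ∧ Nat.Coprime p.1 p.2 ∧ ((p.2 : ℕ) : ℝ) ≤ B ∧
        |(p.1 : ℝ) / p.2 - θ| ≤ ε/B^2} := by
      rintro p ⟨h1, h2, h3, h4, -, h6⟩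
      refine ⟨h1, h2, h3, ?_, h6⟩
      calc ((p.2 : ℕ) : ℝ) ≤ ((max p.1 p.2 : ℕ) : ℝ) := by exact_mod_cast Nat.le_max_right _ _
        _ ≤ B := h4
    have heq : 4 * (ε/B^2) * B^2 = 4*ε := by field_simp
    calc quadCount θ ε η B ≤ _ := Set.ncard_le_ncard hsub Sfin
      _ ≤ Nat.floor (4 * (ε/B^2) * B^2) + 1 := Scard
      _ = Nat.floor (4*ε) + 1 := by rw [heq]
end

section
/- Suppose ε > η > 0 and there exist a nonzero integer m and coprime positive integers x₀, y₀ with a·x₀² − b·y₀² = m and 2√(ab)·(a/b)·η < |m| < 2√(ab)·(a/b)·ε. Then there exists a strictly increasing sequence of reals B_n → ∞ such that N(ε,η,B_n) ≥ 1 for every n. -/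
set_option maxHeartbeats 1000000

/-- Iterated Pell transformation. -/
def pellSeq (t s A B : ℤ) (p0 : ℤ × ℤ) : ℕ → ℤ × ℤ
  | 0 => p0
  | n+1 => ((pellSeq t s A B p0 n).1 * t + B * s * (pellSeq t s A B p0 n).2,
            A * s * (pellSeq t s A B p0 n).1 + t * (pellSeq t s A B p0 n).2)

theorem pellSeq_prop (a b : ℕ) (t s : ℤ) (ha : 0 < a) (hb : a < b)
    (hpell : t ^ 2 - ((a:ℤ)*b) * s ^ 2 = 1) (ht : 0 < t) (hs : 0 < s)
    (m : ℤ) (x₀ y₀ : ℕ)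
    (hsol : (a : ℤ) * (x₀ : ℤ) ^ 2 - (b : ℤ) * (y₀ : ℤ) ^ 2 = m)
    (hc0 : IsCoprime (x₀:ℤ) (y₀:ℤ)) (hx₀ : 0 < x₀) (hy₀ : 0 < y₀) :
    ∀ n, 0 < (pellSeq t s a b ((x₀:ℤ),(y₀:ℤ)) n).1 ∧
       0 < (pellSeq t s a b ((x₀:ℤ),(y₀:ℤ)) n).2 ∧
       (a:ℤ) * (pellSeq t s a b ((x₀:ℤ),(y₀:ℤ)) n).1 ^ 2
         - (b:ℤ) * (pellSeq t s a b ((x₀:ℤ),(y₀:ℤ)) n).2 ^ 2 = m ∧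
       IsCoprime (pellSeq t s a b ((x₀:ℤ),(y₀:ℤ)) n).1 (pellSeq t s a b ((x₀:ℤ),(y₀:ℤ)) n).2 := by
  intro n
  induction n with
  | zero =>
    refine ⟨?_, ?_, hsol, hc0⟩
    · show (0:ℤ) < (x₀:ℤ); exact_mod_cast hx₀
    · show (0:ℤ) < (y₀:ℤ); exact_mod_cast hy₀
  | succ n ih =>
    obtain ⟨hX, hY, hF, hC⟩ := ih
    set X := (pellSeq t s a b ((x₀:ℤ),(y₀:ℤ)) n).1
    set Y := (pellSeq t s a b ((x₀:ℤ),(y₀:ℤ)) n).2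
    have h1 : (pellSeq t s a b ((x₀:ℤ),(y₀:ℤ)) (n+1)).1 = X * t + b * s * Y := rfl
    have h2 : (pellSeq t s a b ((x₀:ℤ),(y₀:ℤ)) (n+1)).2 = a * s * X + t * Y := rfl
    rw [h1, h2]
    have hb' : (0:ℤ) < b := by exact_mod_cast lt_trans ha hb
    have ha' : (0:ℤ) < a := by exact_mod_cast ha
    refine ⟨add_pos (mul_pos hX ht) (mul_pos (mul_pos hb' hs) hY),
      add_pos (mul_pos (mul_pos ha' hs) hX) (mul_pos ht hY), ?_, ?_⟩
    · linear_combination (t^2 - (a:ℤ)*b*s^2) * hF + m * hpell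
    · obtain ⟨u, v, huv⟩ := hC
      refine ⟨u*t - v*(a:ℤ)*s, -u*(b:ℤ)*s + v*t, ?_⟩
      linear_combination (t^2 - (a:ℤ)*b*s^2) * huv + hpell

theorem pell_family (a b : ℕ) (t s : ℤ) (ha : 0 < a) (hb : a < b)
    (hpell : t ^ 2 - ((a:ℤ)*b) * s ^ 2 = 1) (ht : 0 < t) (hs : 0 < s)
    (m : ℤ) (x₀ y₀ : ℕ)
    (hsol : (a : ℤ) * (x₀ : ℤ) ^ 2 - (b : ℤ) * (y₀ : ℤ) ^ 2 = m)
    (hc0 : IsCoprime (x₀:ℤ) (y₀:ℤ)) (hx₀ : 0 < x₀) (hy₀ : 0 < y₀) :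
    ∃ X Y : ℕ → ℤ, ∀ n, 0 < X n ∧ 0 < Y n ∧
      (a:ℤ) * (X n) ^ 2 - (b:ℤ) * (Y n) ^ 2 = m ∧ IsCoprime (X n) (Y n) ∧
      X n < X (n+1) ∧ Y n < Y (n+1) := by
  refine ⟨fun n => (pellSeq t s a b ((x₀:ℤ),(y₀:ℤ)) n).1,
         fun n => (pellSeq t s a b ((x₀:ℤ),(y₀:ℤ)) n).2, fun n => ?_⟩
  obtain ⟨hX, hY, hF, hC⟩ := pellSeq_prop a b t s ha hb hpell ht hs m x₀ y₀ hsol hc0 hx₀ hy₀ n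
  have hb'' : (0:ℤ) < b := by exact_mod_cast lt_trans ha hb
  have ha'' : (0:ℤ) < a := by exact_mod_cast ha
  refine ⟨hX, hY, hF, hC, ?_, ?_⟩
  · show _ < (pellSeq t s a b ((x₀:ℤ),(y₀:ℤ)) n).1 * t + b * s * (pellSeq t s a b ((x₀:ℤ),(y₀:ℤ)) n).2
    nlinarith [mul_pos (mul_pos hb'' hs) hY]
  · show _ < a * s * (pellSeq t s a b ((x₀:ℤ),(y₀:ℤ)) n).1 + t * (pellSeq t s a b ((x₀:ℤ),(y₀:ℤ)) n).2
    nlinarith [mul_pos (mul_pos ha'' hs) hX]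

/-- If the annulus `(η, ε]` contains `|m|` (suitably normalised) for some value `m` of the
Pell–Fermat form `a·x² − b·y²` at a coprime point, then there is a sequence of bounds
`B_n → ∞` along which the critical zoom count `N(ε,η,B_n)` is at least `1`. -/
theorem stmt_3 (a b : ℕ) (ha : 0 < a) (hab : a < b) (hcop : Nat.Coprime a b)
    (hnsq : ¬ IsSquare (a * b)) (θ : ℝ) (hθ : θ = Real.sqrt ((b : ℝ) / a))
    (ε η : ℝ) (hη : 0 < η) (hεη : η < ε)
    (m : ℤ) (hm : m ≠ 0) (x₀ y₀ : ℕ) (hx₀ : 0 < x₀) (hy₀ : 0 < y₀)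
    (hcop₀ : Nat.Coprime x₀ y₀)
    (hsol : (a : ℤ) * (x₀ : ℤ) ^ 2 - (b : ℤ) * (y₀ : ℤ) ^ 2 = m)
    (hlow : 2 * Real.sqrt ((a : ℝ) * b) * ((a : ℝ) / b) * η < |(m : ℝ)|)
    (hhigh : |(m : ℝ)| < 2 * Real.sqrt ((a : ℝ) * b) * ((a : ℝ) / b) * ε) :
    ∃ B : ℕ → ℝ, StrictMono B ∧ Filter.Tendsto B Filter.atTop Filter.atTop ∧
      ∀ n, 1 ≤ quadCount θ ε η (B n) := by
  have hε : (0:ℝ) < ε := hη.trans hεη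
  have ha' : (0:ℝ) < a := by exact_mod_cast ha
  have hb0 : 0 < b := lt_trans ha hab
  have hb' : (0:ℝ) < b := by exact_mod_cast hb0
  have hba : (1:ℝ) < (b:ℝ)/a := (one_lt_div ha').mpr (by exact_mod_cast hab)
  have hθ1 : 1 < θ := by
    rw [hθ, show (1:ℝ) = Real.sqrt 1 from (Real.sqrt_one).symm]
    exact Real.sqrt_lt_sqrt zero_le_one hba
  have hθ0 : 0 < θ := lt_trans one_pos hθ1
  have hθ2 : θ ^ 2 = (b:ℝ)/a := by
    rw [hθ]; exact Real.sq_sqrt (by positivity)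
  have hm' : (0:ℝ) < |(m:ℝ)| := abs_pos.mpr (by exact_mod_cast hm)
  have hθab : Real.sqrt ((a:ℝ)*b) = a * θ := by
    have e : (a:ℝ)*b = a^2 * ((b:ℝ)/a) := by field_simp
    rw [e, Real.sqrt_mul (by positivity), Real.sqrt_sq ha'.le, hθ]
  have hkey : |(m:ℝ)| * θ^2 < 2*(a:ℝ)*ε*θ := by
    have h1 : (a:ℝ)/b * θ^2 = 1 := by rw [hθ2]; field_simp
    have h2 : |(m:ℝ)| * θ^2 < (2*Real.sqrt ((a:ℝ)*b)*((a:ℝ)/b)*ε)*θ^2 :=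
      mul_lt_mul_of_pos_right hhigh (by positivity)
    calc |(m:ℝ)| * θ^2 < (2*Real.sqrt ((a:ℝ)*b)*((a:ℝ)/b)*ε)*θ^2 := h2
      _ = 2*(a:ℝ)*ε*θ := by rw [hθab]; linear_combination 2*(a:ℝ)*ε*θ*h1
  -- Pell solution
  have hd0 : (0:ℤ) < (a:ℤ)*(b:ℤ) := by exact_mod_cast Nat.mul_pos ha hb0
  have hdsq : ¬ IsSquare ((a:ℤ)*(b:ℤ)) := by
    rw [← Nat.cast_mul, Int.isSquare_natCast_iff]; exact hnsq
  obtain ⟨t, s, hpell, ht, hs⟩ : ∃ t s : ℤ, t^2 - ((a:ℤ)*b)*s^2 = 1 ∧ 0 < t ∧ 0 < s := by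
    obtain ⟨t0, s0, hpell0, hs00⟩ := Pell.exists_of_not_isSquare hd0 hdsq
    refine ⟨|t0|, |s0|, by rw [sq_abs, sq_abs]; exact hpell0, ?_, abs_pos.mpr hs00⟩
    have h1 : 0 < |s0| := abs_pos.mpr hs00
    nlinarith [abs_nonneg t0, mul_pos hd0 (mul_pos h1 h1), sq_abs t0, sq_abs s0]
  have hc0 : IsCoprime (x₀:ℤ) (y₀:ℤ) := by
    rw [Int.isCoprime_iff_gcd_eq_one]; exact_mod_cast hcop₀
  obtain ⟨X, Y, hprop⟩ := pell_family a b t s ha hab hpell ht hs m x₀ y₀ hsol hc0 hx₀ hy₀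
  have hXpos : ∀ n, 0 < X n := fun n => (hprop n).1
  have hYpos : ∀ n, 0 < Y n := fun n => (hprop n).2.1
  have hform : ∀ n, (a:ℤ) * (X n)^2 - b * (Y n)^2 = m := fun n => (hprop n).2.2.1
  have hcopn : ∀ n, IsCoprime (X n) (Y n) := fun n => (hprop n).2.2.2.1
  have hstep : ∀ n, X n < X (n+1) ∧ Y n < Y (n+1) := fun n => (hprop n).2.2.2.2
  have hYge : ∀ n : ℕ, (n:ℤ) < Y n := by
    intro n
    induction n with
    | zero => exact_mod_cast hYpos 0
    | succ k ihk => have := (hstep k).2; push_cast; push_cast at ihk; omega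
  -- real versions
  have hx : ∀ n, (0:ℝ) < (X n : ℝ) := fun n => by exact_mod_cast hXpos n
  have hy : ∀ n, (0:ℝ) < (Y n : ℝ) := fun n => by exact_mod_cast hYpos n
  have hformR : ∀ n, (a:ℝ) * ((X n : ℝ))^2 - b * ((Y n : ℝ))^2 = m := fun n => by
    exact_mod_cast hform n
  -- the distance identity
  have hden : ∀ n, 0 < (a:ℝ) * (Y n : ℝ) * ((X n : ℝ) + θ * (Y n : ℝ)) := by
    intro n; have := hx n; have := hy n; positivity
  have hid : ∀ n, (X n : ℝ) / (Y n : ℝ) - θ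
      = m / ((a:ℝ) * (Y n : ℝ) * ((X n : ℝ) + θ * (Y n : ℝ))) := by
    intro n
    rw [eq_div_iff (hden n).ne']
    have hyn := (hy n).ne'
    have hθ2' : (a:ℝ)*θ^2 = b := by rw [hθ2]; field_simp
    field_simp
    linear_combination hformR n - ((Y n : ℝ))^2 * hθ2'
  have habs : ∀ n, |(X n : ℝ) / (Y n : ℝ) - θ|
      = |(m:ℝ)| / ((a:ℝ) * (Y n : ℝ) * ((X n : ℝ) + θ * (Y n : ℝ))) := by
    intro n; rw [hid n, abs_div, abs_of_pos (hden n)]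
  set D : ℕ → ℝ := fun n => |(m:ℝ)| / ((a:ℝ) * (Y n : ℝ) * ((X n : ℝ) + θ * (Y n : ℝ)))
    with hDdef
  have hDpos : ∀ n, 0 < D n := fun n => div_pos hm' (hden n)
  -- D is strictly decreasing
  have hDanti : StrictAnti D := by
    apply strictAnti_nat_of_succ_lt
    intro n
    simp only [hDdef]
    apply div_lt_div_of_pos_left hm' (hden n)
    have h1' : (X n : ℝ) < (X (n+1) : ℝ) := by exact_mod_cast (hstep n).1
    have h2' : (Y n : ℝ) < (Y (n+1) : ℝ) := by exact_mod_cast (hstep n).2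
    have hB : (X n : ℝ) + θ*(Y n : ℝ) < (X (n+1) : ℝ) + θ*(Y (n+1) : ℝ) :=
      add_lt_add h1' (mul_lt_mul_of_pos_left h2' hθ0)
    calc (a:ℝ) * (Y n : ℝ) * ((X n : ℝ) + θ * (Y n : ℝ))
        < (a:ℝ) * (Y n : ℝ) * ((X (n+1) : ℝ) + θ * (Y (n+1) : ℝ)) := by
          apply mul_lt_mul_of_pos_left hB (by have := hy n; positivity)
      _ ≤ (a:ℝ) * (Y (n+1) : ℝ) * ((X (n+1) : ℝ) + θ * (Y (n+1) : ℝ)) := by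
          apply mul_le_mul_of_nonneg_right _ (by have := hx (n+1); have := hy (n+1); positivity)
          nlinarith [h2']
  -- y tends to infinity
  have hycast : ∀ n : ℕ, (n:ℝ) < (Y n : ℝ) := by intro n; exact_mod_cast hYge n
  have hylim : Filter.Tendsto (fun n => ((Y n : ℝ))) Filter.atTop Filter.atTop :=
    Filter.tendsto_atTop_mono (fun n => (hycast n).le) tendsto_natCast_atTop_atTop
  -- ratio tends to θ
  have hrlim : Filter.Tendsto (fun n => (X n : ℝ) / (Y n : ℝ)) Filter.atTop (nhds θ) := by
    rw [tendsto_iff_dist_tendsto_zero]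
    have hbound : ∀ n, dist ((X n : ℝ) / (Y n : ℝ)) θ
        ≤ (|(m:ℝ)| / ((a:ℝ)*θ)) / ((Y n : ℝ))^2 := by
      intro n
      rw [Real.dist_eq, habs n, div_div]
      apply div_le_div_of_nonneg_left hm'.le (mul_pos (mul_pos ha' hθ0) (pow_pos (hy n) 2))
      nlinarith [mul_pos (mul_pos ha' (hy n)) (hx n), sq_nonneg ((Y n : ℝ))]
    have hlim0 : Filter.Tendsto (fun n => (|(m:ℝ)| / ((a:ℝ)*θ)) / ((Y n : ℝ))^2)
        Filter.atTop (nhds 0) := by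
      apply Filter.Tendsto.div_atTop tendsto_const_nhds
      exact (Filter.tendsto_pow_atTop two_ne_zero).comp hylim
    exact squeeze_zero (fun n => dist_nonneg) hbound hlim0
  -- eventually the bound condition holds
  have hglim : Filter.Tendsto
      (fun n => ε*(a:ℝ)*((X n : ℝ) / (Y n : ℝ) + θ)
        - |(m:ℝ)| * (max ((X n : ℝ) / (Y n : ℝ)) 1)^2)
      Filter.atTop (nhds (ε*(a:ℝ)*(θ+θ) - |(m:ℝ)| * θ^2)) := by
    have hmax : Filter.Tendsto (fun n => max ((X n : ℝ) / (Y n : ℝ)) 1)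
        Filter.atTop (nhds θ) := by
      have h := hrlim.max (tendsto_const_nhds (x := (1:ℝ)) (f := Filter.atTop (α := ℕ)))
      rwa [max_eq_left hθ1.le] at h
    exact ((tendsto_const_nhds.mul (hrlim.add tendsto_const_nhds)).sub
      (tendsto_const_nhds.mul (hmax.pow 2)))
  have hlimpos : 0 < ε*(a:ℝ)*(θ+θ) - |(m:ℝ)| * θ^2 := by nlinarith
  obtain ⟨n₀, hn₀⟩ := Filter.eventually_atTop.mp
    (hglim.eventually (eventually_gt_nhds hlimpos))
  -- bound: max ≤ sqrt (ε / D n) for n ≥ n₀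
  have hεD : ∀ n, 0 < ε / D n := fun n => div_pos hε (hDpos n)
  have hmaxle : ∀ n, n₀ ≤ n → max ((X n : ℝ)) ((Y n : ℝ)) ≤ Real.sqrt (ε / D n) := by
    intro n hn
    rw [Real.le_sqrt (le_max_of_le_left (hx n).le) (hεD n).le]
    have hgn := hn₀ n hn
    have hxy : (X n : ℝ) = ((X n : ℝ) / (Y n : ℝ)) * (Y n : ℝ) :=
      (div_mul_cancel₀ _ (hy n).ne').symm
    have hmaxeq : max ((X n : ℝ)) ((Y n : ℝ))
        = max ((X n : ℝ) / (Y n : ℝ)) 1 * (Y n : ℝ) := by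
      nth_rewrite 1 [hxy]
      rw [max_mul_of_nonneg _ _ (hy n).le, one_mul]
    have hsq : |(m:ℝ)| * (max ((X n : ℝ)) ((Y n : ℝ)))^2
        < ε * ((a:ℝ) * (Y n : ℝ) * ((X n : ℝ) + θ * (Y n : ℝ))) := by
      rw [hmaxeq]
      nth_rewrite 2 [hxy]
      have hyn2 : (0:ℝ) < ((Y n : ℝ))^2 := by have := hy n; positivity
      nlinarith [hgn]
    simp only [hDdef]
    rw [div_div_eq_mul_div, le_div_iff₀ hm']
    nlinarith [hsq]
  -- define the sequence of bounds
  refine ⟨fun k => Real.sqrt (ε / D (k + n₀)), ?_, ?_, ?_⟩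
  · intro k l hkl
    apply Real.sqrt_lt_sqrt (hεD _).le
    apply div_lt_div_of_pos_left hε (hDpos _)
    exact hDanti (by omega)
  · apply Filter.tendsto_atTop_mono (fun k => ?_) tendsto_natCast_atTop_atTop
    calc (k:ℝ) ≤ ((k + n₀ : ℕ):ℝ) := by push_cast; linarith [Nat.cast_nonneg (α := ℝ) n₀]
      _ ≤ (Y (k + n₀) : ℝ) := (hycast _).le
      _ ≤ max ((X (k+n₀) : ℝ)) ((Y (k+n₀) : ℝ)) := le_max_right _ _
      _ ≤ Real.sqrt (ε / D (k + n₀)) := hmaxle _ (by omega)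
  · intro k
    have hB2 : (Real.sqrt (ε / D (k + n₀)))^2 = ε / D (k + n₀) := Real.sq_sqrt (hεD _).le
    have hBpos : 0 < Real.sqrt (ε / D (k + n₀)) := Real.sqrt_pos.mpr (hεD _)
    have hux : (((X (k+n₀)).toNat : ℕ):ℝ) = (X (k+n₀) : ℝ) := by
      exact_mod_cast congrArg Int.cast (Int.toNat_of_nonneg (hXpos (k+n₀)).le)
    have hvy : (((Y (k+n₀)).toNat : ℕ):ℝ) = (Y (k+n₀) : ℝ) := by
      exact_mod_cast congrArg Int.cast (Int.toNat_of_nonneg (hYpos (k+n₀)).le)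
    have hupos : 0 < (X (k+n₀)).toNat := by have := hXpos (k+n₀); omega
    have hvpos : 0 < (Y (k+n₀)).toNat := by have := hYpos (k+n₀); omega
    have huv : Nat.Coprime (X (k+n₀)).toNat (Y (k+n₀)).toNat := by
      have h := Int.isCoprime_iff_gcd_eq_one.mp (hcopn (k+n₀))
      have hu' : (X (k+n₀)).toNat = (X (k+n₀)).natAbs := by have := hXpos (k+n₀); omega
      have hv' : (Y (k+n₀)).toNat = (Y (k+n₀)).natAbs := by have := hYpos (k+n₀); omega
      rw [Nat.Coprime, hu', hv']; exact h
    have hεBD : ε / (Real.sqrt (ε / D (k + n₀)))^2 = D (k+n₀) := by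
      rw [hB2, div_div_eq_mul_div, mul_comm, mul_div_assoc, div_self hε.ne', mul_one]
    have hmem : ((X (k+n₀)).toNat, (Y (k+n₀)).toNat)
        ∈ {p : ℕ × ℕ | 0 < p.1 ∧ 0 < p.2 ∧ Nat.Coprime p.1 p.2 ∧
        ((max p.1 p.2 : ℕ) : ℝ) ≤ Real.sqrt (ε / D (k + n₀)) ∧
        η / (Real.sqrt (ε / D (k + n₀))) ^ 2 < |(p.1 : ℝ) / p.2 - θ| ∧
        |(p.1 : ℝ) / p.2 - θ| ≤ ε / (Real.sqrt (ε / D (k + n₀))) ^ 2} := by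
      refine ⟨hupos, hvpos, huv, ?_, ?_, ?_⟩
      · show ((max (X (k+n₀)).toNat (Y (k+n₀)).toNat : ℕ):ℝ) ≤ _
        rw [Nat.cast_max, hux, hvy]
        exact hmaxle _ (by omega)
      · show η / _ < |((((X (k+n₀)).toNat : ℕ)):ℝ) / (((Y (k+n₀)).toNat : ℕ):ℝ) - θ|
        rw [hux, hvy, habs (k+n₀), hB2]
        rw [div_div_eq_mul_div, div_lt_iff₀ hε]
        have h1 := hDpos (k+n₀)
        have h2 : D (k+n₀) = |(m:ℝ)| / ((a:ℝ) * (Y (k+n₀) : ℝ)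
            * ((X (k+n₀) : ℝ) + θ * (Y (k+n₀) : ℝ))) := by rw [hDdef]
        rw [← h2]
        nlinarith [h1]
      · show |((((X (k+n₀)).toNat : ℕ)):ℝ) / (((Y (k+n₀)).toNat : ℕ):ℝ) - θ| ≤ _
        rw [hux, hvy, habs (k+n₀), hεBD, hDdef]
    -- finiteness of the set
    have hfin : {p : ℕ × ℕ | 0 < p.1 ∧ 0 < p.2 ∧ Nat.Coprime p.1 p.2 ∧
        ((max p.1 p.2 : ℕ) : ℝ) ≤ Real.sqrt (ε / D (k + n₀)) ∧
        η / (Real.sqrt (ε / D (k + n₀))) ^ 2 < |(p.1 : ℝ) / p.2 - θ| ∧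
        |(p.1 : ℝ) / p.2 - θ| ≤ ε / (Real.sqrt (ε / D (k + n₀))) ^ 2}.Finite := by
      apply Set.Finite.subset ((Set.finite_Iic (⌈Real.sqrt (ε / D (k + n₀))⌉₊)).prod
        (Set.finite_Iic (⌈Real.sqrt (ε / D (k + n₀))⌉₊)))
      rintro ⟨p1, p2⟩ ⟨-, -, -, hple, -, -⟩
      have hm1 : ((p1:ℕ):ℝ) ≤ ((max p1 p2 : ℕ):ℝ) := by exact_mod_cast le_max_left p1 p2
      have hm2 : ((p2:ℕ):ℝ) ≤ ((max p1 p2 : ℕ):ℝ) := by exact_mod_cast le_max_right p1 p2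
      constructor
      · exact_mod_cast le_trans (le_trans hm1 hple) (Nat.le_ceil _)
      · exact_mod_cast le_trans (le_trans hm2 hple) (Nat.le_ceil _)
    rw [quadCount]
    exact (Set.ncard_pos hfin).mpr ⟨_, hmem⟩
end

section
/- Let D ≥ 2 be a squarefree integer, K = ℚ(√D), O_K its ring of integers, and m a nonzero integer. Say a rational prime p is inert if p·O_K is a prime ideal of O_K, and split if p·O_K is the product of two distinct prime ideals of O_K. If there exists an inert prime p dividing m with v_p(m) odd (v_p the p-adic valuation), then no nonzero ideal of O_K has absolute norm |m|; otherwise, the number of nonzero ideals of O_K of absolute norm |m| equals ∏_{p split, p ∣ m} (v_p(m) + 1). -/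
open NumberField Ideal

section Helpers

variable {K : Type} [Field K] [NumberField K]

private lemma qf_S_finite (n : ℕ) :
    {I : Ideal (𝓞 K) | I ≠ ⊥ ∧ absNorm I = n}.Finite :=
  (Ideal.finite_setOf_absNorm_eq n).subset (fun _ hI => hI.2)

private lemma qf_absNorm_mul (I J : Ideal (𝓞 K)) :
    absNorm (I * J) = absNorm I * absNorm J :=
  Ideal.absNorm.toMonoidHom.map_mul I J

private lemma qf_absNorm_dvd {I J : Ideal (𝓞 K)} (h : I ∣ J) : absNorm I ∣ absNorm J :=
  map_dvd Ideal.absNorm.toMonoidHom h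

private lemma qf_norm_span_nat (hrank : Module.finrank ℚ K = 2) (k : ℕ) :
    absNorm (span {(k : 𝓞 K)}) = k ^ 2 := by
  rw [absNorm_span_singleton]
  rw [show ((k : 𝓞 K)) = algebraMap ℤ (𝓞 K) (k : ℤ) by simp]
  rw [Algebra.norm_algebraMap_of_basis (RingOfIntegers.basis K)]
  rw [← Module.finrank_eq_card_chooseBasisIndex, RingOfIntegers.rank, hrank]
  simp [Int.natAbs_pow]

private lemma qf_span_p_ne_bot {p : ℕ} (hp : p.Prime) :
    (span {(p : 𝓞 K)} : Ideal (𝓞 K)) ≠ ⊥ := by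
  rw [Ne, span_singleton_eq_bot]
  exact_mod_cast hp.ne_zero ∘ fun h => by exact_mod_cast h

private lemma qf_span_p_ne_top (hrank : Module.finrank ℚ K = 2) {p : ℕ} (hp : p.Prime) :
    (span {(p : 𝓞 K)} : Ideal (𝓞 K)) ≠ ⊤ := by
  intro h
  have := qf_norm_span_nat hrank p
  rw [h, absNorm_top] at this
  have := hp.one_lt
  nlinarith

/-- Any prime (ideal) factor of `span p` has norm `p` or `p ^ 2`. -/
private lemma qf_norm_prime_factor (hrank : Module.finrank ℚ K = 2) {p : ℕ} (hp : p.Prime)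
    {Q : Ideal (𝓞 K)} (hQ : Prime Q) (hdvd : Q ∣ span {(p : 𝓞 K)}) :
    absNorm Q = p ∨ absNorm Q = p ^ 2 := by
  have h1 : absNorm Q ∣ p ^ 2 := by
    have := qf_absNorm_dvd hdvd
    rwa [qf_norm_span_nat hrank] at this
  obtain ⟨k, hk, hQk⟩ := (Nat.dvd_prime_pow hp).mp h1
  interval_cases k
  · exfalso
    rw [pow_zero, absNorm_eq_one_iff] at hQk
    exact hQ.not_unit (by simp [hQk, Ideal.isUnit_iff])
  · left; simpa using hQk
  · right; exact hQk

/-- classification: `span p` is prime, or a product of two primes of norm `p`. -/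
private lemma qf_classify (hrank : Module.finrank ℚ K = 2) {p : ℕ} (hp : p.Prime) :
    (span {(p : 𝓞 K)}).IsPrime ∨
      ∃ Q₁ Q₂ : Ideal (𝓞 K), Prime Q₁ ∧ Prime Q₂ ∧ absNorm Q₁ = p ∧ absNorm Q₂ = p ∧
        span {(p : 𝓞 K)} = Q₁ * Q₂ := by
  obtain ⟨f, hfp, hfprod⟩ :=
    UniqueFactorizationMonoid.exists_prime_factors (span {(p : 𝓞 K)}) (qf_span_p_ne_bot hp)
  rw [associated_iff_eq] at hfprod
  have hcard : Multiset.card f ≤ 2 := by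
    by_contra hlt
    push_neg at hlt
    have hle : ∀ x ∈ f.map absNorm, p ≤ x := by
      intro x hx
      obtain ⟨Q, hQf, rfl⟩ := Multiset.mem_map.mp hx
      rcases qf_norm_prime_factor hrank hp (hfp Q hQf) (hfprod ▸ Multiset.dvd_prod hQf) with h | h
      · omega
      · nlinarith [hp.two_le]
    have := Multiset.pow_card_le_prod (s := f.map absNorm) (a := p) hle
    have hprod : (f.map absNorm).prod = p ^ 2 := by
      rw [← qf_norm_span_nat hrank p, ← hfprod]
      exact (Ideal.absNorm.toMonoidHom.map_multiset_prod f).symm ▸ rfl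
    rw [Multiset.card_map, hprod] at this
    have := (Nat.pow_le_pow_iff_right hp.one_lt).mp this
    omega
  interval_cases h : Multiset.card f
  · exfalso
    rw [Multiset.card_eq_zero] at h
    rw [h, Multiset.prod_zero] at hfprod
    exact qf_span_p_ne_top hrank hp (by rw [← hfprod, Ideal.one_eq_top])
  · rw [Multiset.card_eq_one] at h
    obtain ⟨Q, rfl⟩ := h
    rw [Multiset.prod_singleton] at hfprod
    left
    rw [← hfprod]
    exact Ideal.isPrime_of_prime (hfp Q (by simp))
  · rw [Multiset.card_eq_two] at h
    obtain ⟨Q₁, Q₂, rfl⟩ := h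
    have h1 : Prime Q₁ := hfp _ (by simp)
    have h2 : Prime Q₂ := hfp _ (by simp)
    rw [Multiset.insert_eq_cons, Multiset.prod_cons, Multiset.prod_singleton] at hfprod
    right
    have hn1 : absNorm Q₁ = p := by
      rcases qf_norm_prime_factor hrank hp h1 ⟨Q₂, hfprod.symm⟩ with h | h
      · exact h
      · exfalso
        have := qf_norm_span_nat hrank p
        rw [← hfprod, qf_absNorm_mul, h] at this
        have h2' : absNorm Q₂ = 1 := by
          have hp2 : 0 < p ^ 2 := pow_pos hp.pos 2
          exact Nat.eq_of_mul_eq_mul_left hp2 (show p^2 * absNorm Q₂ = p^2 * 1 by rw [mul_one]; exact this)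
        rw [absNorm_eq_one_iff] at h2'
        exact h2.not_unit (by simp [h2', Ideal.isUnit_iff])
    have hn2 : absNorm Q₂ = p := by
      have := qf_norm_span_nat hrank p
      rw [← hfprod, qf_absNorm_mul, hn1, pow_two] at this
      exact (Nat.eq_of_mul_eq_mul_left hp.pos this.symm).symm
    exact ⟨Q₁, Q₂, h1, h2, hn1, hn2, hfprod.symm⟩

end Helpers

section Helpers2

variable {K : Type} [Field K] [NumberField K]

private lemma qf_norm_pow (Q : Ideal (𝓞 K)) (k : ℕ) : absNorm (Q ^ k) = absNorm Q ^ k :=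
  Ideal.absNorm.toMonoidHom.map_pow Q k

private lemma qf_mem_dvd {I : Ideal (𝓞 K)} {n : ℕ} (h : absNorm I = n) :
    I ∣ span {(n : 𝓞 K)} := by
  rw [Ideal.dvd_iff_le, Ideal.span_singleton_le_iff_mem, ← h]
  exact absNorm_mem I

private lemma qf_mem_dvd_pow {I : Ideal (𝓞 K)} {p a : ℕ} (h : absNorm I = p ^ a) :
    I ∣ span {(p : 𝓞 K)} ^ a := by
  have := qf_mem_dvd h
  rwa [show ((p ^ a : ℕ) : 𝓞 K) = (p : 𝓞 K) ^ a by push_cast; ring,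
    ← Ideal.span_singleton_pow] at this

private lemma qf_prime_pow_ne_bot {Q : Ideal (𝓞 K)} (hQ : Prime Q) (k : ℕ) : Q ^ k ≠ ⊥ := by
  rw [← Submodule.zero_eq_bot]
  exact pow_ne_zero k hQ.ne_zero

/-- inert case -/
private lemma qf_count_inert (hrank : Module.finrank ℚ K = 2) {p : ℕ} (hp : p.Prime)
    (hsp : (span {(p : 𝓞 K)}).IsPrime) (a : ℕ) :
    {I : Ideal (𝓞 K) | I ≠ ⊥ ∧ absNorm I = p ^ a}.ncard = if Even a then 1 else 0 := by
  have hprime : Prime (span {(p : 𝓞 K)}) := Ideal.prime_of_isPrime (qf_span_p_ne_bot hp) hsp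
  have key : ∀ I : Ideal (𝓞 K), I ≠ ⊥ → absNorm I = p ^ a →
      ∃ k, I = span {(p : 𝓞 K)} ^ k ∧ 2 * k = a := by
    intro I hIb hIn
    have hdvd : I ∣ span {(p : 𝓞 K)} ^ a := qf_mem_dvd_pow hIn
    obtain ⟨k, hk, hassoc⟩ := (dvd_prime_pow hprime a).mp hdvd
    rw [associated_iff_eq] at hassoc
    refine ⟨k, hassoc, ?_⟩
    have : absNorm (span {(p : 𝓞 K)} ^ k) = p ^ a := by rw [← hassoc]; exact hIn
    rw [qf_norm_pow, qf_norm_span_nat hrank, ← pow_mul] at this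
    exact Nat.pow_right_injective hp.two_le this
  by_cases hev : Even a
  · obtain ⟨t, rfl⟩ := hev
    rw [if_pos (Even.add_self t)]
    have : {I : Ideal (𝓞 K) | I ≠ ⊥ ∧ absNorm I = p ^ (t + t)} = {span {(p : 𝓞 K)} ^ t} := by
      ext I
      simp only [Set.mem_setOf_eq, Set.mem_singleton_iff]
      constructor
      · rintro ⟨hIb, hIn⟩
        obtain ⟨k, rfl, hk⟩ := key I hIb hIn
        have : k = t := by omega
        rw [this]
      · rintro rfl
        refine ⟨qf_prime_pow_ne_bot hprime t, ?_⟩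
        rw [qf_norm_pow, qf_norm_span_nat hrank, ← pow_mul]
        ring_nf
    rw [this, Set.ncard_singleton]
  · rw [if_neg hev]
    have : {I : Ideal (𝓞 K) | I ≠ ⊥ ∧ absNorm I = p ^ a} = ∅ := by
      rw [Set.eq_empty_iff_forall_notMem]
      rintro I ⟨hIb, hIn⟩
      obtain ⟨k, -, hk⟩ := key I hIb hIn
      exact hev ⟨k, by omega⟩
    rw [this, Set.ncard_empty]

/-- ramified case -/
private lemma qf_count_ramified (hrank : Module.finrank ℚ K = 2) {p : ℕ} (hp : p.Prime)
    {Q : Ideal (𝓞 K)} (hQ : Prime Q) (hQn : absNorm Q = p)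
    (hsp : span {(p : 𝓞 K)} = Q ^ 2) (a : ℕ) :
    {I : Ideal (𝓞 K) | I ≠ ⊥ ∧ absNorm I = p ^ a}.ncard = 1 := by
  have : {I : Ideal (𝓞 K) | I ≠ ⊥ ∧ absNorm I = p ^ a} = {Q ^ a} := by
    ext I
    simp only [Set.mem_setOf_eq, Set.mem_singleton_iff]
    constructor
    · rintro ⟨hIb, hIn⟩
      have hdvd : I ∣ Q ^ (2 * a) := by
        rw [pow_mul, ← hsp]
        exact qf_mem_dvd_pow hIn
      obtain ⟨k, hk, hassoc⟩ := (dvd_prime_pow hQ (2 * a)).mp hdvd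
      rw [associated_iff_eq] at hassoc
      have : absNorm (Q ^ k) = p ^ a := by rw [← hassoc]; exact hIn
      rw [qf_norm_pow, hQn] at this
      have : k = a := Nat.pow_right_injective hp.two_le this
      rw [hassoc, this]
    · rintro rfl
      exact ⟨qf_prime_pow_ne_bot hQ a, by rw [qf_norm_pow, hQn]⟩
  rw [this, Set.ncard_singleton]

/-- split case -/
private lemma qf_count_split (hrank : Module.finrank ℚ K = 2) {p : ℕ} (hp : p.Prime)
    {Q₁ Q₂ : Ideal (𝓞 K)} (h1 : Prime Q₁) (h2 : Prime Q₂) (hne : Q₁ ≠ Q₂)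
    (hn1 : absNorm Q₁ = p) (hn2 : absNorm Q₂ = p)
    (hsp : span {(p : 𝓞 K)} = Q₁ * Q₂) (a : ℕ) :
    {I : Ideal (𝓞 K) | I ≠ ⊥ ∧ absNorm I = p ^ a}.ncard = a + 1 := by
  classical
  have hkey : ∀ i j : ℕ, i < j → j ≤ a → Q₁ ^ i * Q₂ ^ (a - i) ≠ Q₁ ^ j * Q₂ ^ (a - j) := by
    intro i j hlt hja hij
    have hij' : Q₁ ^ i * Q₂ ^ (a - i) = Q₁ ^ i * (Q₁ ^ (j - i) * Q₂ ^ (a - j)) := by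
      rw [hij, ← mul_assoc, ← pow_add]
      congr 2
      omega
    have hcancel : Q₂ ^ (a - i) = Q₁ ^ (j - i) * Q₂ ^ (a - j) :=
      mul_left_cancel₀ (pow_ne_zero i h1.ne_zero) hij'
    have hdvd : Q₁ ∣ Q₂ ^ (a - i) := by
      rw [hcancel]
      exact Dvd.dvd.mul_right (dvd_pow_self Q₁ (by omega)) _
    have : Q₁ ∣ Q₂ := h1.dvd_of_dvd_pow hdvd
    exact hne ((prime_dvd_prime_iff_eq h1 h2).mp this)
  have hinj : Set.InjOn (fun i => Q₁ ^ i * Q₂ ^ (a - i)) (Finset.range (a + 1)) := by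
    rintro i hi j hj (hij : Q₁ ^ i * Q₂ ^ (a - i) = Q₁ ^ j * Q₂ ^ (a - j))
    simp only [Finset.coe_range, Set.mem_Iio] at hi hj
    rcases lt_trichotomy i j with h | h | h
    · exact absurd hij (hkey i j h (by omega))
    · exact h
    · exact absurd hij.symm (hkey j i h (by omega))
  have hset : {I : Ideal (𝓞 K) | I ≠ ⊥ ∧ absNorm I = p ^ a} =
      ((Finset.range (a + 1)).image (fun i => Q₁ ^ i * Q₂ ^ (a - i)) : Finset (Ideal (𝓞 K))) := by
    ext I
    simp only [Set.mem_setOf_eq, Finset.coe_image, Set.mem_image, Finset.mem_coe,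
      Finset.mem_range]
    constructor
    · rintro ⟨hIb, hIn⟩
      have hdvd : I ∣ Q₁ ^ a * Q₂ ^ a := by
        rw [← mul_pow, ← hsp]
        exact qf_mem_dvd_pow hIn
      obtain ⟨A, B, hA, hB, rfl⟩ := exists_dvd_and_dvd_of_dvd_mul hdvd
      obtain ⟨i, hi, hAi⟩ := (dvd_prime_pow h1 a).mp hA
      obtain ⟨j, hj, hBj⟩ := (dvd_prime_pow h2 a).mp hB
      rw [associated_iff_eq] at hAi hBj
      subst hAi hBj
      have hsum : i + j = a := by
        rw [qf_absNorm_mul, qf_norm_pow, qf_norm_pow, hn1, hn2, ← pow_add] at hIn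
        exact Nat.pow_right_injective hp.two_le hIn
      exact ⟨i, by omega, by rw [show a - i = j by omega]⟩
    · rintro ⟨i, hi, rfl⟩
      refine ⟨?_, ?_⟩
      · rw [← Submodule.zero_eq_bot]
        exact mul_ne_zero (pow_ne_zero _ h1.ne_zero) (pow_ne_zero _ h2.ne_zero)
      · rw [qf_absNorm_mul, qf_norm_pow, qf_norm_pow, hn1, hn2, ← pow_add]
        congr 1
        omega
  rw [hset, Set.ncard_coe_finset, Finset.card_image_of_injOn hinj, Finset.card_range]

end Helpers2

section Helpers3

variable {K : Type} [Field K] [NumberField K]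

private lemma qf_coprime_ideals {a b : ℕ} (hab : Nat.Coprime a b)
    {A B : Ideal (𝓞 K)} (hA : absNorm A = a) (hB : absNorm B = b) : IsCoprime A B := by
  have hAd : A ∣ span {(a : 𝓞 K)} := qf_mem_dvd hA
  have hBd : B ∣ span {(b : 𝓞 K)} := qf_mem_dvd hB
  have hbase : IsCoprime (span {(a : 𝓞 K)}) (span {(b : 𝓞 K)}) := by
    rw [Ideal.isCoprime_span_singleton_iff]
    have := (Nat.isCoprime_iff_coprime.mpr hab).map (algebraMap ℤ (𝓞 K))
    simpa using this
  exact (hbase.of_isCoprime_of_dvd_left hAd).of_isCoprime_of_dvd_right hBd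

private lemma qf_mult (hrank : Module.finrank ℚ K = 2)
    {a b : ℕ} (ha : a ≠ 0) (hb : b ≠ 0) (hab : Nat.Coprime a b) :
    {I : Ideal (𝓞 K) | I ≠ ⊥ ∧ absNorm I = a * b}.ncard =
      {I : Ideal (𝓞 K) | I ≠ ⊥ ∧ absNorm I = a}.ncard *
      {I : Ideal (𝓞 K) | I ≠ ⊥ ∧ absNorm I = b}.ncard := by
  set Sa := {I : Ideal (𝓞 K) | I ≠ ⊥ ∧ absNorm I = a} with hSa
  set Sb := {I : Ideal (𝓞 K) | I ≠ ⊥ ∧ absNorm I = b} with hSb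
  set Sab := {I : Ideal (𝓞 K) | I ≠ ⊥ ∧ absNorm I = a * b} with hSab
  have hbij : Set.BijOn (fun x : Ideal (𝓞 K) × Ideal (𝓞 K) => x.1 * x.2) (Sa ×ˢ Sb) Sab := by
    refine ⟨?_, ?_, ?_⟩
    · rintro ⟨A, B⟩ ⟨⟨hAb, hAn⟩, ⟨hBb, hBn⟩⟩
      refine ⟨?_, by rw [qf_absNorm_mul, hAn, hBn]⟩
      rw [← Submodule.zero_eq_bot] at *
      exact mul_ne_zero hAb hBb
    · rintro ⟨A, B⟩ ⟨⟨hAb, hAn⟩, ⟨hBb, hBn⟩⟩ ⟨A', B'⟩ ⟨⟨hAb', hAn'⟩, ⟨hBb', hBn'⟩⟩ heq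
      simp only [Prod.mk.injEq] at *
      have hco : IsCoprime A B' := qf_coprime_ideals hab hAn hBn'
      have hco' : IsCoprime A' B := qf_coprime_ideals hab hAn' hBn
      have h1 : A ∣ A' := hco.dvd_of_dvd_mul_right
        (Dvd.intro_left B (by rw [mul_comm B A]; exact heq))
      have h2 : A' ∣ A := hco'.dvd_of_dvd_mul_right
        (Dvd.intro_left B' (by rw [mul_comm B' A']; exact heq.symm))
      have hAA : A = A' := le_antisymm (Ideal.dvd_iff_le.mp h2) (Ideal.dvd_iff_le.mp h1)
      subst hAA
      refine ⟨rfl, ?_⟩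
      rw [← Submodule.zero_eq_bot] at hAb
      exact mul_left_cancel₀ hAb heq
    · rintro I ⟨hIb, hIn⟩
      have hdvd : I ∣ span {(a : 𝓞 K)} * span {(b : 𝓞 K)} := by
        rw [Ideal.span_singleton_mul_span_singleton]
        exact_mod_cast qf_mem_dvd (n := a * b) (by exact_mod_cast hIn)
      obtain ⟨A, B, hA, hB, rfl⟩ := exists_dvd_and_dvd_of_dvd_mul hdvd
      have hprod : absNorm A * absNorm B = a * b := by rw [← qf_absNorm_mul]; exact hIn
      have hnA : absNorm A ∣ a := by
        refine (Nat.Coprime.dvd_of_dvd_mul_right ?_ ⟨absNorm B, hprod.symm⟩)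
        have h2 : absNorm A ∣ a ^ 2 := by
          have := qf_absNorm_dvd hA; rwa [qf_norm_span_nat hrank] at this
        -- coprimality of absNorm A with b
        exact Nat.Coprime.coprime_dvd_left h2 (Nat.Coprime.pow_left 2 hab)
      have hnB : absNorm B ∣ b := by
        refine (Nat.Coprime.dvd_of_dvd_mul_left ?_ ⟨absNorm A, by rw [mul_comm] at hprod; exact hprod.symm⟩)
        have h2 : absNorm B ∣ b ^ 2 := by
          have := qf_absNorm_dvd hB; rwa [qf_norm_span_nat hrank] at this
        exact Nat.Coprime.coprime_dvd_left h2 (Nat.Coprime.pow_left 2 hab.symm)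
      have hAa : absNorm A = a := by
        obtain ⟨c, hc⟩ := hnA
        obtain ⟨d, hd⟩ := hnB
        have hA0 : absNorm A ≠ 0 := fun h0 => by simp [h0, ha, hb] at hprod
        have hB0 : absNorm B ≠ 0 := fun h0 => by simp [h0, ha, hb] at hprod
        have hmul : (absNorm A * absNorm B) * (c * d) = (absNorm A * absNorm B) * 1 := by
          rw [mul_one]
          calc (absNorm A * absNorm B) * (c * d)
              = (absNorm A * c) * (absNorm B * d) := by ring
            _ = a * b := by rw [← hc, ← hd]
            _ = absNorm A * absNorm B := hprod.symm
        have hcd : c * d = 1 := Nat.eq_of_mul_eq_mul_left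
          (Nat.pos_of_ne_zero (mul_ne_zero hA0 hB0)) hmul
        have hc1 : c = 1 := Nat.dvd_one.mp ⟨d, hcd.symm⟩
        rw [hc, hc1, mul_one]
      have hBb2 : absNorm B = b := by
        have hB0 : absNorm B ≠ 0 := fun h0 => by simp [h0, ha, hb] at hprod
        have := hprod
        rw [hAa] at this
        exact Nat.eq_of_mul_eq_mul_left (Nat.pos_of_ne_zero ha) this
      have hAB0 : A * B ≠ ⊥ := hIb
      have hA0 : A ≠ ⊥ := by
        rw [← Submodule.zero_eq_bot] at *
        exact left_ne_zero_of_mul hAB0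
      have hB0 : B ≠ ⊥ := by
        rw [← Submodule.zero_eq_bot] at *
        exact right_ne_zero_of_mul hAB0
      exact ⟨(A, B), ⟨⟨hA0, hAa⟩, ⟨hB0, hBb2⟩⟩, rfl⟩
  rw [← Nat.card_coe_set_eq, ← Nat.card_coe_set_eq, ← Nat.card_coe_set_eq]
  rw [← Nat.card_congr (Set.BijOn.equiv _ hbij)]
  rw [Nat.card_congr (Equiv.Set.prod Sa Sb), Nat.card_prod]

end Helpers3

section Helpers4

variable {K : Type} [Field K] [NumberField K]

private lemma qf_inert_not_split {p : ℕ} (hp : p.Prime)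
    (hsp : (span {(p : 𝓞 K)}).IsPrime) :
    ¬ ∃ P Q : Ideal (𝓞 K), P.IsPrime ∧ Q.IsPrime ∧ P ≠ Q ∧ span {(p : 𝓞 K)} = P * Q := by
  rintro ⟨P, Q, hP, hQ, hne, hPQ⟩
  have hprime : Prime (span {(p : 𝓞 K)}) := Ideal.prime_of_isPrime (qf_span_p_ne_bot hp) hsp
  rcases hprime.irreducible.isUnit_or_isUnit hPQ with h | h
  · exact hP.ne_top (Ideal.isUnit_iff.mp h)
  · exact hQ.ne_top (Ideal.isUnit_iff.mp h)

private lemma qf_ram_not_split {p : ℕ} (hp : p.Prime) {Q₁ : Ideal (𝓞 K)} (h1 : Prime Q₁)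
    (hsp : span {(p : 𝓞 K)} = Q₁ * Q₁) :
    ¬ ∃ P Q : Ideal (𝓞 K), P.IsPrime ∧ Q.IsPrime ∧ P ≠ Q ∧ span {(p : 𝓞 K)} = P * Q := by
  rintro ⟨P, Q, hP, hQ, hne, hPQ⟩
  have hQQ : Q₁ * Q₁ = P * Q := by rw [← hsp, hPQ]
  have hPb : P ≠ ⊥ := by
    rintro rfl
    exact qf_span_p_ne_bot hp (by rw [hPQ, Ideal.bot_mul])
  have hQb : Q ≠ ⊥ := by
    rintro rfl
    exact qf_span_p_ne_bot hp (by rw [hPQ, Ideal.mul_bot])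
  have hPp : Prime P := Ideal.prime_of_isPrime hPb hP
  have hQp : Prime Q := Ideal.prime_of_isPrime hQb hQ
  have hPd : P ∣ Q₁ := by
    refine hPp.dvd_of_dvd_pow (n := 2) ?_
    rw [pow_two, hQQ]
    exact ⟨Q, rfl⟩
  have hQd : Q ∣ Q₁ := by
    refine hQp.dvd_of_dvd_pow (n := 2) ?_
    rw [pow_two, hQQ]
    exact ⟨P, mul_comm P Q⟩
  have e1 : P = Q₁ := (prime_dvd_prime_iff_eq hPp h1).mp hPd
  have e2 : Q = Q₁ := (prime_dvd_prime_iff_eq hQp h1).mp hQd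
  exact hne (e1.trans e2.symm)

private lemma qf_ram_not_inert {p : ℕ} (hp : p.Prime) {Q₁ : Ideal (𝓞 K)} (h1 : Prime Q₁)
    (hsp : span {(p : 𝓞 K)} = Q₁ * Q₁) : ¬ (span {(p : 𝓞 K)}).IsPrime := by
  intro hsp'
  have hprime : Prime (span {(p : 𝓞 K)}) := Ideal.prime_of_isPrime (qf_span_p_ne_bot hp) hsp'
  rcases hprime.irreducible.isUnit_or_isUnit hsp with h | h <;> exact h1.not_unit h

open Classical in
private lemma qf_count_pp (hrank : Module.finrank ℚ K = 2)
    (Inert Split : ℕ → Prop)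
    (hInert : ∀ p : ℕ, Inert p ↔ (Ideal.span {(p : 𝓞 K)}).IsPrime)
    (hSplit : ∀ p : ℕ, Split p ↔ ∃ P Q : Ideal (𝓞 K), P.IsPrime ∧ Q.IsPrime ∧ P ≠ Q ∧
      Ideal.span {(p : 𝓞 K)} = P * Q)
    {p : ℕ} (hp : p.Prime) (a : ℕ) :
    {I : Ideal (𝓞 K) | I ≠ ⊥ ∧ absNorm I = p ^ a}.ncard =
      if Split p then a + 1 else if Inert p then (if Even a then 1 else 0) else 1 := by
  rcases qf_classify hrank hp with hsp | ⟨Q₁, Q₂, h1, h2, hn1, hn2, hsp⟩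
  · rw [if_neg (fun hs => qf_inert_not_split hp hsp ((hSplit p).mp hs)),
      if_pos ((hInert p).mpr hsp)]
    exact qf_count_inert hrank hp hsp a
  · by_cases hne : Q₁ = Q₂
    · subst hne
      rw [if_neg (fun hs => qf_ram_not_split hp h1 hsp ((hSplit p).mp hs)),
        if_neg (fun hi => qf_ram_not_inert hp h1 hsp ((hInert p).mp hi))]
      exact qf_count_ramified hrank hp h1 hn1 (by rw [pow_two]; exact hsp) a
    · rw [if_pos ((hSplit p).mpr ⟨Q₁, Q₂, Ideal.isPrime_of_prime h1,
        Ideal.isPrime_of_prime h2, hne, hsp⟩)]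
      exact qf_count_split hrank hp h1 h2 hne hn1 hn2 hsp a

end Helpers4

open Classical in
/-- Counting ideals of given absolute norm in the ring of integers of the real quadratic field
`K = ℚ(√D)` (`D ≥ 2` squarefree): if some inert prime `p` divides `m` with `v_p(m)` odd there
is no nonzero ideal of norm `|m|`; otherwise their number is `∏_{p split, p ∣ m} (v_p(m)+1)`. -/
theorem stmt_9 (D : ℤ) (hD : 2 ≤ D) (hsf : Squarefree D)
    (K : Type) [Field K] [NumberField K] (hrank : Module.finrank ℚ K = 2)
    (s : K) (hs : s ^ 2 = (D : K))
    (m : ℤ) (hm : m ≠ 0)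
    (Inert Split : ℕ → Prop)
    (hInert : ∀ p : ℕ, Inert p ↔ (Ideal.span {(p : 𝓞 K)}).IsPrime)
    (hSplit : ∀ p : ℕ, Split p ↔ ∃ P Q : Ideal (𝓞 K), P.IsPrime ∧ Q.IsPrime ∧ P ≠ Q ∧
      Ideal.span {(p : 𝓞 K)} = P * Q) :
    ((∃ p : ℕ, p.Prime ∧ Inert p ∧ (p : ℤ) ∣ m ∧ Odd (m.natAbs.factorization p)) →
      {I : Ideal (𝓞 K) | I ≠ ⊥ ∧ Ideal.absNorm I = m.natAbs} = ∅) ∧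
    (¬ (∃ p : ℕ, p.Prime ∧ Inert p ∧ (p : ℤ) ∣ m ∧ Odd (m.natAbs.factorization p)) →
      {I : Ideal (𝓞 K) | I ≠ ⊥ ∧ Ideal.absNorm I = m.natAbs}.ncard =
        ∏ p ∈ m.natAbs.primeFactors.filter Split, (m.natAbs.factorization p + 1)) := by
  have hn : m.natAbs ≠ 0 := Int.natAbs_ne_zero.mpr hm
  set n := m.natAbs with hndef
  set f : ℕ → ℕ :=
    fun t => if t = 0 then 0 else {I : Ideal (𝓞 K) | I ≠ ⊥ ∧ absNorm I = t}.ncard with hf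
  have hmult : ∀ x y : ℕ, Nat.Coprime x y → f (x * y) = f x * f y := by
    intro x y hxy
    rcases eq_or_ne x 0 with rfl | hx
    · simp [hf]
    rcases eq_or_ne y 0 with rfl | hy
    · simp [hf]
    simp only [hf, if_neg hx, if_neg hy, if_neg (mul_ne_zero hx hy)]
    exact qf_mult hrank hx hy hxy
  have hf1 : f 1 = 1 := by
    have hset : {I : Ideal (𝓞 K) | I ≠ ⊥ ∧ absNorm I = 1} = {⊤} := by
      ext I
      simp only [Set.mem_setOf_eq, Set.mem_singleton_iff, absNorm_eq_one_iff]
      exact ⟨fun h => h.2, fun h => ⟨h ▸ top_ne_bot, h⟩⟩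
    simp only [hf]
    rw [if_neg one_ne_zero, hset, Set.ncard_singleton]
  have hprod := Nat.multiplicative_factorization f hmult hf1 hn
  rw [Nat.prod_factorization_eq_prod_primeFactors] at hprod
  have hval : ∀ p ∈ n.primeFactors, f (p ^ n.factorization p) =
      if Split p then n.factorization p + 1
      else if Inert p then (if Even (n.factorization p) then 1 else 0) else 1 := by
    intro p hp
    have hpp := Nat.prime_of_mem_primeFactors hp
    have hpe : p ^ n.factorization p ≠ 0 := pow_ne_zero _ hpp.ne_zero
    simp only [hf, if_neg hpe]
    exact qf_count_pp hrank Inert Split hInert hSplit hpp _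
  have hfn : f n = {I : Ideal (𝓞 K) | I ≠ ⊥ ∧ absNorm I = n}.ncard := by
    simp [hf, hn]
  constructor
  · rintro ⟨p, hpp, hpI, hpd, hpodd⟩
    have hpdn : p ∣ n := by
      rw [hndef, ← Int.natAbs_natCast p]
      exact Int.natAbs_dvd_natAbs.mpr hpd
    have hpmem : p ∈ n.primeFactors := Nat.mem_primeFactors.mpr ⟨hpp, hpdn, hn⟩
    rw [← Set.ncard_eq_zero (qf_S_finite n)]
    rw [← hfn, hprod]
    refine Finset.prod_eq_zero hpmem ?_
    rw [hval p hpmem,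
      if_neg (fun hs => qf_inert_not_split hpp ((hInert p).mp hpI) ((hSplit p).mp hs)),
      if_pos hpI, if_neg (Nat.not_even_iff_odd.mpr hpodd)]
  · intro hno
    rw [← hfn, hprod, Finset.prod_filter]
    refine Finset.prod_congr rfl fun p hp => ?_
    rw [hval p hp]
    by_cases hsplit : Split p
    · rw [if_pos hsplit, if_pos hsplit]
    · rw [if_neg hsplit, if_neg hsplit]
      by_cases hi : Inert p
      · rw [if_pos hi, if_pos]
        by_contra hodd
        have hpdm : (p : ℤ) ∣ m :=
          Int.dvd_natAbs.mp (Int.natCast_dvd_natCast.mpr (Nat.dvd_of_mem_primeFactors hp))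
        exact hno ⟨p, Nat.prime_of_mem_primeFactors hp, hi, hpdm,
          Nat.not_even_iff_odd.mp hodd⟩
      · rw [if_neg hi]
end

section
/- Let a < b be coprime positive integers, and write a = A′·a′², b = B′·b′² with A′, B′ squarefree. Let c be an integer and (x,y) ∈ ℤ² with a·x² − b·y² = c. Let (u,v) ∈ ℤ² satisfy u² − A′B′·v² = 1 and a′·b′ ∣ v, and set w = a·v/(a′·b′), x′ = u·x + (b·v/(a′·b′))·y and y′ = w·x + u·y (these are integers). Then a·x′² − b·y′² = c and gcd(x′,y′) = gcd(x,y). -/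
/-- Action of a solution of the Pell equation `u² − A′B′·v² = 1` (with `a′b′ ∣ v`) on a
solution of `a·x² − b·y² = c`: with `w = a·v/(a′b′)`, `x′ = u·x + (b·v/(a′b′))·y` and
`y′ = w·x + u·y` one has `a·x′² − b·y′² = c` and `gcd(x′,y′) = gcd(x,y)`. -/
theorem stmt_11 (a b A' a' B' b' : ℕ) (ha : 0 < a) (hab : a < b) (hcop : Nat.Coprime a b)
    (hA' : Squarefree A') (hB' : Squarefree B')
    (hafac : a = A' * a' ^ 2) (hbfac : b = B' * b' ^ 2)
    (c : ℤ) (x y u v : ℤ)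
    (hxy : (a : ℤ) * x ^ 2 - (b : ℤ) * y ^ 2 = c)
    (huv : u ^ 2 - ((A' : ℤ) * (B' : ℤ)) * v ^ 2 = 1)
    (hdvd : ((a' * b' : ℕ) : ℤ) ∣ v) :
    (a : ℤ) * (u * x + ((b : ℤ) * v / ((a' * b' : ℕ) : ℤ)) * y) ^ 2 -
        (b : ℤ) * (((a : ℤ) * v / ((a' * b' : ℕ) : ℤ)) * x + u * y) ^ 2 = c ∧
      Int.gcd (u * x + ((b : ℤ) * v / ((a' * b' : ℕ) : ℤ)) * y)
        (((a : ℤ) * v / ((a' * b' : ℕ) : ℤ)) * x + u * y) = Int.gcd x y := by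
  obtain ⟨t, rfl⟩ := hdvd
  have ha' : a' ≠ 0 := by rintro rfl; rw [hafac] at ha; simp at ha
  have hb' : b' ≠ 0 := by rintro rfl; rw [hbfac] at hab; simp at hab
  have hne : ((a' * b' : ℕ) : ℤ) ≠ 0 := by
    exact_mod_cast Nat.mul_ne_zero ha' hb'
  have hP : (b : ℤ) * (((a' * b' : ℕ) : ℤ) * t) / ((a' * b' : ℕ) : ℤ)
      = (B' : ℤ) * (b' : ℤ) ^ 2 * t := by
    rw [hbfac, show ((B' * b' ^ 2 : ℕ) : ℤ) * (((a' * b' : ℕ) : ℤ) * t)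
      = ((a' * b' : ℕ) : ℤ) * ((B' : ℤ) * (b' : ℤ) ^ 2 * t) by push_cast; ring,
      Int.mul_ediv_cancel_left _ hne]
  have hQ : (a : ℤ) * (((a' * b' : ℕ) : ℤ) * t) / ((a' * b' : ℕ) : ℤ)
      = (A' : ℤ) * (a' : ℤ) ^ 2 * t := by
    rw [hafac, show ((A' * a' ^ 2 : ℕ) : ℤ) * (((a' * b' : ℕ) : ℤ) * t)
      = ((a' * b' : ℕ) : ℤ) * ((A' : ℤ) * (a' : ℤ) ^ 2 * t) by push_cast; ring,
      Int.mul_ediv_cancel_left _ hne]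
  rw [hP, hQ]
  have hac : (a : ℤ) = (A' : ℤ) * (a' : ℤ) ^ 2 := by exact_mod_cast hafac
  have hbc : (b : ℤ) = (B' : ℤ) * (b' : ℤ) ^ 2 := by exact_mod_cast hbfac
  have huv' : u ^ 2 - (A' : ℤ) * (B' : ℤ) * ((a' : ℤ) * (b' : ℤ) * t) ^ 2 = 1 := by
    rw [← huv]; push_cast; ring
  set X := u * x + (B' : ℤ) * (b' : ℤ) ^ 2 * t * y with hX
  set Y := (A' : ℤ) * (a' : ℤ) ^ 2 * t * x + u * y with hY
  constructor
  · rw [hac, hbc]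
    rw [hac, hbc] at hxy
    linear_combination ((A' : ℤ) * (a' : ℤ) ^ 2 * x ^ 2 - (B' : ℤ) * (b' : ℤ) ^ 2 * y ^ 2) * huv' + hxy
  · have hx : x = u * X - (B' : ℤ) * (b' : ℤ) ^ 2 * t * Y := by
      rw [hX, hY]; linear_combination (-x) * huv'
    have hy : y = -((A' : ℤ) * (a' : ℤ) ^ 2 * t) * X + u * Y := by
      rw [hX, hY]; linear_combination (-y) * huv'
    apply Nat.dvd_antisymm
    · rw [← Int.natCast_dvd_natCast]
      apply Int.dvd_coe_gcd
      · rw [hx]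
        exact Dvd.dvd.sub (Dvd.dvd.mul_left (Int.gcd_dvd_left _ _) _)
          (Dvd.dvd.mul_left (Int.gcd_dvd_right _ _) _)
      · rw [hy]
        exact Dvd.dvd.add (Dvd.dvd.mul_left (Int.gcd_dvd_left _ _) _)
          (Dvd.dvd.mul_left (Int.gcd_dvd_right _ _) _)
    · rw [← Int.natCast_dvd_natCast]
      apply Int.dvd_coe_gcd
      · exact Dvd.dvd.add (Dvd.dvd.mul_left (Int.gcd_dvd_left _ _) _)
          (Dvd.dvd.mul_left (Int.gcd_dvd_right _ _) _)
      · exact Dvd.dvd.add (Dvd.dvd.mul_left (Int.gcd_dvd_left _ _) _)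
          (Dvd.dvd.mul_left (Int.gcd_dvd_right _ _) _)
end

section
/- Let D ≥ 2 be a squarefree integer and m a nonzero integer. Suppose z = x + y√D and z′ = x′ + y′√D in ℤ[√D] both have norm m (i.e. x² − D·y² = x′² − D·y′² = m) and z′ = z·u for some u ∈ ℤ[√D] of norm 1. Then gcd(x,y) = gcd(x′,y′). -/
lemma gcd_dvd_of_mul (D : ℤ) (z u : ℤ√D) :
    (Int.gcd z.re z.im : ℤ) ∣ Int.gcd (z * u).re (z * u).im := by
  apply Int.dvd_coe_gcd
  · simp only [Zsqrtd.re_mul]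
    exact dvd_add ((Int.gcd_dvd_left z.re z.im).mul_right _)
      ((((Int.gcd_dvd_right z.re z.im : (Int.gcd z.re z.im : ℤ) ∣ z.im)).mul_left D).mul_right _)
  · simp only [Zsqrtd.im_mul]
    exact dvd_add ((Int.gcd_dvd_left z.re z.im).mul_right _)
      ((Int.gcd_dvd_right z.re z.im).mul_right _)

/-- In `ℤ[√D]` (`D ≥ 2` squarefree), if `z` and `z′` both have norm `m ≠ 0` and
`z′ = z·u` for some unit `u` of norm `1`, then the gcd of the coordinates of `z`
equals the gcd of the coordinates of `z′`. -/
theorem stmt_12 (D : ℤ) (hD : 2 ≤ D) (hsf : Squarefree D) (m : ℤ) (hm : m ≠ 0)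
    (z z' u : ℤ√D) (hz : z.norm = m) (hz' : z'.norm = m) (hu : u.norm = 1)
    (hmul : z' = z * u) :
    Int.gcd z.re z.im = Int.gcd z'.re z'.im := by
  have hz2 : z = z' * star u := by
    rw [hmul, mul_assoc, ← Zsqrtd.norm_eq_mul_conj, hu]
    simp
  apply Nat.dvd_antisymm
  · have := gcd_dvd_of_mul D z u
    rw [← hmul] at this
    exact_mod_cast this
  · have := gcd_dvd_of_mul D z' (star u)
    rw [← hz2] at this
    exact_mod_cast this
end

section
/- Let x, y, s, t be positive integers with gcd(x,y) = gcd(s,t) = 1, and suppose x ≠ y or s ≠ t. Then H(x,y,s,t)·d(x,y,s,t)² ≥ 1, where H(x,y,s,t) = max(x²st, y²st, t²xy, s²xy)/(gcd(x,s)·gcd(x,t)·gcd(y,s)·gcd(y,t)) and d(x,y,s,t) = max(|t/s − 1|, |y/x − 1|). (This is the key inequality showing that the approximation constant of the point Q = [1:1]×[1:1] on the toric surface Y₄ equals 2.) -/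
private lemma key_aux (N D E c d : ℝ) (hc : 0 < c) (hD : 0 < D) (hDE : D ≤ E)
    (hN : c ^ 2 * E ≤ N) (hd : 1 / c ≤ d) : 1 ≤ N / D * d ^ 2 := by
  have hE : 0 < E := lt_of_lt_of_le hD hDE
  have h1 : c ^ 2 ≤ N / D := by
    rw [le_div_iff₀ hD]
    calc c ^ 2 * D ≤ c ^ 2 * E := by nlinarith
    _ ≤ N := hN
  have hd0 : (0:ℝ) < 1 / c := by positivity
  have h2 : (1 / c) ^ 2 ≤ d ^ 2 := pow_le_pow_left₀ hd0.le hd 2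
  have h3 : c ^ 2 * (1 / c) ^ 2 ≤ N / D * d ^ 2 :=
    mul_le_mul h1 h2 (by positivity) (le_trans (by positivity) h1)
  calc (1:ℝ) = c ^ 2 * (1 / c) ^ 2 := by field_simp
  _ ≤ _ := h3

private lemma dist_aux (a b : ℕ) (ha : 0 < a) (hne : b ≠ a) :
    1 / (a : ℝ) ≤ |(b : ℝ) / a - 1| := by
  have ha' : (0:ℝ) < a := by exact_mod_cast ha
  have h1 : (1:ℝ) ≤ |(b : ℝ) - a| := by
    have hz : ((b:ℤ) - a) ≠ 0 := sub_ne_zero.mpr (by exact_mod_cast hne)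
    have := Int.one_le_abs hz
    calc (1:ℝ) ≤ |(((b:ℤ) - a : ℤ) : ℝ)| := by exact_mod_cast this
    _ = |(b : ℝ) - a| := by push_cast; ring_nf
  have heq : (b : ℝ) / a - 1 = ((b : ℝ) - a) / a := by field_simp
  rw [heq, abs_div, abs_of_pos ha']
  gcongr

/-- Liouville-type inequality on the toric surface `Y₄` (blow-up of `ℙ¹×ℙ¹` at the four
invariant points): for a rational point `[x:y]×[s:t] ≠ Q = [1:1]×[1:1]` with primitive
coordinates, the anticanonical height times the square of the distance to `Q` is `≥ 1`;
hence the approximation constant of `Q` on `Y₄` is `2`. -/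
theorem stmt_13 (x y s t : ℕ) (hx : 0 < x) (hy : 0 < y) (hs : 0 < s) (ht : 0 < t)
    (hxy : Nat.Coprime x y) (hst : Nat.Coprime s t) (hne : x ≠ y ∨ s ≠ t) :
    (max (max ((x : ℝ) ^ 2 * s * t) ((y : ℝ) ^ 2 * s * t))
          (max ((t : ℝ) ^ 2 * x * y) ((s : ℝ) ^ 2 * x * y)) /
        ((Nat.gcd x s : ℝ) * (Nat.gcd x t : ℝ) * (Nat.gcd y s : ℝ) * (Nat.gcd y t : ℝ))) *
      (max |(t : ℝ) / s - 1| |(y : ℝ) / x - 1|) ^ 2 ≥ 1 := by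
  set N := max (max ((x : ℝ) ^ 2 * s * t) ((y : ℝ) ^ 2 * s * t))
          (max ((t : ℝ) ^ 2 * x * y) ((s : ℝ) ^ 2 * x * y)) with hN
  set D := ((Nat.gcd x s : ℝ) * (Nat.gcd x t : ℝ) * (Nat.gcd y s : ℝ) * (Nat.gcd y t : ℝ)) with hD
  have hgxs : 0 < Nat.gcd x s := Nat.gcd_pos_of_pos_left _ hx
  have hgxt : 0 < Nat.gcd x t := Nat.gcd_pos_of_pos_left _ hx
  have hgys : 0 < Nat.gcd y s := Nat.gcd_pos_of_pos_left _ hy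
  have hgyt : 0 < Nat.gcd y t := Nat.gcd_pos_of_pos_left _ hy
  have hDpos : 0 < D := by rw [hD]; positivity
  -- gcd x s * gcd x t ∣ x
  have hdx : Nat.gcd x s * Nat.gcd x t ∣ x := by
    refine Nat.Coprime.mul_dvd_of_dvd_of_dvd ?_ (Nat.gcd_dvd_left _ _) (Nat.gcd_dvd_left _ _)
    exact Nat.Coprime.coprime_dvd_right (Nat.gcd_dvd_right _ _)
      (Nat.Coprime.coprime_dvd_left (Nat.gcd_dvd_right _ _) hst)
  have hdy : Nat.gcd y s * Nat.gcd y t ∣ y := by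
    refine Nat.Coprime.mul_dvd_of_dvd_of_dvd ?_ (Nat.gcd_dvd_left _ _) (Nat.gcd_dvd_left _ _)
    exact Nat.Coprime.coprime_dvd_right (Nat.gcd_dvd_right _ _)
      (Nat.Coprime.coprime_dvd_left (Nat.gcd_dvd_right _ _) hst)
  have hds : Nat.gcd x s * Nat.gcd y s ∣ s := by
    refine Nat.Coprime.mul_dvd_of_dvd_of_dvd ?_ (Nat.gcd_dvd_right _ _) (Nat.gcd_dvd_right _ _)
    exact Nat.Coprime.coprime_dvd_right (Nat.gcd_dvd_left _ _)
      (Nat.Coprime.coprime_dvd_left (Nat.gcd_dvd_left _ _) hxy)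
  have hdt : Nat.gcd x t * Nat.gcd y t ∣ t := by
    refine Nat.Coprime.mul_dvd_of_dvd_of_dvd ?_ (Nat.gcd_dvd_right _ _) (Nat.gcd_dvd_right _ _)
    exact Nat.Coprime.coprime_dvd_right (Nat.gcd_dvd_left _ _)
      (Nat.Coprime.coprime_dvd_left (Nat.gcd_dvd_left _ _) hxy)
  have hDxy : D ≤ (x : ℝ) * y := by
    have h1 := Nat.le_of_dvd hx hdx
    have h2 := Nat.le_of_dvd hy hdy
    have := Nat.mul_le_mul h1 h2
    have : ((Nat.gcd x s * Nat.gcd x t) * (Nat.gcd y s * Nat.gcd y t) : ℝ) ≤ (x : ℝ) * y := by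
      exact_mod_cast this
    rw [hD]; push_cast at this ⊢; nlinarith
  have hDst : D ≤ (s : ℝ) * t := by
    have h1 := Nat.le_of_dvd hs hds
    have h2 := Nat.le_of_dvd ht hdt
    have := Nat.mul_le_mul h1 h2
    have : ((Nat.gcd x s * Nat.gcd y s) * (Nat.gcd x t * Nat.gcd y t) : ℝ) ≤ (s : ℝ) * t := by
      exact_mod_cast this
    rw [hD]; push_cast at this ⊢; nlinarith
  rw [ge_iff_le]
  rcases hne with hne | hne
  ·
    -- d ≥ |y/x - 1| ≥ 1/x, N ≥ x^2 * s * t, D ≤ s*t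
    have hd : 1 / (x : ℝ) ≤ max |(t : ℝ) / s - 1| |(y : ℝ) / x - 1| :=
      le_trans (dist_aux x y hx (fun h => hne h.symm)) (le_max_right _ _)
    refine key_aux N D ((s:ℝ)*t) (x:ℝ) _ (by exact_mod_cast hx) hDpos hDst ?_ hd
    calc (x:ℝ) ^ 2 * ((s:ℝ)*t) = (x:ℝ) ^ 2 * s * t := by ring
    _ ≤ N := le_trans (le_max_left _ _) (le_max_left _ _)
  · have hd : 1 / (s : ℝ) ≤ max |(t : ℝ) / s - 1| |(y : ℝ) / x - 1| :=
      le_trans (dist_aux s t hs (fun h => hne h.symm)) (le_max_left _ _)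
    refine key_aux N D ((x:ℝ)*y) (s:ℝ) _ (by exact_mod_cast hs) hDpos hDxy ?_ hd
    calc (s:ℝ) ^ 2 * ((x:ℝ)*y) = (s:ℝ) ^ 2 * x * y := by ring
    _ ≤ N := le_trans (le_max_right _ _) (le_max_right _ _)
end

section
/- For every ε > 0 there exist a constant C and B₀ ≥ 1 such that for all real B ≥ B₀, the number of quadruples (x,y,s,t) of positive integers with gcd(x,y) = gcd(s,t) = 1, t/s > y/x > 1, t/s − 1 ≤ ε·B^(−1/2), and H(x,y,s,t) ≤ B, is at most C. (Critical zoom of factor 2 at Q on Y₄: the number of approximants outside the four special curves stays bounded as B → ∞.) -/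
set_option maxHeartbeats 1000000


lemma aux_dvd {x s t : ℕ} (hst : Nat.Coprime s t) :
    Nat.gcd x s * Nat.gcd x t ∣ x :=
  Nat.Coprime.mul_dvd_of_dvd_of_dvd
    (Nat.Coprime.coprime_dvd_right (Nat.gcd_dvd_right x t)
      (Nat.Coprime.coprime_dvd_left (Nat.gcd_dvd_right x s) hst))
    (Nat.gcd_dvd_left x s) (Nat.gcd_dvd_left x t)

lemma extract (ε B : ℝ) (hε : 0 < ε) (hB : (ε + 1) ^ 2 ≤ B)
    (x y s t : ℕ) (hx0 : 0 < x) (hy0 : 0 < y) (hs0 : 0 < s) (ht0 : 0 < t)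
    (hxy : Nat.Coprime x y) (hst : Nat.Coprime s t)
    (h1 : (y : ℝ) / x > 1) (h2 : (t : ℝ) / s > (y : ℝ) / x)
    (h3 : (t : ℝ) / s - 1 ≤ ε * B ^ (-(1 / 2 : ℝ)))
    (h4 : (t : ℝ) ^ 2 * x * y /
        ((Nat.gcd x s : ℝ) * (Nat.gcd x t : ℝ) * (Nat.gcd y s : ℝ) * (Nat.gcd y t : ℝ)) ≤ B) :
    ∃ a b c e d u w : ℕ,
      0 < a ∧ 0 < b ∧ 0 < c ∧ 0 < e ∧ 1 ≤ w ∧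
      x = a * (Nat.gcd x s * Nat.gcd x t) ∧
      y = b * (Nat.gcd y s * Nat.gcd y t) ∧
      s = c * (Nat.gcd x s * Nat.gcd y s) ∧
      t = e * (Nat.gcd x t * Nat.gcd y t) ∧
      s + d = t ∧ x + u = y ∧
      b * e * Nat.gcd y t ^ 2 = w + a * c * Nat.gcd x s ^ 2 ∧
      w * Nat.gcd x t = d * b * Nat.gcd y t + u * c * Nat.gcd x s ∧
      w * Nat.gcd y s = u * e * Nat.gcd y t + d * a * Nat.gcd x s ∧
      (a : ℝ) ≤ (ε + 1) ^ 6 ∧ (b : ℝ) ≤ (ε + 1) ^ 6 ∧ (c : ℝ) ≤ (ε + 1) ^ 6 ∧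
      (e : ℝ) ≤ (ε + 1) ^ 6 ∧ (d : ℝ) ≤ (ε + 1) ^ 6 ∧ (u : ℝ) ≤ (ε + 1) ^ 6 ∧
      (w : ℝ) ≤ (ε + 1) ^ 6 ∧
      Real.sqrt (Real.sqrt B) / (2 * (ε + 1) ^ 5) ≤ (Nat.gcd x s : ℝ) ∧
      (Nat.gcd x s : ℝ) ≤ (ε + 1) ^ 3 * Real.sqrt (Real.sqrt B) ∧
      (Nat.gcd x s : ℝ) ≤ (ε + 1) ^ 6 * (Nat.gcd y t : ℝ) := by
  set g1 := Nat.gcd x s with hg1def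
  set g2 := Nat.gcd x t with hg2def
  set g3 := Nat.gcd y s with hg3def
  set g4 := Nat.gcd y t with hg4def
  set E := ε + 1 with hEdef
  have hE1 : (1 : ℝ) ≤ E := by rw [hEdef]; linarith
  have hE0 : (0 : ℝ) < E := by linarith
  have hεE : ε ≤ E := by rw [hEdef]; linarith
  -- divisibility
  have hdx : g1 * g2 ∣ x := aux_dvd hst
  have hdy : g3 * g4 ∣ y := aux_dvd hst
  have hds : g1 * g3 ∣ s := by
    have h := aux_dvd (x := s) hxy
    rwa [Nat.gcd_comm s x, Nat.gcd_comm s y] at h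
  have hdt : g2 * g4 ∣ t := by
    have h := aux_dvd (x := t) hxy
    rwa [Nat.gcd_comm t x, Nat.gcd_comm t y] at h
  obtain ⟨a, hxa⟩ : ∃ a, x = a * (g1 * g2) := ⟨x / (g1 * g2), (Nat.div_mul_cancel hdx).symm⟩
  obtain ⟨b, hyb⟩ : ∃ b, y = b * (g3 * g4) := ⟨y / (g3 * g4), (Nat.div_mul_cancel hdy).symm⟩
  obtain ⟨c, hsc⟩ : ∃ c, s = c * (g1 * g3) := ⟨s / (g1 * g3), (Nat.div_mul_cancel hds).symm⟩
  obtain ⟨e, hte⟩ : ∃ e, t = e * (g2 * g4) := ⟨t / (g2 * g4), (Nat.div_mul_cancel hdt).symm⟩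
  -- positivity
  have hg10 : 0 < g1 := Nat.gcd_pos_of_pos_left s hx0
  have hg20 : 0 < g2 := Nat.gcd_pos_of_pos_left t hx0
  have hg30 : 0 < g3 := Nat.gcd_pos_of_pos_left s hy0
  have hg40 : 0 < g4 := Nat.gcd_pos_of_pos_left t hy0
  have ha0 : 0 < a := by
    rcases Nat.eq_zero_or_pos a with h | h
    · subst h; simp at hxa; omega
    · exact h
  have hb0 : 0 < b := by
    rcases Nat.eq_zero_or_pos b with h | h
    · subst h; simp at hyb; omega
    · exact h
  have hc0 : 0 < c := by
    rcases Nat.eq_zero_or_pos c with h | h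
    · subst h; simp at hsc; omega
    · exact h
  have he0 : 0 < e := by
    rcases Nat.eq_zero_or_pos e with h | h
    · subst h; simp at hte; omega
    · exact h
  -- basic real facts
  have hB0 : (0 : ℝ) < B := lt_of_lt_of_le (by positivity) hB
  set σ := Real.sqrt B with hσdef
  have hσE : E ≤ σ := by
    rw [hσdef]
    exact (Real.le_sqrt hE0.le hB0.le).2 hB
  have hσ0 : (0 : ℝ) < σ := lt_of_lt_of_le hE0 hσE
  have hσ2 : σ ^ 2 = B := Real.sq_sqrt hB0.le
  have hδ : ε * B ^ (-(1 / 2 : ℝ)) = ε / σ := by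
    rw [hσdef, Real.rpow_neg hB0.le, ← Real.sqrt_eq_rpow, div_eq_mul_inv]
  rw [hδ] at h3
  have hxR : (0 : ℝ) < (x : ℝ) := by exact_mod_cast hx0
  have hyR : (0 : ℝ) < (y : ℝ) := by exact_mod_cast hy0
  have hsR : (0 : ℝ) < (s : ℝ) := by exact_mod_cast hs0
  have htR : (0 : ℝ) < (t : ℝ) := by exact_mod_cast ht0
  have hxyR : (x : ℝ) < y := (one_lt_div hxR).1 h1
  have hxylt : x < y := by exact_mod_cast hxyR
  have hcross : (y : ℝ) * s < t * x := (div_lt_div_iff₀ hxR hsR).1 h2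
  have hcrossN : y * s < t * x := by exact_mod_cast hcross
  have hstlt : s < t := by
    have h5 : (1 : ℝ) < (t : ℝ) / s := lt_trans h1 h2
    have := (one_lt_div hsR).1 h5
    exact_mod_cast this
  have hstR : (s : ℝ) ≤ t := by exact_mod_cast Nat.le_of_lt hstlt
  obtain ⟨d, hd1, hsd⟩ : ∃ d, 1 ≤ d ∧ s + d = t := ⟨t - s, by omega, by omega⟩
  obtain ⟨u, hu1, hxu⟩ : ∃ u, 1 ≤ u ∧ x + u = y := ⟨y - x, by omega, by omega⟩
  -- cast equalities
  have hxaR : (x : ℝ) = (a : ℝ) * ((g1 : ℝ) * g2) := by exact_mod_cast hxa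
  have hybR : (y : ℝ) = (b : ℝ) * ((g3 : ℝ) * g4) := by exact_mod_cast hyb
  have hscR : (s : ℝ) = (c : ℝ) * ((g1 : ℝ) * g3) := by exact_mod_cast hsc
  have hteR : (t : ℝ) = (e : ℝ) * ((g2 : ℝ) * g4) := by exact_mod_cast hte
  have hsdR : (s : ℝ) + d = t := by exact_mod_cast hsd
  have hxuR : (x : ℝ) + u = y := by exact_mod_cast hxu
  have haR1 : (1 : ℝ) ≤ (a : ℝ) := by exact_mod_cast ha0
  have hbR1 : (1 : ℝ) ≤ (b : ℝ) := by exact_mod_cast hb0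
  have hcR1 : (1 : ℝ) ≤ (c : ℝ) := by exact_mod_cast hc0
  have heR1 : (1 : ℝ) ≤ (e : ℝ) := by exact_mod_cast he0
  have hg1R : (1 : ℝ) ≤ (g1 : ℝ) := by exact_mod_cast hg10
  have hg2R : (1 : ℝ) ≤ (g2 : ℝ) := by exact_mod_cast hg20
  have hg3R : (1 : ℝ) ≤ (g3 : ℝ) := by exact_mod_cast hg30
  have hg4R : (1 : ℝ) ≤ (g4 : ℝ) := by exact_mod_cast hg40
  have hdR1 : (1 : ℝ) ≤ (d : ℝ) := by exact_mod_cast hd1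
  have huR1 : (1 : ℝ) ≤ (u : ℝ) := by exact_mod_cast hu1
  -- height inequalities
  have hGpos : (0 : ℝ) < (g1 : ℝ) * g2 * g3 * g4 := by positivity
  have h4' : (t : ℝ) ^ 2 * x * y ≤ B * ((g1 : ℝ) * g2 * g3 * g4) := (div_le_iff₀ hGpos).1 h4
  have ht2ab : (t : ℝ) ^ 2 * ((a : ℝ) * b) ≤ B := by
    have hid : (t : ℝ) ^ 2 * x * y = ((t : ℝ) ^ 2 * ((a : ℝ) * b)) * ((g1 : ℝ) * g2 * g3 * g4) := by
      rw [hxaR, hybR]; ring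
    rw [hid] at h4'
    exact le_of_mul_le_mul_right h4' hGpos
  have h4'' : (t : ℝ) ^ 2 * x * y ≤ B * ((g1 : ℝ) * g2 * g3 * g4) := by
    have hid : (t : ℝ) ^ 2 * x * y = ((t : ℝ) ^ 2 * ((a : ℝ) * b)) * ((g1 : ℝ) * g2 * g3 * g4) := by
      rw [hxaR, hybR]; ring
    rw [hid]
    exact mul_le_mul_of_nonneg_right ht2ab hGpos.le
  have hxyce : (x : ℝ) * y * ((c : ℝ) * e) ≤ B := by
    have h5 : (t : ℝ) ^ 2 * x * y * ((c : ℝ) * e) ≤ B * ((g1 : ℝ) * g2 * g3 * g4) * ((c : ℝ) * e) :=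
      mul_le_mul_of_nonneg_right h4'' (by positivity)
    have hid2 : B * ((g1 : ℝ) * g2 * g3 * g4) * ((c : ℝ) * e) = B * ((s : ℝ) * t) := by
      rw [hscR, hteR]; ring
    rw [hid2] at h5
    have h7 : (s : ℝ) * t ≤ (t : ℝ) * t := mul_le_mul_of_nonneg_right hstR htR.le
    have h6 : B * ((s : ℝ) * t) ≤ B * ((t : ℝ) * t) := mul_le_mul_of_nonneg_left h7 hB0.le
    have h8 : ((x : ℝ) * y * ((c : ℝ) * e)) * ((t : ℝ) * t) ≤ B * ((t : ℝ) * t) := by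
      calc ((x : ℝ) * y * ((c : ℝ) * e)) * ((t : ℝ) * t)
          = (t : ℝ) ^ 2 * x * y * ((c : ℝ) * e) := by ring
        _ ≤ B * ((s : ℝ) * t) := h5
        _ ≤ B * ((t : ℝ) * t) := h6
    exact le_of_mul_le_mul_right h8 (by positivity)
  have habR1 : (1 : ℝ) ≤ (a : ℝ) * b := by
    calc (1:ℝ) = 1 * 1 := by ring
      _ ≤ (a : ℝ) * b := mul_le_mul haR1 hbR1 zero_le_one (by linarith)
  have hceR1 : (1 : ℝ) ≤ (c : ℝ) * e := by
    calc (1:ℝ) = 1 * 1 := by ring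
      _ ≤ (c : ℝ) * e := mul_le_mul hcR1 heR1 zero_le_one (by linarith)
  have hT : (t : ℝ) ≤ σ := by
    rw [hσdef]
    apply Real.le_sqrt_of_sq_le
    have h5 : (t : ℝ) ^ 2 ≤ (t : ℝ) ^ 2 * ((a : ℝ) * b) :=
      le_mul_of_one_le_right (by positivity) habR1
    linarith
  have hS : (s : ℝ) ≤ σ := le_trans hstR hT
  have hX : (x : ℝ) ≤ σ := by
    rw [hσdef]
    apply Real.le_sqrt_of_sq_le
    have h5 : (x : ℝ) ^ 2 ≤ (x : ℝ) * y := by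
      rw [sq]; exact mul_le_mul_of_nonneg_left hxyR.le hxR.le
    have h6 : (x : ℝ) * y ≤ (x : ℝ) * y * ((c : ℝ) * e) :=
      le_mul_of_one_le_right (by positivity) hceR1
    linarith
  -- d and u bounds
  have htsd : (t : ℝ) / s - 1 = (d : ℝ) / s := by field_simp; linarith
  have hds_le : (d : ℝ) / s ≤ ε / σ := by linarith
  have hdsσ : (d : ℝ) * σ ≤ ε * s := by
    rw [div_le_div_iff₀ hsR hσ0] at hds_le; linarith
  have hσεs : σ ≤ ε * s := le_trans (le_mul_of_one_le_left hσ0.le hdR1) hdsσ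
  have hdε : (d : ℝ) ≤ ε := by
    have h5 : (d : ℝ) * σ ≤ ε * σ := le_trans hdsσ (mul_le_mul_of_nonneg_left hS hε.le)
    exact le_of_mul_le_mul_right h5 hσ0
  have hux : (y : ℝ) / x - 1 = (u : ℝ) / x := by field_simp; linarith
  have hus_le : (u : ℝ) / x ≤ ε / σ := by
    have := h2
    have h5 : (y : ℝ) / x - 1 ≤ (t : ℝ) / s - 1 := by linarith
    linarith [hux ▸ (htsd ▸ h5).trans hds_le]
  have husσ : (u : ℝ) * σ ≤ ε * x := by
    rw [div_le_div_iff₀ hxR hσ0] at hus_le; linarith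
  have hσεx : σ ≤ ε * x := le_trans (le_mul_of_one_le_left hσ0.le huR1) husσ
  have huε : (u : ℝ) ≤ ε := by
    have h5 : (u : ℝ) * σ ≤ ε * σ := le_trans husσ (mul_le_mul_of_nonneg_left hX hε.le)
    exact le_of_mul_le_mul_right h5 hσ0
  -- a*b ≤ E^2, c*e ≤ E^2
  have hσεt : σ ≤ ε * t := le_trans hσεs (mul_le_mul_of_nonneg_left hstR hε.le)
  have hε2E2 : ε ^ 2 ≤ E ^ 2 := pow_le_pow_left₀ hε.le hεE 2
  have hab2 : (a : ℝ) * b ≤ E ^ 2 := by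
    have h5 : σ * σ ≤ (ε * t) * (ε * t) := mul_le_mul hσεt hσεt hσ0.le (by positivity)
    have he1 : σ * σ = B := by rw [← hσ2]; ring
    have he2 : (ε * t) * (ε * t) = (t : ℝ) ^ 2 * (ε ^ 2) := by ring
    have h6 : (t : ℝ) ^ 2 * ((a : ℝ) * b) ≤ (t : ℝ) ^ 2 * (ε ^ 2) := by linarith
    have h7 := le_of_mul_le_mul_left h6 (by positivity : (0:ℝ) < (t : ℝ) ^ 2)
    linarith
  have hce2 : (c : ℝ) * e ≤ E ^ 2 := by
    have h5 : σ * σ ≤ (ε * x) * (ε * x) := mul_le_mul hσεx hσεx hσ0.le (by positivity)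
    have he1 : σ * σ = B := by rw [← hσ2]; ring
    have hxy2 : (x : ℝ) * x ≤ (x : ℝ) * y := mul_le_mul_of_nonneg_left hxyR.le hxR.le
    have he2 : (ε * x) * (ε * x) = ((x : ℝ) * x) * (ε ^ 2) := by ring
    have h6 : ((x : ℝ) * y) * ((c : ℝ) * e) ≤ ((x : ℝ) * y) * (ε ^ 2) := by
      have h8 : ((x : ℝ) * x) * (ε ^ 2) ≤ ((x : ℝ) * y) * (ε ^ 2) :=
        mul_le_mul_of_nonneg_right hxy2 (by positivity)
      linarith
    have h7 := le_of_mul_le_mul_left h6 (by positivity : (0:ℝ) < (x : ℝ) * y)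
    linarith
  have haE : (a : ℝ) ≤ E ^ 2 := le_trans (le_mul_of_one_le_right (by positivity) hbR1) hab2
  have hbE : (b : ℝ) ≤ E ^ 2 := by
    have : (b : ℝ) ≤ (a : ℝ) * b := le_mul_of_one_le_left (by positivity) haR1
    linarith
  have hcE : (c : ℝ) ≤ E ^ 2 := le_trans (le_mul_of_one_le_right (by positivity) heR1) hce2
  have heE : (e : ℝ) ≤ E ^ 2 := by
    have : (e : ℝ) ≤ (c : ℝ) * e := le_mul_of_one_le_left (by positivity) hcR1
    linarith

  -- ℤ casts
  have hxaZ : (x : ℤ) = (a : ℤ) * ((g1 : ℤ) * g2) := by exact_mod_cast hxa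
  have hybZ : (y : ℤ) = (b : ℤ) * ((g3 : ℤ) * g4) := by exact_mod_cast hyb
  have hscZ : (s : ℤ) = (c : ℤ) * ((g1 : ℤ) * g3) := by exact_mod_cast hsc
  have hteZ : (t : ℤ) = (e : ℤ) * ((g2 : ℤ) * g4) := by exact_mod_cast hte
  have hsdZ : (s : ℤ) + d = t := by exact_mod_cast hsd
  have hxuZ : (x : ℤ) + u = y := by exact_mod_cast hxu
  have hdZ2 : (d : ℤ) = e * ((g2:ℤ) * g4) - c * ((g1:ℤ) * g3) := by
    rw [← hteZ, ← hscZ]; linarith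
  have huZ2 : (u : ℤ) = b * ((g3:ℤ) * g4) - a * ((g1:ℤ) * g2) := by
    rw [← hybZ, ← hxaZ]; linarith
  have hcrossZ : (y : ℤ) * s < t * x := by exact_mod_cast hcrossN
  have hZg1 : (0:ℤ) < (g1:ℤ) := by exact_mod_cast hg10
  have hZg2 : (0:ℤ) < (g2:ℤ) := by exact_mod_cast hg20
  have hZg3 : (0:ℤ) < (g3:ℤ) := by exact_mod_cast hg30
  have hZg4 : (0:ℤ) < (g4:ℤ) := by exact_mod_cast hg40
  have hZa : (0:ℤ) < (a:ℤ) := by exact_mod_cast ha0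
  have hZb : (0:ℤ) < (b:ℤ) := by exact_mod_cast hb0
  have hZc : (0:ℤ) < (c:ℤ) := by exact_mod_cast hc0
  have hZe : (0:ℤ) < (e:ℤ) := by exact_mod_cast he0
  have hZd : (0:ℤ) < (d:ℤ) := by exact_mod_cast hd1
  have hZu : (0:ℤ) < (u:ℤ) := by exact_mod_cast hu1
  -- K
  obtain ⟨K, hK⟩ : ∃ K : ℤ, K = (a:ℤ) * e * (g2:ℤ)^2 - (b:ℤ) * c * (g3:ℤ)^2 := ⟨_, rfl⟩
  have hfac : (t:ℤ) * x - y * s = ((g1:ℤ) * g4) * K := by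
    rw [hK, hteZ, hxaZ, hybZ, hscZ]; ring
  have hfacpos : (0:ℤ) < ((g1:ℤ) * g4) * K := by rw [← hfac]; linarith
  have hKpos : (0:ℤ) < K := by
    by_contra hc; push_neg at hc
    have h5 : ((g1:ℤ) * g4) * K ≤ 0 :=
      mul_nonpos_of_nonneg_of_nonpos (by positivity) hc
    linarith
  have hK1 : (1:ℤ) ≤ K := by omega
  have hK0 : K ≠ 0 := by omega
  have hg4K : (g4:ℤ) * K = d * a * g2 - u * c * g3 := by rw [hK, hdZ2, huZ2]; ring
  have hg1K : (g1:ℤ) * K = d * b * g3 - u * e * g2 := by rw [hK, hdZ2, huZ2]; ring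
  obtain ⟨W, hW⟩ : ∃ W : ℤ, W = (d:ℤ)^2 * a * b - (u:ℤ)^2 * c * e := ⟨_, rfl⟩
  have hWg2 : W * g2 = K * ((d:ℤ) * b * g4 + u * c * g1) := by
    rw [hW, hK, hdZ2, huZ2]; ring
  have hWg3 : W * g3 = K * ((u:ℤ) * e * g4 + d * a * g1) := by
    rw [hW, hK, hdZ2, huZ2]; ring
  obtain ⟨V, hV⟩ : ∃ V : ℤ, V = (b:ℤ) * e * (g4:ℤ)^2 - (a:ℤ) * c * (g1:ℤ)^2 := ⟨_, rfl⟩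
  have hKV2 : K^2 * V = W * K := by rw [hK, hW, hV, hdZ2, huZ2]; ring
  have hKV : K * V = W :=
    mul_right_cancel₀ hK0 (by linear_combination hKV2)
  have hWpos : (0:ℤ) < W := by
    have hsum : (0:ℤ) < (d:ℤ) * b * g4 + u * c * g1 := by positivity
    have h5 : (0:ℤ) < K * ((d:ℤ) * b * g4 + u * c * g1) := mul_pos hKpos hsum
    rw [← hWg2] at h5
    by_contra hc; push_neg at hc
    have h6 : W * g2 ≤ 0 := mul_nonpos_of_nonpos_of_nonneg hc (by positivity)
    linarith
  have hVpos : (0:ℤ) < V := by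
    by_contra hc; push_neg at hc
    have h5 : K * V ≤ 0 := mul_nonpos_of_nonneg_of_nonpos hKpos.le hc
    linarith [hKV ▸ h5]
  have hV1 : (1:ℤ) ≤ V := by omega
  have hVW : V ≤ W := by
    rw [← hKV]; exact le_mul_of_one_le_left (by omega) hK1
  obtain ⟨w, hwZ⟩ : ∃ w : ℕ, (w:ℤ) = V := ⟨V.toNat, Int.toNat_of_nonneg (by omega)⟩
  have hw1 : 1 ≤ w := by
    have h5 : (1:ℤ) ≤ (w:ℤ) := by rw [hwZ]; exact hV1
    exact_mod_cast h5
  -- ℕ equations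
  have hPN : b * e * g4^2 = w + a * c * g1^2 := by
    have h5 : ((b:ℤ) * e * (g4:ℤ)^2) = (w:ℤ) + (a:ℤ) * c * (g1:ℤ)^2 := by
      rw [hwZ, hV]; ring
    exact_mod_cast h5
  have hVg2 : V * g2 = (d:ℤ) * b * g4 + (u:ℤ) * c * g1 := by
    have h5 : K * (V * g2) = K * ((d:ℤ) * b * g4 + (u:ℤ) * c * g1) := by
      linear_combination (g2:ℤ) * hKV + hWg2
    exact mul_left_cancel₀ hK0 h5
  have hVg3 : V * g3 = (u:ℤ) * e * g4 + (d:ℤ) * a * g1 := by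
    have h5 : K * (V * g3) = K * ((u:ℤ) * e * g4 + (d:ℤ) * a * g1) := by
      linear_combination (g3:ℤ) * hKV + hWg3
    exact mul_left_cancel₀ hK0 h5
  have hw2N : w * g2 = d * b * g4 + u * c * g1 := by
    have h5 : ((w:ℤ)) * g2 = (d:ℤ) * b * g4 + (u:ℤ) * c * g1 := by rw [hwZ]; exact hVg2
    exact_mod_cast h5
  have hw3N : w * g3 = u * e * g4 + d * a * g1 := by
    have h5 : ((w:ℤ)) * g3 = (u:ℤ) * e * g4 + (d:ℤ) * a * g1 := by rw [hwZ]; exact hVg3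
    exact_mod_cast h5
  -- w bound
  have hE26 : E^2 ≤ E^6 := pow_le_pow_right₀ hE1 (by norm_num)
  have hEE6 : E ≤ E^6 := by
    calc E = E^1 := (pow_one E).symm
      _ ≤ E^6 := pow_le_pow_right₀ hE1 (by norm_num)
  have hwR6 : (w:ℝ) ≤ E^6 := by
    have hWd2ab : W ≤ (d:ℤ)^2 * a * b := by
      have h5 : (0:ℤ) ≤ (u:ℤ)^2 * c * e := by positivity
      rw [hW]; linarith
    have h5 : (w:ℤ) ≤ (d:ℤ)^2 * a * b := by rw [hwZ]; exact le_trans hVW hWd2ab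
    have h6 : (w:ℝ) ≤ (d:ℝ)^2 * a * b := by exact_mod_cast h5
    have hdE : (d:ℝ) ≤ E := le_trans hdε hεE
    have hd2 : (d:ℝ)^2 ≤ E^2 := pow_le_pow_left₀ (by positivity) hdE 2
    have h7 : (d:ℝ)^2 * ((a:ℝ) * b) ≤ E^2 * E^2 :=
      mul_le_mul hd2 hab2 (by positivity) (by positivity)
    have h8 : E^2 * E^2 ≤ E^6 := by
      have he : E^2 * E^2 = E^4 := by ring
      rw [he]; exact pow_le_pow_right₀ hE1 (by norm_num)
    have h9 : (d:ℝ)^2 * (a:ℝ) * (b:ℝ) = (d:ℝ)^2 * ((a:ℝ)*(b:ℝ)) := by ring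
    linarith
  -- real versions of w-equations
  have hw2R : (w:ℝ) * g2 = (d:ℝ) * b * g4 + (u:ℝ) * c * g1 := by exact_mod_cast hw2N
  have hw3R : (w:ℝ) * g3 = (u:ℝ) * e * g4 + (d:ℝ) * a * g1 := by exact_mod_cast hw3N
  have hwR1 : (1:ℝ) ≤ (w:ℝ) := by exact_mod_cast hw1
  -- window
  set Q := Real.sqrt σ with hQdef
  have hQ0 : 0 < Q := Real.sqrt_pos.2 hσ0
  have hQ2 : Q^2 = σ := Real.sq_sqrt hσ0.le
  have hda1 : (1:ℝ) ≤ (d:ℝ) * a := by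
    calc (1:ℝ) = 1 * 1 := by ring
      _ ≤ (d:ℝ) * a := mul_le_mul hdR1 haR1 zero_le_one (by linarith)
  have hue1 : (1:ℝ) ≤ (u:ℝ) * e := by
    calc (1:ℝ) = 1 * 1 := by ring
      _ ≤ (u:ℝ) * e := mul_le_mul huR1 heR1 zero_le_one (by linarith)
  have hg3low : (g1:ℝ) ≤ E^6 * g3 := by
    have h5 : (g1:ℝ) ≤ ((d:ℝ) * a) * g1 := le_mul_of_one_le_left (by positivity) hda1
    have h6 : (0:ℝ) ≤ (u:ℝ) * e * g4 := by positivity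
    have h7 : (g1:ℝ) ≤ (w:ℝ) * g3 := by
      have : (d:ℝ) * a * g1 = ((d:ℝ) * a) * g1 := by ring
      linarith [hw3R]
    have h8 : (w:ℝ) * g3 ≤ E^6 * g3 := mul_le_mul_of_nonneg_right hwR6 (by positivity)
    linarith
  have hg1g3s : (g1:ℝ) * g3 ≤ σ := by
    have h5 : (g1:ℝ) * g3 ≤ (c:ℝ) * ((g1:ℝ) * g3) :=
      le_mul_of_one_le_left (by positivity) hcR1
    rw [← hscR] at h5
    linarith
  have hQU : (g1:ℝ) ≤ E^3 * Q := by
    have h5 : (g1:ℝ) * g1 ≤ E^6 * ((g1:ℝ) * g3) := by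
      have := mul_le_mul_of_nonneg_left hg3low (Nat.cast_nonneg g1 : (0:ℝ) ≤ g1)
      calc (g1:ℝ) * g1 ≤ (g1:ℝ) * (E^6 * g3) := this
        _ = E^6 * ((g1:ℝ) * g3) := by ring
    have h6 : (g1:ℝ)^2 ≤ (E^3 * Q)^2 := by
      have h7 : E^6 * ((g1:ℝ) * g3) ≤ E^6 * σ :=
        mul_le_mul_of_nonneg_left hg1g3s (by positivity)
      have h8 : (E^3 * Q)^2 = E^6 * σ := by rw [mul_pow, ← hQ2]; ring
      have h9 : (g1:ℝ)^2 = (g1:ℝ) * g1 := by ring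
      linarith
    have h10 := Real.sqrt_le_sqrt h6
    rwa [Real.sqrt_sq (by positivity), Real.sqrt_sq (by positivity)] at h10
  have hg4up : (g4:ℝ) ≤ E^3 * g1 := by
    have h5 : (e:ℝ) * ((g2:ℝ) * g4) ≤ ε * ((a:ℝ) * ((g1:ℝ) * g2)) := by
      rw [← hteR, ← hxaR]; linarith
    have h6 : ((e:ℝ) * g4) * g2 ≤ (ε * (a:ℝ) * g1) * g2 := by
      calc ((e:ℝ) * g4) * g2 = (e:ℝ) * ((g2:ℝ) * g4) := by ring
        _ ≤ ε * ((a:ℝ) * ((g1:ℝ) * g2)) := h5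
        _ = (ε * (a:ℝ) * g1) * g2 := by ring
    have h7 : (e:ℝ) * g4 ≤ ε * (a:ℝ) * g1 :=
      le_of_mul_le_mul_right h6 (by positivity)
    have h8 : (g4:ℝ) ≤ (e:ℝ) * g4 := le_mul_of_one_le_left (by positivity) heR1
    have h9 : ε * (a:ℝ) ≤ E * E^2 := mul_le_mul hεE haE (by positivity) (by positivity)
    have h10 : ε * (a:ℝ) * g1 ≤ (E * E^2) * g1 :=
      mul_le_mul_of_nonneg_right h9 (by positivity)
    have h11 : (E * E^2) * (g1:ℝ) = E^3 * g1 := by ring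
    linarith
  have hQL : Q / (2 * E^5) ≤ (g1:ℝ) := by
    have h5 : (g3:ℝ) ≤ (u:ℝ) * e * g4 + (d:ℝ) * a * g1 := by
      have h6 : (g3:ℝ) ≤ (w:ℝ) * g3 := le_mul_of_one_le_left (by positivity) hwR1
      linarith [hw2R, hw3R]
    have h7 : (u:ℝ) * e * g4 ≤ (E * E^2) * (E^3 * g1) := by
      have h8 : (u:ℝ) * e ≤ E * E^2 := by
        have huE : (u:ℝ) ≤ E := le_trans huε hεE
        exact mul_le_mul huE heE (by positivity) (by positivity)
      have := mul_le_mul h8 hg4up (by positivity) (by positivity)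
      calc (u:ℝ) * e * g4 = ((u:ℝ) * e) * (g4:ℝ) := by ring
        _ ≤ (E * E^2) * (E^3 * g1) := this
    have h9 : (d:ℝ) * a * g1 ≤ (E * E^2) * g1 := by
      have hdE : (d:ℝ) ≤ E := le_trans hdε hεE
      have h10 : (d:ℝ) * a ≤ E * E^2 := mul_le_mul hdE haE (by positivity) (by positivity)
      calc (d:ℝ) * a * g1 = ((d:ℝ) * a) * (g1:ℝ) := by ring
        _ ≤ (E * E^2) * g1 := mul_le_mul_of_nonneg_right h10 (by positivity)
    have hg3up : (g3:ℝ) ≤ 2 * E^6 * g1 := by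
      have h11 : (E * E^2) * (E^3 * (g1:ℝ)) = E^6 * g1 := by ring
      have h12 : (E * E^2) * (g1:ℝ) ≤ E^6 * g1 := by
        have : E * E^2 ≤ E^6 := by
          have he : E * E^2 = E^3 := by ring
          rw [he]; exact pow_le_pow_right₀ hE1 (by norm_num)
        exact mul_le_mul_of_nonneg_right this (by positivity)
      have : (g3:ℝ) ≤ E^6 * g1 + E^6 * g1 := by linarith
      linarith
    have h13 : σ ≤ ε * (c * ((g1:ℝ) * g3)) := by rw [← hscR]; exact hσεs
    have h14 : ε * ((c:ℝ) * ((g1:ℝ) * g3)) ≤ E * (E^2 * ((g1:ℝ) * (2 * E^6 * g1))) := by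
      have hc1 : (c:ℝ) * ((g1:ℝ) * g3) ≤ E^2 * ((g1:ℝ) * (2 * E^6 * g1)) := by
        have h15 : (g1:ℝ) * g3 ≤ (g1:ℝ) * (2 * E^6 * g1) :=
          mul_le_mul_of_nonneg_left hg3up (by positivity)
        have h16 : (c:ℝ) * ((g1:ℝ) * g3) ≤ E^2 * ((g1:ℝ) * g3) :=
          mul_le_mul_of_nonneg_right hcE (by positivity)
        have h17 : E^2 * ((g1:ℝ) * g3) ≤ E^2 * ((g1:ℝ) * (2 * E^6 * g1)) :=
          mul_le_mul_of_nonneg_left h15 (by positivity)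
        linarith
      have := mul_le_mul hεE hc1 (by positivity) (by positivity)
      linarith [this]
    have h18 : σ ≤ 2 * E^9 * ((g1:ℝ) * g1) := by
      have h19 : E * (E^2 * ((g1:ℝ) * (2 * E^6 * g1))) = 2 * E^9 * ((g1:ℝ) * g1) := by ring
      linarith
    have h20 : Q^2 ≤ (2 * E^5 * g1)^2 := by
      have h21 : (2 * E^5 * (g1:ℝ))^2 = 4 * E^10 * ((g1:ℝ) * g1) := by ring
      have h22 : 2 * E^9 * ((g1:ℝ) * g1) ≤ 4 * E^10 * ((g1:ℝ) * g1) := by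
        have : 2 * E^9 ≤ 4 * E^10 := by
          have he : E^9 ≤ E^10 := pow_le_pow_right₀ hE1 (by norm_num)
          have he2 : (0:ℝ) ≤ E^10 := by positivity
          linarith
        exact mul_le_mul_of_nonneg_right this (by positivity)
      rw [hQ2]; linarith
    have h23 := Real.sqrt_le_sqrt h20
    rw [Real.sqrt_sq hQ0.le, Real.sqrt_sq (by positivity)] at h23
    rw [div_le_iff₀ (by positivity)]
    linarith
  have h14c : (g1:ℝ) ≤ E^6 * g4 := by
    have hg2up : (g2:ℝ) ≤ E^3 * g3 := by
      have h5 : (w:ℝ) * g2 ≤ E^3 * ((w:ℝ) * g3) := by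
        have hdbE : (d:ℝ) * b ≤ E * E^2 := by
          have hdE : (d:ℝ) ≤ E := le_trans hdε hεE
          exact mul_le_mul hdE hbE (by positivity) (by positivity)
        have hucE : (u:ℝ) * c ≤ E * E^2 := by
          have huE : (u:ℝ) ≤ E := le_trans huε hεE
          exact mul_le_mul huE hcE (by positivity) (by positivity)
        have h6 : (d:ℝ) * b * g4 ≤ E^3 * g4 := by
          have := mul_le_mul_of_nonneg_right hdbE (Nat.cast_nonneg g4 : (0:ℝ) ≤ g4)
          have h7 : E * E^2 * (g4:ℝ) = E^3 * g4 := by ring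
          calc (d:ℝ) * b * g4 = ((d:ℝ) * b) * (g4:ℝ) := by ring
            _ ≤ E * E^2 * (g4:ℝ) := this
            _ = E^3 * g4 := h7
        have h8 : (u:ℝ) * c * g1 ≤ E^3 * g1 := by
          have := mul_le_mul_of_nonneg_right hucE (Nat.cast_nonneg g1 : (0:ℝ) ≤ g1)
          calc (u:ℝ) * c * g1 = ((u:ℝ) * c) * (g1:ℝ) := by ring
            _ ≤ E * E^2 * (g1:ℝ) := this
            _ = E^3 * g1 := by ring
        have h9 : (g4:ℝ) + g1 ≤ (w:ℝ) * g3 := by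
          have h10 : (g4:ℝ) ≤ (u:ℝ) * e * g4 := by
            have := mul_le_mul_of_nonneg_right hue1 (Nat.cast_nonneg g4 : (0:ℝ) ≤ g4)
            calc (g4:ℝ) = 1 * (g4:ℝ) := by ring
              _ ≤ ((u:ℝ) * e) * (g4:ℝ) := this
              _ = (u:ℝ) * e * g4 := by ring
          have h11 : (g1:ℝ) ≤ (d:ℝ) * a * g1 := by
            have := mul_le_mul_of_nonneg_right hda1 (Nat.cast_nonneg g1 : (0:ℝ) ≤ g1)
            calc (g1:ℝ) = 1 * (g1:ℝ) := by ring
              _ ≤ ((d:ℝ) * a) * (g1:ℝ) := this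
              _ = (d:ℝ) * a * g1 := by ring
          linarith [hw3R]
        calc (w:ℝ) * g2 = (d:ℝ) * b * g4 + (u:ℝ) * c * g1 := hw2R
          _ ≤ E^3 * g4 + E^3 * g1 := by linarith
          _ = E^3 * ((g4:ℝ) + g1) := by ring
          _ ≤ E^3 * ((w:ℝ) * g3) := mul_le_mul_of_nonneg_left h9 (by positivity)
      have h12 : (w:ℝ) * g2 = (w:ℝ) * g2 := rfl
      have h13 : (g2:ℝ) * w ≤ (E^3 * g3) * w := by
        calc (g2:ℝ) * w = (w:ℝ) * g2 := by ring
          _ ≤ E^3 * ((w:ℝ) * g3) := h5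
          _ = (E^3 * g3) * w := by ring
      exact le_of_mul_le_mul_right h13 (by positivity)
    have h5 : (g1:ℝ) * g3 ≤ σ := hg1g3s
    have h6 : σ ≤ ε * ((e:ℝ) * ((g2:ℝ) * g4)) := by rw [← hteR]; exact hσεt
    have h7 : ε * ((e:ℝ) * ((g2:ℝ) * g4)) ≤ E^3 * ((g2:ℝ) * g4) := by
      have h8 : ε * e ≤ E * E^2 := mul_le_mul hεE heE (by positivity) (by positivity)
      have := mul_le_mul_of_nonneg_right h8 (by positivity : (0:ℝ) ≤ (g2:ℝ) * g4)
      calc ε * ((e:ℝ) * ((g2:ℝ) * g4)) = (ε * e) * ((g2:ℝ) * g4) := by ring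
        _ ≤ (E * E^2) * ((g2:ℝ) * g4) := this
        _ = E^3 * ((g2:ℝ) * g4) := by ring
    have h9 : E^3 * ((g2:ℝ) * g4) ≤ E^3 * ((E^3 * g3) * g4) := by
      have := mul_le_mul_of_nonneg_right hg2up (Nat.cast_nonneg g4 : (0:ℝ) ≤ g4)
      exact mul_le_mul_of_nonneg_left this (by positivity)
    have h10 : (g1:ℝ) * g3 ≤ (E^6 * g4) * g3 := by
      calc (g1:ℝ) * g3 ≤ σ := h5
        _ ≤ E^3 * ((E^3 * g3) * g4) := by linarith
        _ = (E^6 * g4) * g3 := by ring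
    exact le_of_mul_le_mul_right h10 (by positivity)
  -- package
  refine ⟨a, b, c, e, d, u, w, ha0, hb0, hc0, he0, hw1, hxa, hyb, hsc, hte, hsd, hxu,
    hPN, hw2N, hw3N, le_trans haE hE26, le_trans hbE hE26, le_trans hcE hE26,
    le_trans heE hE26, le_trans (le_trans hdε hεE) hEE6, le_trans (le_trans huε hεE) hEE6,
    hwR6, hQL, hQU, h14c⟩

lemma gap (E Q : ℝ) (hE : 1 ≤ E) (hQ : 0 < Q) (a c b e w g1 g4 g1' g4' : ℕ)
    (hb : 0 < b) (he : 0 < e)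
    (hP : b * e * g4 ^ 2 = w + a * c * g1 ^ 2)
    (hP' : b * e * g4' ^ 2 = w + a * c * g1' ^ 2)
    (hlt : g1 < g1')
    (hw1 : 1 ≤ w) (hwE : (w : ℝ) ≤ E ^ 6)
    (hL : Q / (2 * E ^ 5) ≤ (g1 : ℝ)) (hL' : Q / (2 * E ^ 5) ≤ (g1' : ℝ))
    (hU : (g1 : ℝ) ≤ E ^ 3 * Q) (hU' : (g1' : ℝ) ≤ E ^ 3 * Q)
    (h14 : (g1 : ℝ) ≤ E ^ 6 * g4) :
    Q ≤ ((g1' : ℝ) - g1) * (8 * E ^ 25) := by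
  have hE0 : (0:ℝ) < E := lt_of_lt_of_le one_pos hE
  have hPz : (b : ℤ) * e * g4 ^ 2 = w + a * c * g1 ^ 2 := by exact_mod_cast hP
  have hPz' : (b : ℤ) * e * g4' ^ 2 = w + a * c * g1' ^ 2 := by exact_mod_cast hP'
  have hZ : (b : ℤ) * e * ((g4 : ℤ) * g1' - g4' * g1) * ((g4 : ℤ) * g1' + g4' * g1)
      = (w : ℤ) * ((g1' : ℤ) ^ 2 - (g1 : ℤ) ^ 2) := by
    linear_combination ((g1' : ℤ) ^ 2) * hPz - ((g1 : ℤ) ^ 2) * hPz'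
  have hg1lt : (g1 : ℤ) < (g1' : ℤ) := by exact_mod_cast hlt
  have h0 : (0:ℤ) ≤ (g1 : ℤ) := Int.natCast_nonneg g1
  have hwz : (1 : ℤ) ≤ (w : ℤ) := by exact_mod_cast hw1
  have hd2 : (0:ℤ) < (g1' : ℤ) ^ 2 - (g1 : ℤ) ^ 2 := by nlinarith
  have hRpos : (0 : ℤ) < (w : ℤ) * ((g1' : ℤ) ^ 2 - (g1 : ℤ) ^ 2) :=
    mul_pos (by linarith) hd2
  have hbez : (1 : ℤ) ≤ (b : ℤ) * e := by
    have : 1 ≤ b * e := Nat.one_le_iff_ne_zero.2 (by positivity)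
    exact_mod_cast this
  have hsum : (0 : ℤ) ≤ (g4 : ℤ) * g1' + g4' * g1 := by positivity
  have hm : (1 : ℤ) ≤ (g4 : ℤ) * g1' - g4' * g1 := by
    by_contra hc
    push_neg at hc
    have hle : (b:ℤ) * e * ((g4 : ℤ) * g1' - g4' * g1) ≤ 0 :=
      mul_nonpos_of_nonneg_of_nonpos (by positivity) (by linarith)
    have : (b:ℤ) * e * ((g4 : ℤ) * g1' - g4' * g1) * ((g4 : ℤ) * g1' + g4' * g1) ≤ 0 :=
      mul_nonpos_of_nonpos_of_nonneg hle hsum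
    linarith [hZ ▸ this]
  -- real versions
  have hmR : (1 : ℝ) ≤ (g4 : ℝ) * g1' - g4' * g1 := by exact_mod_cast hm
  have hZR : (b : ℝ) * e * ((g4 : ℝ) * g1' - g4' * g1) * ((g4 : ℝ) * g1' + g4' * g1)
      = (w : ℝ) * ((g1' : ℝ) ^ 2 - (g1 : ℝ) ^ 2) := by exact_mod_cast hZ
  have hbeR : (1 : ℝ) ≤ (b : ℝ) * e := by exact_mod_cast hbez
  have hg40 : (0:ℝ) ≤ (g4:ℝ) := Nat.cast_nonneg g4
  have hg40' : (0:ℝ) ≤ (g4':ℝ) := Nat.cast_nonneg g4'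
  have hg10 : (0:ℝ) ≤ (g1:ℝ) := Nat.cast_nonneg g1
  have hg10' : (0:ℝ) ≤ (g1':ℝ) := Nat.cast_nonneg g1'
  have hsumR : (0:ℝ) ≤ (g4 : ℝ) * g1' + g4' * g1 := by positivity
  have hgap0 : (0:ℝ) ≤ (g1' : ℝ) - g1 := by
    have : (g1:ℝ) < g1' := by exact_mod_cast hlt
    linarith
  -- step 1
  have hMS : (g4:ℝ) * g1' + g4' * g1
      ≤ ((g4:ℝ) * g1' - g4' * g1) * ((g4:ℝ) * g1' + g4' * g1) :=
    le_mul_of_one_le_left hsumR hmR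
  have hM0 : (0:ℝ) ≤ (g4:ℝ) * g1' - g4' * g1 := by linarith
  have hMS2 : ((g4:ℝ) * g1' - g4' * g1) * ((g4:ℝ) * g1' + g4' * g1)
      ≤ ((b : ℝ) * e * ((g4 : ℝ) * g1' - g4' * g1)) * ((g4 : ℝ) * g1' + g4' * g1) :=
    mul_le_mul_of_nonneg_right (le_mul_of_one_le_left hM0 hbeR) hsumR
  have step1 : (g4 : ℝ) * g1' + g4' * g1 ≤ (w : ℝ) * ((g1' : ℝ) ^ 2 - (g1 : ℝ) ^ 2) := by
    calc (g4 : ℝ) * g1' + g4' * g1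
        ≤ ((g4:ℝ) * g1' - g4' * g1) * ((g4:ℝ) * g1' + g4' * g1) := hMS
      _ ≤ ((b : ℝ) * e * ((g4 : ℝ) * g1' - g4' * g1)) * ((g4 : ℝ) * g1' + g4' * g1) := hMS2
      _ = (w : ℝ) * ((g1' : ℝ) ^ 2 - (g1 : ℝ) ^ 2) := hZR
  -- step 2
  have hQL : Q ≤ 2 * E ^ 5 * g1 := by
    rw [div_le_iff₀ (by positivity)] at hL; linarith
  have hQL' : Q ≤ 2 * E ^ 5 * g1' := by
    rw [div_le_iff₀ (by positivity)] at hL'; linarith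
  have hA : Q ≤ 2 * E ^ 11 * g4 := by
    have h1 := mul_le_mul_of_nonneg_left h14 (show (0:ℝ) ≤ 2 * E ^ 5 by positivity)
    have h2 : 2 * E ^ 5 * (E ^ 6 * (g4:ℝ)) = 2 * E ^ 11 * g4 := by ring
    linarith
  have step2 : Q ^ 2 ≤ 4 * E ^ 16 * ((g4 : ℝ) * g1') := by
    have := mul_le_mul hA hQL' hQ.le (by positivity : (0:ℝ) ≤ 2 * E ^ 11 * g4)
    calc Q ^ 2 = Q * Q := by ring
      _ ≤ 2 * E ^ 11 * g4 * (2 * E ^ 5 * g1') := this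
      _ = 4 * E ^ 16 * ((g4 : ℝ) * g1') := by ring
  -- step 3
  have hX0 : (0:ℝ) ≤ (g1' : ℝ) ^ 2 - (g1:ℝ) ^ 2 := by
    have hle : (g1:ℝ) ≤ g1' := by linarith
    have := pow_le_pow_left₀ hg10 hle 2
    linarith
  have hA2 : (g1':ℝ) ^ 2 - (g1:ℝ) ^ 2 ≤ ((g1':ℝ) - g1) * (2 * E ^ 3 * Q) := by
    have h2 : (g1' : ℝ) + g1 ≤ 2 * E ^ 3 * Q := by linarith
    have h3 := mul_le_mul_of_nonneg_left h2 hgap0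
    have h4 : (g1':ℝ) ^ 2 - (g1:ℝ) ^ 2 = ((g1':ℝ) - g1) * ((g1':ℝ) + g1) := by ring
    linarith
  have step3 : (w : ℝ) * ((g1' : ℝ) ^ 2 - (g1 : ℝ) ^ 2)
      ≤ E ^ 6 * (((g1' : ℝ) - g1) * (2 * E ^ 3 * Q)) :=
    mul_le_mul hwE hA2 hX0 (by positivity)
  -- combine
  have h5 : (g4:ℝ) * g1' ≤ E ^ 6 * (((g1':ℝ) - g1) * (2 * E ^ 3 * Q)) := by
    have := mul_nonneg hg40' hg10
    linarith
  have h6 : Q ^ 2 ≤ 4 * E ^ 16 * (E ^ 6 * (((g1':ℝ) - g1) * (2 * E ^ 3 * Q))) :=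
    le_trans step2 (mul_le_mul_of_nonneg_left h5 (by positivity))
  have h7 : 4 * E ^ 16 * (E ^ 6 * (((g1':ℝ) - g1) * (2 * E ^ 3 * Q)))
      = (((g1':ℝ) - g1) * (8 * E ^ 25)) * Q := by ring
  have h8 : Q * Q ≤ (((g1':ℝ) - g1) * (8 * E ^ 25)) * Q := by
    calc Q * Q = Q ^ 2 := by ring
      _ ≤ _ := h6
      _ = _ := h7
  exact le_of_mul_le_mul_right h8 hQ

lemma floorlt (E Q : ℝ) (hE0 : 0 < E) (hQ : 0 < Q) (g1 g1' : ℕ)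
    (hgap : Q ≤ ((g1' : ℝ) - g1) * (8 * E ^ 25)) :
    ⌊(g1 : ℝ) * (8 * E ^ 25) / Q⌋₊ < ⌊(g1' : ℝ) * (8 * E ^ 25) / Q⌋₊ := by
  have h1 : (g1 : ℝ) * (8 * E ^ 25) / Q + 1 ≤ (g1' : ℝ) * (8 * E ^ 25) / Q := by
    have h0 : (g1 : ℝ) * (8 * E ^ 25) / Q + 1 = ((g1 : ℝ) * (8 * E ^ 25) + Q) / Q := by
      field_simp
    rw [h0]
    have hnum : (g1 : ℝ) * (8 * E ^ 25) + Q ≤ (g1' : ℝ) * (8 * E ^ 25) := by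
      have hr : ((g1' : ℝ) - g1) * (8 * E ^ 25)
          = (g1' : ℝ) * (8 * E ^ 25) - (g1 : ℝ) * (8 * E ^ 25) := by ring
      linarith
    gcongr
  have h2 := Nat.floor_mono h1
  have h3 : ⌊(g1 : ℝ) * (8 * E ^ 25) / Q + 1⌋₊ = ⌊(g1 : ℝ) * (8 * E ^ 25) / Q⌋₊ + 1 :=
    Nat.floor_add_one (by positivity)
  omega

/-- Critical zoom (factor `r = 2`) at `Q = [1:1]×[1:1]` on the toric surface `Y₄`:
for every `ε > 0` the number of rational points `[x:y]×[s:t]` of the open region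
`t/s > y/x > 1` with anticanonical height at most `B` and distance `t/s − 1 ≤ ε·B^(−1/2)`
stays bounded as `B → ∞`. -/
theorem stmt_14 (ε : ℝ) (hε : 0 < ε) :
    ∃ C : ℕ, ∃ B₀ : ℝ, B₀ ≥ 1 ∧ ∀ B : ℝ, B ≥ B₀ →
      Set.ncard {q : ℕ × ℕ × ℕ × ℕ |
        0 < q.1 ∧ 0 < q.2.1 ∧ 0 < q.2.2.1 ∧ 0 < q.2.2.2 ∧
        Nat.Coprime q.1 q.2.1 ∧ Nat.Coprime q.2.2.1 q.2.2.2 ∧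
        (q.2.1 : ℝ) / q.1 > 1 ∧
        (q.2.2.2 : ℝ) / q.2.2.1 > (q.2.1 : ℝ) / q.1 ∧
        (q.2.2.2 : ℝ) / q.2.2.1 - 1 ≤ ε * B ^ (-(1 / 2 : ℝ)) ∧
        (q.2.2.2 : ℝ) ^ 2 * q.1 * q.2.1 /
            ((Nat.gcd q.1 q.2.2.1 : ℝ) * (Nat.gcd q.1 q.2.2.2 : ℝ) *
              (Nat.gcd q.2.1 q.2.2.1 : ℝ) * (Nat.gcd q.2.1 q.2.2.2 : ℝ)) ≤ B} ≤ C := by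
  classical
  set E := ε + 1 with hEdef
  have hE1 : (1 : ℝ) ≤ E := by rw [hEdef]; linarith
  have hE0 : (0 : ℝ) < E := by linarith
  set Am : ℕ := ⌊E ^ 6⌋₊ + 1 with hAmdef
  set Jm : ℕ := ⌊8 * E ^ 28⌋₊ + 1 with hJmdef
  set F : Finset (ℕ × ℕ × ℕ × ℕ × ℕ × ℕ × ℕ × ℕ) :=
    Finset.range Am ×ˢ Finset.range Am ×ˢ Finset.range Am ×ˢ Finset.range Am ×ˢ
      Finset.range Am ×ˢ Finset.range Am ×ˢ Finset.range Am ×ˢ Finset.range Jm with hFdef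
  refine ⟨F.card, E ^ 2, by nlinarith [hE1], ?_⟩
  intro B hB
  have hB' : (ε + 1) ^ 2 ≤ B := hB
  have hB0 : (0 : ℝ) < B := lt_of_lt_of_le (by positivity) hB'
  set Q := Real.sqrt (Real.sqrt B) with hQdef
  have hQ0 : (0 : ℝ) < Q := Real.sqrt_pos.2 (Real.sqrt_pos.2 hB0)
  set f : ℕ × ℕ × ℕ × ℕ → ℕ × ℕ × ℕ × ℕ × ℕ × ℕ × ℕ × ℕ := fun q =>
    (q.1 / (Nat.gcd q.1 q.2.2.1 * Nat.gcd q.1 q.2.2.2),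
     q.2.1 / (Nat.gcd q.2.1 q.2.2.1 * Nat.gcd q.2.1 q.2.2.2),
     q.2.2.1 / (Nat.gcd q.1 q.2.2.1 * Nat.gcd q.2.1 q.2.2.1),
     q.2.2.2 / (Nat.gcd q.1 q.2.2.2 * Nat.gcd q.2.1 q.2.2.2),
     q.2.2.2 - q.2.2.1,
     q.2.1 - q.1,
     q.2.1 / (Nat.gcd q.2.1 q.2.2.1 * Nat.gcd q.2.1 q.2.2.2) *
         (q.2.2.2 / (Nat.gcd q.1 q.2.2.2 * Nat.gcd q.2.1 q.2.2.2)) *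
         Nat.gcd q.2.1 q.2.2.2 ^ 2 -
       q.1 / (Nat.gcd q.1 q.2.2.1 * Nat.gcd q.1 q.2.2.2) *
         (q.2.2.1 / (Nat.gcd q.1 q.2.2.1 * Nat.gcd q.2.1 q.2.2.1)) *
         Nat.gcd q.1 q.2.2.1 ^ 2,
     ⌊(Nat.gcd q.1 q.2.2.1 : ℝ) * (8 * E ^ 25) / Q⌋₊) with hfdef
  refine le_trans (Set.ncard_le_ncard_of_injOn f ?_ ?_ F.finite_toSet)
    (le_of_eq (Set.ncard_coe_finset F))
  · -- maps to
    rintro ⟨x, y, s, t⟩ hq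
    simp only [Set.mem_setOf_eq] at hq
    obtain ⟨hx0, hy0, hs0, ht0, hxy, hst, h1, h2, h3, h4⟩ := hq
    obtain ⟨a, b, c, e, d, u, w, ha0, hb0, hc0, he0, hw1, hxa, hyb, hsc, hte, hsd, hxu,
      hPN, hw2N, hw3N, haE, hbE, hcE, heE, hdE, huE, hwE, hQL, hQU, h14⟩ :=
      extract ε B hε hB' x y s t hx0 hy0 hs0 ht0 hxy hst h1 h2 h3 h4
    have hg12 : 0 < Nat.gcd x s * Nat.gcd x t :=
      Nat.mul_pos (Nat.gcd_pos_of_pos_left s hx0) (Nat.gcd_pos_of_pos_left t hx0)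
    have hg34 : 0 < Nat.gcd y s * Nat.gcd y t :=
      Nat.mul_pos (Nat.gcd_pos_of_pos_left s hy0) (Nat.gcd_pos_of_pos_left t hy0)
    have hg13 : 0 < Nat.gcd x s * Nat.gcd y s :=
      Nat.mul_pos (Nat.gcd_pos_of_pos_left s hx0) (Nat.gcd_pos_of_pos_left s hy0)
    have hg24 : 0 < Nat.gcd x t * Nat.gcd y t :=
      Nat.mul_pos (Nat.gcd_pos_of_pos_left t hx0) (Nat.gcd_pos_of_pos_left t hy0)
    have hfa : x / (Nat.gcd x s * Nat.gcd x t) = a := Nat.div_eq_of_eq_mul_left hg12 hxa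
    have hfb : y / (Nat.gcd y s * Nat.gcd y t) = b := Nat.div_eq_of_eq_mul_left hg34 hyb
    have hfc : s / (Nat.gcd x s * Nat.gcd y s) = c := Nat.div_eq_of_eq_mul_left hg13 hsc
    have hfe : t / (Nat.gcd x t * Nat.gcd y t) = e := Nat.div_eq_of_eq_mul_left hg24 hte
    have hfq : f (x, y, s, t) = (a, b, c, e, t - s, y - x,
        b * e * Nat.gcd y t ^ 2 - a * c * Nat.gcd x s ^ 2,
        ⌊(Nat.gcd x s : ℝ) * (8 * E ^ 25) / Q⌋₊) := by
      rw [hfdef]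
      simp only [hfa, hfb, hfc, hfe]
    have hfd : t - s = d := by omega
    have hfu : y - x = u := by omega
    have hfw : b * e * Nat.gcd y t ^ 2 - a * c * Nat.gcd x s ^ 2 = w := by omega
    rw [hfq, hfd, hfu, hfw]
    have hbnd : ∀ n : ℕ, (n : ℝ) ≤ E ^ 6 → n < Am := by
      intro n hn
      have := Nat.le_floor hn
      omega
    have hj : ⌊(Nat.gcd x s : ℝ) * (8 * E ^ 25) / Q⌋₊ < Jm := by
      have h5 : (Nat.gcd x s : ℝ) * (8 * E ^ 25) / Q ≤ 8 * E ^ 28 := by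
        rw [div_le_iff₀ hQ0]
        have h6 : (Nat.gcd x s : ℝ) * (8 * E ^ 25) ≤ (E ^ 3 * Q) * (8 * E ^ 25) :=
          mul_le_mul_of_nonneg_right hQU (by positivity)
        have h7 : (E ^ 3 * Q) * (8 * E ^ 25) = 8 * E ^ 28 * Q := by ring
        linarith
      have h8 := Nat.floor_mono h5
      omega
    simp only [hFdef, Finset.mem_coe, Finset.mem_product, Finset.mem_range]
    exact ⟨hbnd a haE, hbnd b hbE, hbnd c hcE, hbnd e heE, hbnd d hdE, hbnd u huE,
      hbnd w hwE, hj⟩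
  · -- injectivity
    rintro ⟨x, y, s, t⟩ hq ⟨x', y', s', t'⟩ hq' hfeq
    simp only [Set.mem_setOf_eq] at hq hq'
    obtain ⟨hx0, hy0, hs0, ht0, hxy, hst, h1, h2, h3, h4⟩ := hq
    obtain ⟨hx0', hy0', hs0', ht0', hxy', hst', h1', h2', h3', h4'⟩ := hq'
    obtain ⟨a, b, c, e, d, u, w, ha0, hb0, hc0, he0, hw1, hxa, hyb, hsc, hte, hsd, hxu,
      hPN, hw2N, hw3N, haE, hbE, hcE, heE, hdE, huE, hwE, hQL, hQU, h14⟩ :=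
      extract ε B hε hB' x y s t hx0 hy0 hs0 ht0 hxy hst h1 h2 h3 h4
    obtain ⟨a', b', c', e', d', u', w', ha0', hb0', hc0', he0', hw1', hxa', hyb', hsc', hte',
      hsd', hxu', hPN', hw2N', hw3N', haE', hbE', hcE', heE', hdE', huE', hwE', hQL', hQU',
      h14'⟩ :=
      extract ε B hε hB' x' y' s' t' hx0' hy0' hs0' ht0' hxy' hst' h1' h2' h3' h4'
    have hg12 : 0 < Nat.gcd x s * Nat.gcd x t :=
      Nat.mul_pos (Nat.gcd_pos_of_pos_left s hx0) (Nat.gcd_pos_of_pos_left t hx0)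
    have hg34 : 0 < Nat.gcd y s * Nat.gcd y t :=
      Nat.mul_pos (Nat.gcd_pos_of_pos_left s hy0) (Nat.gcd_pos_of_pos_left t hy0)
    have hg13 : 0 < Nat.gcd x s * Nat.gcd y s :=
      Nat.mul_pos (Nat.gcd_pos_of_pos_left s hx0) (Nat.gcd_pos_of_pos_left s hy0)
    have hg24 : 0 < Nat.gcd x t * Nat.gcd y t :=
      Nat.mul_pos (Nat.gcd_pos_of_pos_left t hx0) (Nat.gcd_pos_of_pos_left t hy0)
    have hg12' : 0 < Nat.gcd x' s' * Nat.gcd x' t' :=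
      Nat.mul_pos (Nat.gcd_pos_of_pos_left s' hx0') (Nat.gcd_pos_of_pos_left t' hx0')
    have hg34' : 0 < Nat.gcd y' s' * Nat.gcd y' t' :=
      Nat.mul_pos (Nat.gcd_pos_of_pos_left s' hy0') (Nat.gcd_pos_of_pos_left t' hy0')
    have hg13' : 0 < Nat.gcd x' s' * Nat.gcd y' s' :=
      Nat.mul_pos (Nat.gcd_pos_of_pos_left s' hx0') (Nat.gcd_pos_of_pos_left s' hy0')
    have hg24' : 0 < Nat.gcd x' t' * Nat.gcd y' t' :=
      Nat.mul_pos (Nat.gcd_pos_of_pos_left t' hx0') (Nat.gcd_pos_of_pos_left t' hy0')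
    have hfa : x / (Nat.gcd x s * Nat.gcd x t) = a := Nat.div_eq_of_eq_mul_left hg12 hxa
    have hfb : y / (Nat.gcd y s * Nat.gcd y t) = b := Nat.div_eq_of_eq_mul_left hg34 hyb
    have hfc : s / (Nat.gcd x s * Nat.gcd y s) = c := Nat.div_eq_of_eq_mul_left hg13 hsc
    have hfe : t / (Nat.gcd x t * Nat.gcd y t) = e := Nat.div_eq_of_eq_mul_left hg24 hte
    have hfa' : x' / (Nat.gcd x' s' * Nat.gcd x' t') = a' := Nat.div_eq_of_eq_mul_left hg12' hxa'
    have hfb' : y' / (Nat.gcd y' s' * Nat.gcd y' t') = b' := Nat.div_eq_of_eq_mul_left hg34' hyb'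
    have hfc' : s' / (Nat.gcd x' s' * Nat.gcd y' s') = c' := Nat.div_eq_of_eq_mul_left hg13' hsc'
    have hfe' : t' / (Nat.gcd x' t' * Nat.gcd y' t') = e' := Nat.div_eq_of_eq_mul_left hg24' hte'
    rw [hfdef] at hfeq
    simp only [hfa, hfb, hfc, hfe, hfa', hfb', hfc', hfe', Prod.mk.injEq] at hfeq
    obtain ⟨hea, heb, hec, hee, hed, heu, hew, hej⟩ := hfeq
    have hed' : d = d' := by omega
    have heu' : u = u' := by omega
    have hew' : w = w' := by omega
    -- now compare g1, g1'
    rcases Nat.lt_trichotomy (Nat.gcd x s) (Nat.gcd x' s') with hlt | heq | hgt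
    · exfalso
      have hg := gap E Q hE1 hQ0 a c b e w (Nat.gcd x s) (Nat.gcd y t)
        (Nat.gcd x' s') (Nat.gcd y' t') hb0 he0 hPN
        (by rw [hea, heb, hec, hee, hew']; exact hPN') hlt hw1 hwE hQL hQL' hQU hQU' h14
      exact absurd hej (Nat.ne_of_lt (floorlt E Q hE0 hQ0 _ _ hg))
    · -- g1 = g1' : reconstruct equality
      simp only [← hea, ← heb, ← hec, ← hee, ← hew', ← hed', ← heu', ← heq]
        at hPN' hw2N' hw3N'
      have hg4 : Nat.gcd y t = Nat.gcd y' t' := by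
        have h5 : b * e * Nat.gcd y t ^ 2 = b * e * Nat.gcd y' t' ^ 2 := by
          rw [hPN, hPN']
        have h6 : Nat.gcd y t ^ 2 = Nat.gcd y' t' ^ 2 :=
          Nat.eq_of_mul_eq_mul_left (Nat.mul_pos hb0 he0) h5
        exact Nat.pow_left_injective (by norm_num) h6
      rw [← hg4] at hw2N' hw3N'
      have hg2 : Nat.gcd x t = Nat.gcd x' t' := by
        have h5 : w * Nat.gcd x t = w * Nat.gcd x' t' := by rw [hw2N, hw2N']
        exact Nat.eq_of_mul_eq_mul_left (by omega) h5
      have hg3 : Nat.gcd y s = Nat.gcd y' s' := by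
        have h5 : w * Nat.gcd y s = w * Nat.gcd y' s' := by rw [hw3N, hw3N']
        exact Nat.eq_of_mul_eq_mul_left (by omega) h5
      have hxx : x = x' := by rw [hxa, hxa', hea, heq, hg2]
      have hyy : y = y' := by rw [hyb, hyb', heb, hg3, hg4]
      have hss : s = s' := by rw [hsc, hsc', hec, heq, hg3]
      have htt : t = t' := by rw [hte, hte', hee, hg2, hg4]
      rw [hxx, hyy, hss, htt]
    · exfalso
      have hg := gap E Q hE1 hQ0 a c b e w (Nat.gcd x' s') (Nat.gcd y' t')
        (Nat.gcd x s) (Nat.gcd y t) hb0 he0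
        (by rw [hea, heb, hec, hee, hew']; exact hPN') hPN hgt hw1 hwE hQL' hQL hQU' hQU
        h14'
      exact absurd hej.symm (Nat.ne_of_lt (floorlt E Q hE0 hQ0 _ _ hg))
end

section
/- Fix ε > 0. Then there is a constant C such that for all B ≥ ε + 2: |#{(u,v) : u, v positive integers, gcd(u,v) = 1, v ≤ B, B·u ≤ ε·v} − B·Σ_{u=1}^{⌊ε⌋} (∏_{p prime, p ∣ u} (1 − 1/p))·(1 − u/ε)| ≤ C. (Critical zoom at the rational point [0:1] of ℙ¹: the limit measure has density Σ_{n ≤ |x|} φ(n) divided by x² against Lebesgue measure, φ being Euler's totient.) -/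
open Finset

/-- Counting coprime residues over `q` full periods. -/
lemma cnt_period (u m q : ℕ) :
    ((Finset.Ico m (m + u * q)).filter u.Coprime).card = q * u.totient := by
  induction q with
  | zero => simp
  | succ q ih =>
    have hsplit : Finset.Ico m (m + u * (q + 1)) =
        Finset.Ico m (m + u * q) ∪ Finset.Ico (m + u * q) (m + u * q + u) := by
      rw [Finset.Ico_union_Ico_eq_Ico (by omega) (by omega)]
      ring_nf
    rw [hsplit, Finset.filter_union, Finset.card_union_of_disjoint]
    · rw [ih, Nat.filter_coprime_Ico_eq_totient]
      ring
    · exact Finset.disjoint_filter_filter (Finset.Ico_disjoint_Ico_consecutive _ _ _)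

/-- Per-modulus count with error at most `u`. -/
lemma cnt_bound (u : ℕ) (hu : 0 < u) (m M : ℕ) (h : m ≤ M) :
    |(((Finset.Ico m M).filter u.Coprime).card : ℝ)
      - (u.totient : ℝ) / u * ((M : ℝ) - m)| ≤ u := by
  obtain ⟨q, r, hr, hM⟩ : ∃ q r, r < u ∧ M = m + u * q + r :=
    ⟨(M - m) / u, (M - m) % u, Nat.mod_lt _ hu, by
      have := Nat.div_add_mod (M - m) u; omega⟩
  subst hM
  have hsplit : Finset.Ico m (m + u * q + r) =
      Finset.Ico m (m + u * q) ∪ Finset.Ico (m + u * q) (m + u * q + r) := by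
    rw [Finset.Ico_union_Ico_eq_Ico (by omega) (by omega)]
  rw [hsplit, Finset.filter_union, Finset.card_union_of_disjoint
    (Finset.disjoint_filter_filter (Finset.Ico_disjoint_Ico_consecutive _ _ _)),
    cnt_period]
  have he : (((Finset.Ico (m + u * q) (m + u * q + r)).filter u.Coprime).card : ℝ) ≤ r := by
    have h1 := Finset.card_filter_le (Finset.Ico (m + u * q) (m + u * q + r)) u.Coprime
    have h2 : (Finset.Ico (m + u * q) (m + u * q + r)).card = r := by
      rw [Nat.card_Ico]; omega
    exact_mod_cast h1.trans_eq h2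
  have he0 : (0 : ℝ) ≤ (((Finset.Ico (m + u * q) (m + u * q + r)).filter u.Coprime).card : ℝ) :=
    Nat.cast_nonneg _
  have hphi : (u.totient : ℝ) ≤ u := Nat.cast_le.mpr (Nat.totient_le u)
  have hu' : (0 : ℝ) < u := Nat.cast_pos.mpr hu
  have hrat : (0 : ℝ) ≤ (u.totient : ℝ) / u := by positivity
  have hrat1 : (u.totient : ℝ) / u ≤ 1 := by
    rw [div_le_one hu']; exact hphi
  have hmain : (u.totient : ℝ) / u * (((m + u * q + r : ℕ) : ℝ) - (m : ℕ)) =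
      q * u.totient + (u.totient : ℝ) / u * r := by
    push_cast
    field_simp
    ring
  rw [hmain]
  push_cast
  have h3 : (0:ℝ) ≤ (u.totient : ℝ) / u * r := by positivity
  have h4 : (u.totient : ℝ) / u * r ≤ r := by
    nlinarith [Nat.cast_nonneg (α := ℝ) r]
  rw [abs_le]
  constructor <;> nlinarith [Nat.cast_lt (α := ℝ).mpr hr]

/-- Critical zoom (`r = 1`) at the rational point `Q = [0:1]` of `ℙ¹`:
`#{(u,v) coprime positive, v ≤ B, B·u ≤ ε·v}
  = B·Σ_{u=1}^{⌊ε⌋} (∏_{p ∣ u}(1 − 1/p))·(1 − u/ε) + O(1)`. -/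
theorem stmt_19 (ε : ℝ) (hε : 0 < ε) :
    ∃ C : ℝ, ∀ B : ℝ, B ≥ ε + 2 →
      |(Set.ncard {p : ℕ × ℕ | 0 < p.1 ∧ 0 < p.2 ∧ Nat.Coprime p.1 p.2 ∧
            (p.2 : ℝ) ≤ B ∧ B * (p.1 : ℝ) ≤ ε * (p.2 : ℝ)} : ℝ) -
          B * ∑ u ∈ Finset.Icc 1 ⌊ε⌋₊,
            (∏ p ∈ u.primeFactors, (1 - 1 / (p : ℝ))) * (1 - (u : ℝ) / ε)| ≤ C := by
  refine ⟨∑ u ∈ Finset.Icc 1 ⌊ε⌋₊, ((u : ℝ) + 2), fun B hB => ?_⟩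
  have hB0 : (0 : ℝ) < B := by linarith
  set M : ℕ := ⌊B⌋₊ + 1 with hM
  set m : ℕ → ℕ := fun u => ⌈B * u / ε⌉₊ with hm
  set F : Finset (ℕ × ℕ) := (Finset.Icc 1 ⌊ε⌋₊).biUnion
    (fun u => ((Finset.Ico (m u) M).filter u.Coprime).image (fun v => (u, v))) with hF
  -- the set equals the coercion of F
  have hset : {p : ℕ × ℕ | 0 < p.1 ∧ 0 < p.2 ∧ Nat.Coprime p.1 p.2 ∧
      (p.2 : ℝ) ≤ B ∧ B * (p.1 : ℝ) ≤ ε * (p.2 : ℝ)} = ↑F := by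
    ext ⟨u, v⟩
    simp only [Set.mem_setOf_eq, hF, Finset.coe_biUnion, Set.mem_iUnion, Finset.mem_coe,
      Finset.mem_image, Finset.mem_filter, Finset.mem_Ico, Finset.mem_Icc, Prod.mk.injEq]
    constructor
    · rintro ⟨hu, hv, hcop, hvB, huv⟩
      refine ⟨u, ⟨hu, ?_⟩, v, ⟨⟨?_, ?_⟩, hcop⟩, rfl, rfl⟩
      · apply Nat.le_floor
        have : (u : ℝ) * B ≤ ε * B := by
          calc (u : ℝ) * B = B * u := mul_comm _ _
          _ ≤ ε * v := huv
          _ ≤ ε * B := by nlinarith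
        nlinarith
      · rw [hm]
        apply Nat.ceil_le.2
        rw [div_le_iff₀ hε]
        nlinarith
      · rw [hM]
        have := Nat.le_floor hvB
        omega
    · rintro ⟨u', ⟨hu1, hu2⟩, v', ⟨⟨hv1, hv2⟩, hcop⟩, rfl, rfl⟩
      have hx : B * u' / ε ≤ v' := (Nat.ceil_le.1 hv1)
      have hx0 : (0 : ℝ) < B * u' / ε := by
        have : (1 : ℝ) ≤ u' := by exact_mod_cast hu1
        positivity
      refine ⟨hu1, ?_, hcop, ?_, ?_⟩
      · have : (0 : ℝ) < v' := lt_of_lt_of_le hx0 hx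
        exact_mod_cast this
      · have hvf : v' ≤ ⌊B⌋₊ := by omega
        calc (v' : ℝ) ≤ ⌊B⌋₊ := by exact_mod_cast hvf
        _ ≤ B := Nat.floor_le hB0.le
      · rw [div_le_iff₀ hε] at hx
        nlinarith
  rw [hset, Set.ncard_coe_finset]
  -- card of F as a sum
  have hcard : F.card = ∑ u ∈ Finset.Icc 1 ⌊ε⌋₊,
      ((Finset.Ico (m u) M).filter u.Coprime).card := by
    rw [hF, Finset.card_biUnion]
    · refine Finset.sum_congr rfl fun u _ => ?_
      exact Finset.card_image_of_injective _ (fun a b h => by simpa using h)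
    · intro a _ b _ hab
      simp only [Finset.disjoint_left, Finset.mem_image]
      rintro ⟨x, y⟩ ⟨v, _, hv⟩ ⟨w, _, hw⟩
      exact hab (congrArg Prod.fst (hv.trans hw.symm))
  rw [hcard]
  push_cast
  rw [Finset.mul_sum, ← Finset.sum_sub_distrib]
  refine (Finset.abs_sum_le_sum_abs _ _).trans (Finset.sum_le_sum fun u hu => ?_)
  -- per-u estimate
  obtain ⟨hu1, hu2⟩ := Finset.mem_Icc.1 hu
  have hupos : 0 < u := hu1
  have hu' : (0 : ℝ) < u := Nat.cast_pos.mpr hupos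
  have huε : (u : ℝ) ≤ ε := le_trans (Nat.cast_le.mpr hu2) (Nat.floor_le hε.le)
  -- the product equals totient/u
  have hprod : ∏ p ∈ u.primeFactors, (1 - 1 / (p : ℝ)) = (u.totient : ℝ) / u := by
    have hq := Nat.totient_eq_mul_prod_factors u
    have hq' : ((u.totient : ℚ) : ℝ) = ((u * ∏ p ∈ u.primeFactors, (1 - (p : ℚ)⁻¹) : ℚ) : ℝ) := by
      rw [hq]
    push_cast at hq'
    simp only [one_div]
    rw [hq', mul_div_cancel_left₀ _ hu'.ne']
  rw [hprod]
  -- m u ≤ M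
  have hmM : m u ≤ M := by
    have h1 : B * u / ε ≤ B := by
      rw [div_le_iff₀ hε]
      nlinarith
    have h2 : m u ≤ ⌈B⌉₊ := Nat.ceil_le_ceil h1
    have h3 : ⌈B⌉₊ ≤ ⌊B⌋₊ + 1 := Nat.ceil_le_floor_add_one B
    omega
  have hkey := cnt_bound u hupos (m u) M hmM
  -- compare (M - m u) with (B - B*u/ε)
  have hx : B * u / ε ≤ (m u : ℝ) := Nat.le_ceil _
  have hx' : (m u : ℝ) < B * u / ε + 1 := by
    apply Nat.ceil_lt_add_one
    positivity
  have hM1 : B < (M : ℝ) := by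
    rw [hM]; push_cast
    have := Nat.lt_floor_add_one B
    linarith
  have hM2 : (M : ℝ) ≤ B + 1 := by
    rw [hM]; push_cast
    have := Nat.floor_le hB0.le
    linarith
  have hrat : (0 : ℝ) ≤ (u.totient : ℝ) / u := by positivity
  have hrat1 : (u.totient : ℝ) / u ≤ 1 := by
    rw [div_le_one hu']
    exact_mod_cast Nat.totient_le u
  have hterm : B * ((u.totient : ℝ) / u * (1 - u / ε)) =
      (u.totient : ℝ) / u * (B - B * u / ε) := by
    field_simp
  have hdiff : |(u.totient : ℝ) / u * ((M : ℝ) - m u) -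
      (u.totient : ℝ) / u * (B - B * u / ε)| ≤ 2 := by
    rw [← mul_sub, abs_mul, abs_of_nonneg hrat]
    have h5 : |((M : ℝ) - m u) - (B - B * u / ε)| ≤ 2 := by
      rw [abs_le]; constructor <;> linarith
    calc (u.totient : ℝ) / u * |((M : ℝ) - m u) - (B - B * u / ε)|
        ≤ 1 * |((M : ℝ) - m u) - (B - B * u / ε)| := by
          apply mul_le_mul_of_nonneg_right hrat1 (abs_nonneg _)
      _ ≤ 2 := by rw [one_mul]; exact h5
  calc |(((Finset.Ico (m u) M).filter u.Coprime).card : ℝ) -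
        B * ((u.totient : ℝ) / u * (1 - u / ε))|
      = |((((Finset.Ico (m u) M).filter u.Coprime).card : ℝ) -
          (u.totient : ℝ) / u * ((M : ℝ) - m u)) +
          ((u.totient : ℝ) / u * ((M : ℝ) - m u) -
          (u.totient : ℝ) / u * (B - B * u / ε))| := by rw [hterm]; ring_nf
    _ ≤ |(((Finset.Ico (m u) M).filter u.Coprime).card : ℝ) -
          (u.totient : ℝ) / u * ((M : ℝ) - m u)| +
        |(u.totient : ℝ) / u * ((M : ℝ) - m u) -
          (u.totient : ℝ) / u * (B - B * u / ε)| := abs_add_le _ _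
    _ ≤ (u : ℝ) + 2 := add_le_add hkey hdiff
end
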